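/- arXiv:1003.3440 — 8 statements merged into one kernel-verified Lean document; each statement's English description precedes it below -/
import Mathlib

section
/- Let λ be a solution of the generalized characteristic equation such that limsup_{t→∞} ∫_0^r θ·|exp(−∫_{t−θ}^t λ(s) ds)| d‖η(t)‖(θ) < 1. Then for every solution x of the RFDE x'(t) = ∫_0^r x(t−θ) dη(t)(θ), the limit lim_{t→∞} x(t)·exp(−∫_{t₀}^t λ(s) ds) exists (as a finite complex number). -/
open MeasureTheory Filter Topology

open Set

/-!
With `y(t) = x(t) exp(-∫_{t₀}^t λ)`, the characteristic equation turns the RFDE into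
`y'(t) = ∫_0^r exp(-∫_{t-θ}^t λ) (y(t-θ) - y(t)) dη(t)(θ)`, so by the limsup condition there are
`c < 1` and `T` with `|y'(t)| ≤ c S` whenever `t ≥ T` and `|y(t) - y(t-θ)| ≤ S θ` on `[0, r]`.
By the mean value theorem, the supremum of `|y'|` over consecutive windows of length `r` then
decreases geometrically, hence `y` is Cauchy at infinity.

That supremum is finite, although `y'` is not a priori locally bounded. Fix `1 < κ < 1/c`.
If `|y'(t₁)|` is large, the estimate with `S = κ |y'(t₁)|` yields a short backward chord from
`t₁` of slope above `κ |y'(t₁)|`, and on it a point `q` with `|y'(q)| > κ |y'(t₁)|`. Iterating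
gives points decreasing to some `ξ` along chords of geometrically growing slope;
differentiability of `y` at `ξ` makes these chords too short for the points to reach `ξ`.
-/

lemma exists_le_of_tendsto_of_sub_succ_le {p ε : ℕ → ℝ} {ξ : ℝ} (hp : Antitone p)
    (hlim : Tendsto p atTop (𝓝 ξ)) (hε0 : ∀ k, 0 ≤ ε k) (hε : Summable ε)
    (hstep : ∀ᶠ k in atTop, p k - p (k + 1) ≤ ε k * (p k - ξ)) : ∃ k, p k ≤ ξ := by
  by_contra! hξ
  obtain ⟨k₁, hstep', htail⟩ := (eventually_forall_ge_atTop.2 hstep).and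
    ((tendsto_sum_nat_add ε).eventually (gt_mem_nhds one_pos)) |>.exists
  set s := ∑' i, ε (i + k₁)
  have hpartial : ∀ n ≥ k₁, p k₁ - p n ≤ (∑ i ∈ Finset.Ico k₁ n, ε i) * (p k₁ - ξ) := by
    intro n hn
    induction n, hn using Nat.le_induction with
    | base => simp
    | succ n hn ih =>
      rw [Finset.sum_Ico_succ_top hn]
      have := mul_le_mul_of_nonneg_left (sub_le_sub_right (hp hn) ξ) (hε0 n)
      linarith [hstep' n hn]
  have hsum_le : ∀ n, ∑ i ∈ Finset.Ico k₁ n, ε i ≤ s := by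
    intro n
    rw [Finset.sum_Ico_eq_sum_range]
    simp_rw [add_comm k₁]
    exact ((summable_nat_add_iff k₁).2 hε).sum_le_tsum _ fun i _ => hε0 (i + k₁)
  have hlim_le : p k₁ - ξ ≤ s * (p k₁ - ξ) :=
    le_of_tendsto (hlim.const_sub (p k₁)) <| eventually_atTop.2 ⟨k₁, fun n hn =>
      (hpartial n hn).trans (mul_le_mul_of_nonneg_right (hsum_le n) (sub_nonneg.2 (hξ k₁).le))⟩
  nlinarith [hξ k₁]

lemma exists_one_lt_mul_lt_one {c : ℝ} (hc0 : 0 ≤ c) (hc1 : c < 1) : ∃ κ, 1 < κ ∧ c * κ < 1 :=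
  ⟨2 / (1 + c), by rw [lt_div_iff₀ (by linarith)]; linarith,
    by rw [mul_div_assoc', div_lt_one (by linarith)]; linarith⟩

section DelayedSlope

variable {E : Type*} [NormedAddCommGroup E] [NormedSpace ℝ E]

lemma norm_sub_le_of_hasDerivWithinAt_Ici {y d : ℝ → E} {a s t C : ℝ}
    (hd : ∀ u, a ≤ u → HasDerivWithinAt y (d u) (Ici a) u) (has : a ≤ s) (hst : s ≤ t)
    (hC : ∀ u ∈ Icc s t, ‖d u‖ ≤ C) : ‖y t - y s‖ ≤ C * (t - s) := by
  have := (convex_Icc s t).norm_image_sub_le_of_norm_hasDerivWithin_le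
    (fun u hu => (hd u (has.trans hu.1)).mono fun v hv => has.trans hv.1) hC
    (left_mem_Icc.2 hst) (right_mem_Icc.2 hst)
  rwa [Real.norm_of_nonneg (sub_nonneg.2 hst)] at this

lemma HasDerivAt.isBigO_mul_of_lt_norm_sub {ι : Type*} {l : Filter ι} {y : ℝ → E} {y' : E}
    {ξ : ℝ} (hy : HasDerivAt y y' ξ) {p θ X : ι → ℝ} (hp : Tendsto p l (𝓝 ξ))
    (hθ : Tendsto θ l (𝓝 0)) (hX : Tendsto X l atTop)
    (hslope : ∀ᶠ i in l, 0 ≤ θ i ∧ X i * θ i < ‖y (p i) - y (p i - θ i)‖) :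
    (fun i => X i * θ i) =O[l] fun i => p i - ξ := by
  obtain ⟨K, hK0, hK⟩ := hy.isBigO_sub.exists_nonneg
  have hpθ : Tendsto (fun i => p i - θ i) l (𝓝 ξ) := by simpa using hp.sub hθ
  refine Asymptotics.IsBigO.of_bound (4 * K) ?_
  filter_upwards [hp.eventually hK.bound, hpθ.eventually hK.bound, hX.eventually_ge_atTop (2 * K),
    hslope] with i h₁ h₂ hXi ⟨hθi, hsl⟩
  simp only [Real.norm_eq_abs] at h₁ h₂ ⊢
  have hchord : ‖y (p i) - y (p i - θ i)‖ ≤ K * (2 * |p i - ξ| + θ i) := by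
    have := norm_sub_le (y (p i) - y ξ) (y (p i - θ i) - y ξ)
    have : |p i - θ i - ξ| ≤ |p i - ξ| + θ i := by
      simpa [abs_of_nonneg hθi, sub_right_comm] using abs_sub (p i - ξ) (θ i)
    simp only [sub_sub_sub_cancel_right] at *
    nlinarith
  rw [abs_of_nonneg (mul_nonneg (by linarith) hθi)]
  nlinarith [mul_nonneg (sub_nonneg.2 hXi) hθi]

/-- The estimate that the characteristic equation yields for the derivative `d` of the rescaled
solution `y`. -/
def DelayedSlopeContraction (y d : ℝ → E) (r c T : ℝ) : Prop :=
  ∀ t, T ≤ t → ∀ S, 0 ≤ S → (∀ θ ∈ Icc 0 r, ‖y t - y (t - θ)‖ ≤ S * θ) → ‖d t‖ ≤ c * S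

namespace DelayedSlopeContraction

variable {y d : ℝ → E} {a r c T : ℝ}

lemma norm_le_mul_of_forall_norm_le (hcon : DelayedSlopeContraction y d r c T)
    (hd : ∀ u, a ≤ u → HasDerivWithinAt y (d u) (Ici a) u) (hr : 0 ≤ r) (hT : a + r ≤ T)
    {t W : ℝ} (ht : T ≤ t) (hW : ∀ s ∈ Icc (t - r) t, ‖d s‖ ≤ W) : ‖d t‖ ≤ c * W := by
  refine hcon t ht W ((norm_nonneg _).trans (hW t ⟨by linarith, le_rfl⟩)) fun θ hθ => ?_
  have := norm_sub_le_of_hasDerivWithinAt_Ici (s := t - θ) hd (by linarith [hθ.2])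
    (by linarith [hθ.1]) fun s hs => hW s ⟨by linarith [hθ.2, hs.1], hs.2⟩
  rwa [sub_sub_cancel] at this

lemma exists_lt_norm_deriv (hcon : DelayedSlopeContraction y d r c T)
    (hd : ∀ u, a ≤ u → HasDerivWithinAt y (d u) (Ici a) u) (hT : a + r ≤ T) {κ t : ℝ}
    (hκ : 1 ≤ κ) (hcκ : c * κ < 1) (ht : T ≤ t) (hdt : 0 < ‖d t‖) :
    ∃ θ ∈ Ioc 0 r, ∃ q ∈ Ico (t - θ) t,
      κ * ‖d t‖ < ‖d q‖ ∧ κ * ‖d t‖ * θ < ‖y t - y (t - θ)‖ := by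
  obtain ⟨θ, hθ, hchord⟩ : ∃ θ ∈ Icc 0 r, κ * ‖d t‖ * θ < ‖y t - y (t - θ)‖ := by
    by_contra! hall
    have := hcon t ht _ (mul_nonneg (by linarith) (norm_nonneg _)) hall
    nlinarith
  have hθ0 : 0 < θ := hθ.1.lt_of_ne (by rintro rfl; simp at hchord)
  obtain ⟨q, hq, hdq⟩ : ∃ q ∈ Icc (t - θ) t, κ * ‖d t‖ < ‖d q‖ := by
    by_contra! hall
    have := norm_sub_le_of_hasDerivWithinAt_Ici (s := t - θ) hd (by linarith [hθ.2])
      (by linarith) hall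
    rw [sub_sub_cancel] at this
    linarith
  have hqt : q < t := hq.2.lt_of_ne (by rintro rfl; nlinarith)
  exact ⟨θ, ⟨hθ0, hθ.2⟩, q, ⟨hq.1, hqt⟩, hdq, hchord⟩

lemma exists_chain_step (hcon : DelayedSlopeContraction y d r c T)
    (hd : ∀ u, a ≤ u → HasDerivWithinAt y (d u) (Ici a) u) (hr : 0 ≤ r) (hT : a + r ≤ T)
    {κ t₁ B p : ℝ} (hκ : 1 < κ) (hcκ : c * κ < 1) (ht₁ : T + r ≤ t₁)
    (hB : ∀ s ∈ Icc (t₁ - 2 * r) t₁, ‖y s‖ ≤ B)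
    (hp : p ≤ t₁ ∧ 0 < ‖d p‖ ∧ t₁ - r < p - 2 * B / ((κ - 1) * ‖d p‖)) :
    ∃ θ q, (q ≤ t₁ ∧ 0 < ‖d q‖ ∧ t₁ - r < q - 2 * B / ((κ - 1) * ‖d q‖)) ∧
      0 < θ ∧ p - θ ≤ q ∧ q < p ∧ κ * ‖d p‖ < ‖d q‖ ∧
      κ * ‖d p‖ * θ < ‖y p - y (p - θ)‖ ∧ κ * ‖d p‖ * θ < 2 * B := by
  obtain ⟨hpt₁, hdp, hp_reserve⟩ := hp
  have hB0 : 0 ≤ B := (norm_nonneg _).trans (hB t₁ ⟨by linarith, le_rfl⟩)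
  have hκ1 : 0 < κ - 1 := by linarith
  have hreserve : 0 ≤ 2 * B / ((κ - 1) * ‖d p‖) := by positivity
  obtain ⟨θ, ⟨hθ0, hθr⟩, q, ⟨hqθ, hqp⟩, hdq, hslope⟩ :=
    hcon.exists_lt_norm_deriv hd hT hκ.le hcκ (by linarith) hdp
  have hchord : ‖y p - y (p - θ)‖ ≤ 2 * B := by
    linarith [norm_sub_le (y p) (y (p - θ)), hB p ⟨by linarith, hpt₁⟩,
      hB (p - θ) ⟨by linarith, by linarith⟩]
  have hθB : θ < 2 * B / (κ * ‖d p‖) := by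
    rw [lt_div_iff₀ (by positivity)]; linarith
  have hreserve_q : 2 * B / ((κ - 1) * ‖d q‖) ≤ 2 * B / ((κ - 1) * (κ * ‖d p‖)) :=
    div_le_div_of_nonneg_left (by linarith) (by positivity) (by gcongr)
  -- the reserve `2B / ((κ - 1)‖d p‖)` pays for the step `θ` and for the reserve at `q`
  have hsplit : 2 * B / (κ * ‖d p‖) + 2 * B / ((κ - 1) * (κ * ‖d p‖)) =
      2 * B / ((κ - 1) * ‖d p‖) := by
    field_simp; ring
  exact ⟨θ, q, ⟨by linarith, by nlinarith, by linarith⟩, hθ0, hqθ, hqp, hdq, hslope,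
    by linarith⟩

lemma exists_chain (hcon : DelayedSlopeContraction y d r c T)
    (hd : ∀ u, a ≤ u → HasDerivWithinAt y (d u) (Ici a) u) (hr : 0 < r) (hT : a + r ≤ T)
    {κ t₁ B : ℝ} (hκ : 1 < κ) (hcκ : c * κ < 1) (ht₁ : T + r ≤ t₁)
    (hB : ∀ s ∈ Icc (t₁ - 2 * r) t₁, ‖y s‖ ≤ B) (hlarge : 2 * B / (r * (κ - 1)) < ‖d t₁‖) :
    ∃ p θ : ℕ → ℝ, p 0 = t₁ ∧ ∀ k, t₁ - r < p k ∧ 0 < θ k ∧ p k - θ k ≤ p (k + 1) ∧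
      p (k + 1) < p k ∧ κ * ‖d (p k)‖ < ‖d (p (k + 1))‖ ∧
      κ * ‖d (p k)‖ * θ k < ‖y (p k) - y (p k - θ k)‖ ∧ κ * ‖d (p k)‖ * θ k < 2 * B := by
  set G := {p | p ≤ t₁ ∧ 0 < ‖d p‖ ∧ t₁ - r < p - 2 * B / ((κ - 1) * ‖d p‖)}
  choose! θ q hq using fun p (hp : p ∈ G) => hcon.exists_chain_step hd hr.le hT hκ hcκ ht₁ hB hp
  have hB0 : 0 ≤ B := (norm_nonneg _).trans (hB t₁ ⟨by linarith, le_rfl⟩)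
  have hκ1 : 0 < κ - 1 := by linarith
  have hG : ∀ k, q^[k] t₁ ∈ G := by
    intro k
    induction k with
    | zero =>
      have hdt₁ : 0 < ‖d t₁‖ := lt_of_le_of_lt (by positivity) hlarge
      rw [div_lt_iff₀ (by positivity)] at hlarge
      refine ⟨le_rfl, hdt₁, ?_⟩
      rw [Function.iterate_zero_apply, sub_lt_sub_iff_left, div_lt_iff₀ (by positivity)]
      linarith
    | succ k ih => rw [Function.iterate_succ_apply']; exact (hq _ ih).1
  refine ⟨fun k => q^[k] t₁, fun k => θ (q^[k] t₁), rfl, fun k => ?_⟩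
  obtain ⟨-, -, hreserve⟩ := hG k
  obtain ⟨-, hstep⟩ := hq _ (hG k)
  have : 0 ≤ 2 * B / ((κ - 1) * ‖d (q^[k] t₁)‖) := by positivity
  simp only [Function.iterate_succ_apply']
  exact ⟨by linarith, hstep⟩

theorem norm_le_div_of_forall_norm_le (hcon : DelayedSlopeContraction y d r c T)
    (hd : ∀ u, a ≤ u → HasDerivWithinAt y (d u) (Ici a) u) (hr : 0 < r) (hT : a + r ≤ T)
    {κ t₁ B : ℝ} (hκ : 1 < κ) (hcκ : c * κ < 1) (ht₁ : T + r ≤ t₁)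
    (hB : ∀ s ∈ Icc (t₁ - 2 * r) t₁, ‖y s‖ ≤ B) : ‖d t₁‖ ≤ 2 * B / (r * (κ - 1)) := by
  by_contra! hlarge
  have hB0 : 0 ≤ B := (norm_nonneg _).trans (hB t₁ ⟨by linarith, le_rfl⟩)
  have hκ1 : 0 < κ - 1 := by linarith
  have hdt₁ : 0 < ‖d t₁‖ := lt_of_le_of_lt (by positivity) hlarge
  obtain ⟨p, θ, hp0, hp⟩ := hcon.exists_chain hd hr hT hκ hcκ ht₁ hB hlarge
  have hanti : StrictAnti p := strictAnti_nat_of_succ_lt fun k => (hp k).2.2.2.1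
  have hbdd : BddBelow (range p) := ⟨t₁ - r, by rintro _ ⟨k, rfl⟩; exact (hp k).1.le⟩
  set ξ := ⨅ k, p k
  have hlim : Tendsto p atTop (𝓝 ξ) := tendsto_atTop_ciInf hanti.antitone hbdd
  have hξp : ∀ k, ξ < p k := fun k => (ciInf_le hbdd (k + 1)).trans_lt (hanti k.lt_succ_self)
  have hξ : t₁ - r ≤ ξ := le_ciInf fun k => (hp k).1.le
  have hgrow : ∀ k, κ * (‖d t₁‖ * κ ^ k) ≤ κ * ‖d (p k)‖ := by
    intro k
    refine mul_le_mul_of_nonneg_left ?_ (by linarith)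
    induction k with
    | zero => simp [hp0]
    | succ k ih => rw [pow_succ]; nlinarith [(hp k).2.2.2.2.1]
  have hXpos : ∀ k, 0 < κ * ‖d (p k)‖ := fun k =>
    lt_of_lt_of_le (by positivity) (hgrow k)
  have hX : Tendsto (fun k => κ * ‖d (p k)‖) atTop atTop :=
    tendsto_atTop_mono hgrow <| ((tendsto_pow_atTop_atTop_of_one_lt hκ).const_mul_atTop
      hdt₁).const_mul_atTop (by linarith)
  have hθ : Tendsto θ atTop (𝓝 0) := by
    refine squeeze_zero (g := fun k => 2 * B * (κ * ‖d (p k)‖)⁻¹) (fun k => (hp k).2.1.le)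
      (fun k => ?_)
      (by simpa only [mul_zero, Pi.inv_apply] using hX.inv_tendsto_atTop.const_mul (2 * B))
    rw [← div_eq_mul_inv, le_div_iff₀ (hXpos k), mul_comm]
    exact (hp k).2.2.2.2.2.2.le
  obtain ⟨K, hK0, hK⟩ := ((hd ξ (by linarith)).hasDerivAt (Ici_mem_nhds (by linarith))
    |>.isBigO_mul_of_lt_norm_sub hlim hθ hX
      (Eventually.of_forall fun k => ⟨(hp k).2.1.le, (hp k).2.2.2.2.2.1⟩)).exists_nonneg
  have hsummable : Summable fun k => K / (κ * ‖d (p k)‖) := by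
    refine .of_nonneg_of_le (fun k => div_nonneg hK0 (hXpos k).le) (fun k => ?_)
      ((summable_geometric_of_lt_one (by positivity) (inv_lt_one_of_one_lt₀ hκ)).mul_left
        (K / (κ * ‖d t₁‖)))
    calc K / (κ * ‖d (p k)‖) ≤ K / (κ * (‖d t₁‖ * κ ^ k)) :=
          div_le_div_of_nonneg_left hK0 (by positivity) (hgrow k)
      _ = K / (κ * ‖d t₁‖) * κ⁻¹ ^ k := by rw [inv_pow]; field_simp
  -- steps of length `O((p k - ξ) / ‖d (p k)‖)` are summably short relative to `p k - ξ`
  obtain ⟨k, hk⟩ := exists_le_of_tendsto_of_sub_succ_le hanti.antitone hlim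
    (fun k => div_nonneg hK0 (hXpos k).le) hsummable <| by
      filter_upwards [hK.bound] with k hk
      rw [Real.norm_of_nonneg (mul_nonneg (hXpos k).le (hp k).2.1.le),
        Real.norm_of_nonneg (sub_nonneg.2 (hξp k).le), mul_comm, ← le_div_iff₀ (hXpos k)] at hk
      rw [div_mul_eq_mul_div]
      linarith [(hp k).2.2.1]
  exact (hξp k).not_ge hk

lemma bddAbove_norm_image_Icc (hcon : DelayedSlopeContraction y d r c T)
    (hd : ∀ u, a ≤ u → HasDerivWithinAt y (d u) (Ici a) u) (hr : 0 < r) (hT : a + r ≤ T)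
    (hc0 : 0 ≤ c) (hc1 : c < 1) {v w : ℝ} (hv : T + r ≤ v) :
    BddAbove ((‖d ·‖) '' Icc v w) := by
  obtain ⟨κ, hκ, hcκ⟩ := exists_one_lt_mul_lt_one hc0 hc1
  have hcont : ContinuousOn y (Icc (v - 2 * r) w) := fun s hs =>
    ((hd s (by linarith [hs.1])).continuousWithinAt).mono fun u hu => show a ≤ u by linarith [hu.1]
  obtain ⟨B, hB⟩ := isCompact_Icc.exists_bound_of_continuousOn hcont
  refine ⟨2 * B / (r * (κ - 1)), ?_⟩
  rintro _ ⟨t, ht, rfl⟩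
  exact hcon.norm_le_div_of_forall_norm_le hd hr hT hκ hcκ (hv.trans ht.1)
    fun s hs => hB s ⟨by linarith [hs.1, ht.1], hs.2.trans ht.2⟩

lemma forall_Icc_norm_le_mul (hcon : DelayedSlopeContraction y d r c T)
    (hd : ∀ u, a ≤ u → HasDerivWithinAt y (d u) (Ici a) u) (hr : 0 ≤ r) (hT : a + r ≤ T)
    (hc0 : 0 ≤ c) (hc1 : c < 1) {v A : ℝ} (hv : T ≤ v)
    (hbdd : BddAbove ((‖d ·‖) '' Icc v (v + r))) (hA : ∀ s ∈ Icc (v - r) v, ‖d s‖ ≤ A) :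
    ∀ t ∈ Icc v (v + r), ‖d t‖ ≤ c * A := by
  set W := sSup ((‖d ·‖) '' Icc v (v + r))
  have hle : ∀ t ∈ Icc v (v + r), ‖d t‖ ≤ W := fun t ht => le_csSup hbdd (mem_image_of_mem _ ht)
  have hA0 : 0 ≤ A := (norm_nonneg _).trans (hA v ⟨by linarith, le_rfl⟩)
  have hW : W ≤ c * max A W := by
    refine csSup_le ((nonempty_Icc.2 (by linarith)).image _) ?_
    rintro _ ⟨t, ht, rfl⟩
    refine hcon.norm_le_mul_of_forall_norm_le hd hr hT (hv.trans ht.1) fun s hs => ?_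
    rcases le_total s v with hsv | hvs
    · exact (hA s ⟨by linarith [hs.1, ht.1], hsv⟩).trans (le_max_left _ _)
    · exact (hle s ⟨hvs, hs.2.trans ht.2⟩).trans (le_max_right _ _)
  have hWA : W ≤ c * A := by
    rcases le_total A W with hAW | hWA
    · rw [max_eq_right hAW] at hW
      have hW0 : W ≤ 0 := nonpos_of_mul_nonpos_right (by linarith) (sub_pos.2 hc1)
      nlinarith
    · rwa [max_eq_left hWA] at hW
  exact fun t ht => (hle t ht).trans hWA

lemma exists_norm_le_geometric (hcon : DelayedSlopeContraction y d r c T)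
    (hd : ∀ u, a ≤ u → HasDerivWithinAt y (d u) (Ici a) u) (hr : 0 < r) (hT : a + r ≤ T)
    (hc0 : 0 ≤ c) (hc1 : c < 1) :
    ∃ A, ∀ n : ℕ, ∀ s ∈ Icc (T + r + n * r) (T + r + n * r + r), ‖d s‖ ≤ A * c ^ n := by
  obtain ⟨A, hA⟩ := hcon.bddAbove_norm_image_Icc hd hr hT hc0 hc1 (w := T + r + r) le_rfl
  refine ⟨A, fun n => ?_⟩
  induction n with
  | zero => simpa using fun s hs => hA (mem_image_of_mem _ hs)
  | succ n ih =>
    have hv : T + r + ↑(n + 1) * r = T + r + n * r + r := by push_cast; ring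
    rw [hv, pow_succ, mul_comm (c ^ n) c, ← mul_assoc, mul_comm A c, mul_assoc]
    have hbdd := hcon.bddAbove_norm_image_Icc hd hr hT hc0 hc1 (w := T + r + n * r + r + r)
      (v := T + r + n * r + r) (by nlinarith [n.cast_nonneg (α := ℝ)])
    refine hcon.forall_Icc_norm_le_mul hd hr.le hT hc0 hc1
      (by nlinarith [n.cast_nonneg (α := ℝ)]) hbdd fun s hs => ih s ?_
    rwa [add_sub_cancel_right] at hs

end DelayedSlopeContraction

lemma exists_tendsto_of_norm_deriv_le_geometric [CompleteSpace E] {y d : ℝ → E} {a u r c A : ℝ}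
    (hd : ∀ t, a ≤ t → HasDerivWithinAt y (d t) (Ici a) t) (hau : a ≤ u) (hr : 0 < r)
    (hc0 : 0 ≤ c) (hc1 : c < 1)
    (hA : ∀ n : ℕ, ∀ s ∈ Icc (u + n * r) (u + n * r + r), ‖d s‖ ≤ A * c ^ n) :
    ∃ L, Tendsto y atTop (𝓝 L) := by
  set g : ℕ → ℝ := fun n => u + n * r
  have hosc : ∀ n, ∀ t ∈ Icc (g n) (g n + r), ‖y t - y (g n)‖ ≤ A * r * c ^ n := by
    intro n t ht
    have hgn : a ≤ g n := by simp only [g]; nlinarith [n.cast_nonneg (α := ℝ)]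
    have hAn : 0 ≤ A * c ^ n := (norm_nonneg _).trans (hA n _ ⟨le_rfl, by linarith⟩)
    calc ‖y t - y (g n)‖ ≤ A * c ^ n * (t - g n) :=
          norm_sub_le_of_hasDerivWithinAt_Ici hd hgn ht.1 fun s hs => hA n s ⟨hs.1, hs.2.trans ht.2⟩
      _ ≤ A * c ^ n * r := mul_le_mul_of_nonneg_left (by linarith [ht.2]) hAn
      _ = A * r * c ^ n := by ring
  have hcauchy : CauchySeq (y ∘ g) := cauchySeq_of_le_geometric c (A * r) hc1 fun n => by
    have hg : g (n + 1) = g n + r := by simp only [g]; push_cast; ring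
    rw [dist_comm, dist_eq_norm, Function.comp_apply, Function.comp_apply, hg]
    exact hosc n _ ⟨by linarith, le_rfl⟩
  obtain ⟨L, hL⟩ := cauchySeq_tendsto_of_complete hcauchy
  set m : ℝ → ℕ := fun t => ⌊(t - u) / r⌋₊
  have hm : Tendsto m atTop atTop := tendsto_nat_floor_atTop.comp
    ((tendsto_atTop_add_const_right _ _ tendsto_id).atTop_div_const hr)
  have hmem : ∀ t, u ≤ t → t ∈ Icc (g (m t)) (g (m t) + r) := by
    intro t ht
    have h₁ := Nat.floor_le (div_nonneg (sub_nonneg.2 ht) hr.le)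
    have h₂ := Nat.lt_floor_add_one ((t - u) / r)
    rw [le_div_iff₀ hr] at h₁
    rw [div_lt_iff₀ hr] at h₂
    exact ⟨by simp only [g, m]; linarith, by simp only [g, m]; linarith⟩
  have hosc_lim : Tendsto (fun t => y t - y (g (m t))) atTop (𝓝 0) := by
    refine squeeze_zero_norm' (eventually_atTop.2 ⟨u, fun t ht => hosc _ t (hmem t ht)⟩) ?_
    simpa using ((tendsto_pow_atTop_nhds_zero_of_lt_one hc0 hc1).comp hm).const_mul (A * r)
  exact ⟨L, by simpa using hosc_lim.add (hL.comp hm)⟩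

theorem DelayedSlopeContraction.exists_tendsto [CompleteSpace E] {y d : ℝ → E} {a r c T : ℝ}
    (hcon : DelayedSlopeContraction y d r c T)
    (hd : ∀ u, a ≤ u → HasDerivWithinAt y (d u) (Ici a) u) (hr : 0 < r) (hT : a + r ≤ T)
    (hc0 : 0 ≤ c) (hc1 : c < 1) : ∃ L, Tendsto y atTop (𝓝 L) := by
  obtain ⟨A, hA⟩ := hcon.exists_norm_le_geometric hd hr hT hc0 hc1
  exact exists_tendsto_of_norm_deriv_le_geometric hd (by linarith) hr hc0 hc1 hA

end DelayedSlope

section RFDE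

lemma intervalIntegrable_of_continuousOn_Ici {F : Type*} [NormedAddCommGroup F] {f : ℝ → F}
    {b u v : ℝ} (hf : ContinuousOn f (Ici b)) (hu : b ≤ u) (hv : b ≤ v) :
    IntervalIntegrable f volume u v :=
  (hf.mono fun _ hs => (le_inf hu hv).trans hs.1).intervalIntegrable

lemma exp_neg_integral_mul_exp_neg_integral {f : ℝ → ℂ} {u v w : ℝ}
    (huv : IntervalIntegrable f volume u v) (hvw : IntervalIntegrable f volume v w) :
    Complex.exp (-∫ s in v..w, f s) * Complex.exp (-∫ s in u..v, f s) =
      Complex.exp (-∫ s in u..w, f s) := by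
  rw [← Complex.exp_add, ← intervalIntegral.integral_add_adjacent_intervals huv hvw]
  ring_nf

noncomputable def scaledSolution (lam : ℝ → ℂ) (t₀ : ℝ) (x : ℝ → ℂ) (t : ℝ) : ℂ :=
  x t * Complex.exp (-∫ s in t₀..t, lam s)

variable {r t₀ t : ℝ} {ν : ℝ → Measure ℝ} {h : ℝ → ℝ → ℂ} {lam x : ℝ → ℂ}

lemma hasDerivWithinAt_scaledSolution (hr : 0 < r) (hlamc : ContinuousOn lam (Ici (t₀ - r)))
    (ht : t₀ ≤ t)
    (hlamint : IntegrableOn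
      (fun θ => Complex.exp (-(∫ s in (t - θ)..t, lam s)) * h t θ) (Icc 0 r) (ν t))
    (hlam : lam t = ∫ θ in Icc 0 r, Complex.exp (-(∫ s in (t - θ)..t, lam s)) * h t θ ∂(ν t))
    (hxint : IntegrableOn (fun θ => x (t - θ) * h t θ) (Icc 0 r) (ν t))
    (hx : HasDerivWithinAt x (∫ θ in Icc 0 r, x (t - θ) * h t θ ∂(ν t)) (Ici t₀) t) :
    HasDerivWithinAt (scaledSolution lam t₀ x)
      (∫ θ in Icc 0 r, Complex.exp (-(∫ s in (t - θ)..t, lam s)) *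
        (scaledSolution lam t₀ x (t - θ) - scaledSolution lam t₀ x t) * h t θ ∂(ν t))
      (Ici t₀) t := by
  set e := Complex.exp (-∫ s in t₀..t, lam s)
  have he : HasDerivAt (fun u => Complex.exp (-∫ s in t₀..u, lam s)) (e * -lam t) t :=
    (intervalIntegral.integral_hasDerivAt_right
      (intervalIntegrable_of_continuousOn_Ici hlamc (by linarith) (by linarith))
      ((hlamc.mono Ioi_subset_Ici_self).stronglyMeasurableAtFilter isOpen_Ioi t
        (show t₀ - r < t by linarith))
      (hlamc.continuousAt (Ici_mem_nhds (by linarith)))).neg.cexp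
  have hintegrand : EqOn
      (fun θ => Complex.exp (-(∫ s in (t - θ)..t, lam s)) *
        (scaledSolution lam t₀ x (t - θ) - scaledSolution lam t₀ x t) * h t θ)
      (fun θ => e * (x (t - θ) * h t θ) -
        Complex.exp (-(∫ s in (t - θ)..t, lam s)) * h t θ * scaledSolution lam t₀ x t)
      (Icc 0 r) := by
    intro θ hθ
    have := exp_neg_integral_mul_exp_neg_integral (u := t₀) (v := t - θ) (w := t)
      (intervalIntegrable_of_continuousOn_Ici hlamc (by linarith) (by linarith [hθ.2]))
      (intervalIntegrable_of_continuousOn_Ici hlamc (by linarith [hθ.2]) (by linarith [hθ.1]))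
    simp only [scaledSolution]
    linear_combination (x (t - θ) * h t θ) * this
  rw [setIntegral_congr_fun measurableSet_Icc hintegrand,
    integral_sub (hxint.const_mul e) (hlamint.mul_const _), integral_const_mul,
    integral_mul_const, ← hlam]
  refine (hx.mul he.hasDerivWithinAt).congr_deriv ?_
  simp only [scaledSolution, e]
  ring

lemma norm_integral_exp_mul_sub_le {y : ℝ → ℂ} {S : ℝ} (hh : ∀ᵐ θ ∂(ν t), ‖h t θ‖ = 1)
    (hlamint : IntegrableOn
      (fun θ => Complex.exp (-(∫ s in (t - θ)..t, lam s)) * h t θ) (Icc 0 r) (ν t))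
    (hchord : ∀ θ ∈ Icc 0 r, ‖y t - y (t - θ)‖ ≤ S * θ) :
    ‖∫ θ in Icc 0 r, Complex.exp (-(∫ s in (t - θ)..t, lam s)) * (y (t - θ) - y t) * h t θ ∂(ν t)‖
      ≤ S * ∫ θ in Icc 0 r, θ * ‖Complex.exp (-(∫ s in (t - θ)..t, lam s))‖ ∂(ν t) := by
  have hh' : ∀ᵐ θ ∂(ν t).restrict (Icc 0 r), ‖h t θ‖ = 1 := ae_restrict_of_ae hh
  have hint : IntegrableOn (fun θ => θ * ‖Complex.exp (-(∫ s in (t - θ)..t, lam s))‖)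
      (Icc 0 r) (ν t) := by
    refine (IntegrableOn.continuousOn_mul continuousOn_id hlamint.norm isCompact_Icc).congr ?_
    filter_upwards [hh'] with θ hθ
    simp [hθ]
  rw [← integral_const_mul]
  refine norm_integral_le_of_norm_le (hint.const_mul S) ?_
  filter_upwards [hh', ae_restrict_mem measurableSet_Icc] with θ hθ hθmem
  rw [norm_mul, norm_mul, hθ, mul_one, norm_sub_rev]
  calc _ ≤ ‖Complex.exp (-(∫ s in (t - θ)..t, lam s))‖ * (S * θ) :=
        mul_le_mul_of_nonneg_left (hchord θ hθmem) (norm_nonneg _)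
    _ = S * (θ * ‖Complex.exp (-(∫ s in (t - θ)..t, lam s))‖) := by ring

end RFDE

theorem stmt0_general
    (r t₀ : ℝ) (hr : 0 < r)
    (ν : ℝ → Measure ℝ)
    (h : ℝ → ℝ → ℂ)
    (hh : ∀ t, t₀ ≤ t → ∀ᵐ θ ∂(ν t), ‖h t θ‖ = 1)
    -- λ is a solution of the generalized characteristic equation
    (lam : ℝ → ℂ)
    (hlamc : ContinuousOn lam (Set.Ici (t₀ - r)))
    (hlamint : ∀ t, t₀ ≤ t → IntegrableOn
      (fun θ => Complex.exp (-(∫ s in (t - θ)..t, lam s)) * h t θ) (Set.Icc 0 r) (ν t))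
    (hlam : ∀ t, t₀ ≤ t →
      lam t = ∫ θ in Set.Icc 0 r, Complex.exp (-(∫ s in (t - θ)..t, lam s)) * h t θ ∂(ν t))
    -- the smallness condition: limsup_{t→∞} ∫_0^r θ ‖exp(-∫_{t-θ}^t λ)‖ d‖η t‖(θ) < 1
    (hbdd : IsBoundedUnder (· ≤ ·) atTop (fun t => ∫ θ in Set.Icc 0 r,
      θ * ‖Complex.exp (-(∫ s in (t - θ)..t, lam s))‖ ∂(ν t)))
    (hV : limsup (fun t => ∫ θ in Set.Icc 0 r,
      θ * ‖Complex.exp (-(∫ s in (t - θ)..t, lam s))‖ ∂(ν t)) atTop < 1)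
    -- x is a solution of the RFDE
    (x : ℝ → ℂ)
    (hxint : ∀ t, t₀ ≤ t →
      IntegrableOn (fun θ => x (t - θ) * h t θ) (Set.Icc 0 r) (ν t))
    (hx : ∀ t, t₀ ≤ t → HasDerivWithinAt x
      (∫ θ in Set.Icc 0 r, x (t - θ) * h t θ ∂(ν t)) (Set.Ici t₀) t) :
    ∃ L : ℂ, Tendsto (fun t => x t * Complex.exp (-(∫ s in t₀..t, lam s)))
      atTop (𝓝 L) := by
  obtain ⟨c, hc0, hc1⟩ := exists_between (max_lt hV one_pos)
  obtain ⟨T, hT⟩ := eventually_atTop.1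
    (eventually_lt_of_limsup_lt ((le_max_left _ _).trans_lt hc0) hbdd)
  set y := scaledSolution lam t₀ x
  have hcon : DelayedSlopeContraction y (fun t => ∫ θ in Icc 0 r,
      Complex.exp (-(∫ s in (t - θ)..t, lam s)) * (y (t - θ) - y t) * h t θ ∂(ν t))
      r c (max T (t₀ + r)) := by
    intro t ht S hS hchord
    have ht₀ : t₀ ≤ t := by linarith [le_of_max_le_right ht]
    calc _ ≤ S * _ := norm_integral_exp_mul_sub_le (hh t ht₀) (hlamint t ht₀) hchord
      _ ≤ S * c := mul_le_mul_of_nonneg_left (hT t (le_of_max_le_left ht)).le hS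
      _ = c * S := mul_comm _ _
  exact hcon.exists_tendsto (fun t ht => hasDerivWithinAt_scaledSolution hr hlamc ht
    (hlamint t ht) (hlam t ht) (hxint t ht) (hx t ht)) hr (le_max_right _ _)
    ((le_max_right _ _).trans hc0.le) hc1

theorem stmt0
    (r t₀ : ℝ) (hr : 0 < r)
    (ν : ℝ → Measure ℝ)
    (hfin : ∀ t, t₀ ≤ t → IsFiniteMeasure (ν t))
    (hsupp : ∀ t, t₀ ≤ t → ν t (Set.Icc 0 r)ᶜ = 0)
    (h : ℝ → ℝ → ℂ)
    (hh : ∀ t, t₀ ≤ t → ∀ᵐ θ ∂(ν t), ‖h t θ‖ = 1)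
    -- λ is a solution of the generalized characteristic equation
    (lam : ℝ → ℂ)
    (hlamc : ContinuousOn lam (Set.Ici (t₀ - r)))
    (hlamint : ∀ t, t₀ ≤ t → IntegrableOn
      (fun θ => Complex.exp (-(∫ s in (t - θ)..t, lam s)) * h t θ) (Set.Icc 0 r) (ν t))
    (hlam : ∀ t, t₀ ≤ t →
      lam t = ∫ θ in Set.Icc 0 r, Complex.exp (-(∫ s in (t - θ)..t, lam s)) * h t θ ∂(ν t))
    -- the smallness condition: limsup_{t→∞} ∫_0^r θ ‖exp(-∫_{t-θ}^t λ)‖ d‖η t‖(θ) < 1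
    (hbdd : IsBoundedUnder (· ≤ ·) atTop (fun t => ∫ θ in Set.Icc 0 r,
      θ * ‖Complex.exp (-(∫ s in (t - θ)..t, lam s))‖ ∂(ν t)))
    (hV : limsup (fun t => ∫ θ in Set.Icc 0 r,
      θ * ‖Complex.exp (-(∫ s in (t - θ)..t, lam s))‖ ∂(ν t)) atTop < 1)
    -- x is a solution of the RFDE
    (x : ℝ → ℂ)
    (hxc : ContinuousOn x (Set.Ici (t₀ - r)))
    (hxint : ∀ t, t₀ ≤ t →
      IntegrableOn (fun θ => x (t - θ) * h t θ) (Set.Icc 0 r) (ν t))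
    (hx : ∀ t, t₀ ≤ t → HasDerivWithinAt x
      (∫ θ in Set.Icc 0 r, x (t - θ) * h t θ ∂(ν t)) (Set.Ici t₀) t) :
    ∃ L : ℂ, Tendsto (fun t => x t * Complex.exp (-(∫ s in t₀..t, lam s)))
      atTop (𝓝 L) :=
  stmt0_general r t₀ hr ν h hh lam hlamc hlamint hlam hbdd hV x hxint hx
end

section
/- Let λ be a solution of the generalized characteristic equation such that limsup_{t→∞} ∫_0^r θ·|exp(−∫_{t−θ}^t λ(s) ds)| d‖η(t)‖(θ) < 1. Then for every solution x of the RFDE x'(t) = ∫_0^r x(t−θ) dη(t)(θ), the derivative of t ↦ x(t)·exp(−∫_{t₀}^t λ(s) ds) tends to 0 as t → ∞. -/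
/-
With `y(t) = x(t) exp(-∫_{t₀}^t λ)`, the characteristic equation turns the RFDE into
`y'(t) = ∫_0^r (y(t-θ) - y(t)) exp(-∫_{t-θ}^t λ) dη(t)(θ)`, so for large `t`
`‖y'(t)‖ ≤ q · sup_{0<θ≤r} ‖y(t-θ) - y(t)‖ / θ` with `q < 1`. By the mean value theorem the
right-hand side is at most `q · sup_{[t-r,t]} ‖y'‖`; hence, once `y'` is bounded on compact
intervals, it is bounded on `[T, ∞)` and shrinks by the factor `q` over each window of length `r`.

Local boundedness is the delicate point, as `y'` need not be continuous. If `‖y'(s)‖ = U` were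
large, the estimate would produce a chain `ξ_k ↓ ζ` with `‖y'(ξ_k)‖ ≥ γ^k U` and slopes of `y`
at least `γ^{k+1} U` on intervals `[ξ_k - θ_k, ξ_k]`, which differentiability of `y` at `ζ`
forbids.
-/

open MeasureTheory Filter Topology Set

section

variable {E : Type*} [NormedAddCommGroup E]

def BackwardSlopeBound (y g : ℝ → E) (r q T : ℝ) : Prop :=
  ∀ t, T ≤ t → ∀ c, 0 ≤ c → (∀ θ ∈ Icc 0 r, ‖y (t - θ) - y t‖ ≤ c * θ) → ‖g t‖ ≤ q * c

theorem BackwardSlopeBound.mono {y g : ℝ → E} {r q q' T : ℝ} (hB : BackwardSlopeBound y g r q T)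
    (hq : q ≤ q') :
    BackwardSlopeBound y g r q' T :=
  fun t ht c hc hyc => (hB t ht c hc hyc).trans (mul_le_mul_of_nonneg_right hq hc)

theorem tendsto_zero_of_norm_le_mul_window {g : ℝ → E} {r q T : ℝ} (hr : 0 < r) (hq0 : 0 ≤ q)
    (hq1 : q < 1) (hbdd : ∀ b, BddAbove ((‖g ·‖) '' Icc T b))
    (hwin : ∀ t, T + r ≤ t → ∀ c, 0 ≤ c → (∀ s ∈ Icc (t - r) t, ‖g s‖ ≤ c) → ‖g t‖ ≤ q * c) :
    Tendsto g atTop (𝓝 0) := by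
  obtain ⟨C, hC⟩ := hbdd (T + r)
  have hC0 : 0 ≤ C := (norm_nonneg _).trans (hC ⟨T, ⟨le_rfl, by linarith⟩, rfl⟩)
  -- `S ≤ max C (q * S)` for the supremum `S` of `‖g‖` on `[T, t]`, so `S ≤ C`
  have hglob : ∀ t, T ≤ t → ‖g t‖ ≤ C := by
    intro t ht
    set S := sSup ((‖g ·‖) '' Icc T t)
    have hS : ∀ s ∈ Icc T t, ‖g s‖ ≤ S := fun s hs => le_csSup (hbdd t) ⟨s, hs, rfl⟩
    have hS0 : 0 ≤ S := (norm_nonneg _).trans (hS t ⟨ht, le_rfl⟩)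
    have hSC : S ≤ max C (q * S) := by
      refine csSup_le ((nonempty_Icc.2 ht).image _) ?_
      rintro _ ⟨s, hs, rfl⟩
      rcases le_or_gt s (T + r) with hsr | hsr
      · exact (hC ⟨s, ⟨hs.1, hsr⟩, rfl⟩).trans (le_max_left _ _)
      · exact (hwin s hsr.le S hS0 fun u hu => hS u ⟨by linarith [hu.1], hu.2.trans hs.2⟩).trans
          (le_max_right _ _)
    have : S ≤ C := by
      rcases le_max_iff.1 hSC with h | h
      · exact h
      · nlinarith
    exact (hS t ⟨ht, le_rfl⟩).trans this
  have hdecay : ∀ n : ℕ, ∀ t, T + n * r ≤ t → ‖g t‖ ≤ q ^ n * C := by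
    intro n
    induction n with
    | zero => intro t ht; simpa using hglob t (by simpa using ht)
    | succ n ih =>
      intro t ht
      push_cast at ht
      rw [pow_succ', mul_assoc]
      exact hwin t (by nlinarith [n.cast_nonneg (α := ℝ)]) _ (by positivity)
        fun s hs => ih s (by linarith [hs.1])
  refine tendsto_zero_iff_norm_tendsto_zero.2 (Metric.tendsto_atTop.2 fun ε hε => ?_)
  have hpow : Tendsto (fun n : ℕ => q ^ n * C) atTop (𝓝 0) := by
    simpa using (tendsto_pow_atTop_nhds_zero_of_lt_one hq0 hq1).mul_const C
  obtain ⟨n, hn⟩ := (hpow.eventually (gt_mem_nhds hε)).exists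
  exact ⟨T + n * r, fun t ht => by
    rw [Real.dist_eq, sub_zero, abs_norm]; exact (hdecay n t ht).trans_lt hn⟩

variable [NormedSpace ℝ E]

theorem Antitone.sub_le_tsum_mul_of_tendsto {ξ ε : ℕ → ℝ} {ζ : ℝ} (hξ : Antitone ξ)
    (hξζ : Tendsto ξ atTop (𝓝 ζ)) (hε : ∀ k, 0 ≤ ε k) (hsum : Summable ε)
    (hstep : ∀ k, ξ k - ξ (k + 1) ≤ ε k * (ξ k - ζ)) : ξ 0 - ζ ≤ (∑' k, ε k) * (ξ 0 - ζ) := by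
  have hpartial : ∀ n, ξ 0 - ξ n ≤ (∑' k, ε k) * (ξ 0 - ζ) := fun n =>
    calc ξ 0 - ξ n = ∑ k ∈ Finset.range n, (ξ k - ξ (k + 1)) := (Finset.sum_range_sub' ξ n).symm
      _ ≤ ∑ k ∈ Finset.range n, ε k * (ξ 0 - ζ) := Finset.sum_le_sum fun k _ =>
          (hstep k).trans (mul_le_mul_of_nonneg_left (sub_le_sub_right (hξ k.zero_le) ζ) (hε k))
      _ ≤ (∑' k, ε k) * (ξ 0 - ζ) := by
          rw [← Finset.sum_mul]
          exact mul_le_mul_of_nonneg_right (hsum.sum_le_tsum _ fun k _ => hε k)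
            (sub_nonneg.2 (hξ.le_of_tendsto hξζ 0))
  exact le_of_tendsto' (tendsto_const_nhds.sub hξζ) hpartial

theorem HasDerivAt.exists_eventually_mul_le_of_steep {y : ℝ → E} {y' : E} {ζ : ℝ}
    (hy : HasDerivAt y y' ζ) {ξ θ c : ℕ → ℝ} (hξζ : Tendsto ξ atTop (𝓝 ζ))
    (hθ : Tendsto θ atTop (𝓝 0)) (hζξ : ∀ k, ζ < ξ k) (hθ0 : ∀ k, 0 ≤ θ k)
    (hc : Tendsto c atTop atTop) (hsteep : ∀ k, c k * θ k < ‖y (ξ k - θ k) - y (ξ k)‖) :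
    ∃ K > 0, ∀ᶠ k in atTop, c k * θ k ≤ K * (ξ k - ζ) := by
  obtain ⟨K, hK, hKy⟩ := hy.isBigO_sub.exists_pos
  refine ⟨4 * K, by positivity, ?_⟩
  have hleft : Tendsto (fun k => ξ k - θ k) atTop (𝓝 ζ) := by simpa using hξζ.sub hθ
  filter_upwards [hξζ.eventually hKy.bound, hleft.eventually hKy.bound,
    hc.eventually_ge_atTop (2 * K)] with k hright hleft hck
  -- both ends of the interval are within `θ k + (ξ k - ζ)` of `ζ`
  have hΔ : ‖y (ξ k - θ k) - y (ξ k)‖ ≤ K * (θ k + 2 * (ξ k - ζ)) :=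
    calc ‖y (ξ k - θ k) - y (ξ k)‖ ≤ ‖y (ξ k - θ k) - y ζ‖ + ‖y (ξ k) - y ζ‖ :=
          (norm_sub_le_norm_sub_add_norm_sub _ (y ζ) _).trans_eq (by rw [norm_sub_rev (y ζ)])
      _ ≤ K * ‖ξ k - θ k - ζ‖ + K * ‖ξ k - ζ‖ := add_le_add hleft hright
      _ ≤ K * (θ k + (ξ k - ζ)) + K * (ξ k - ζ) := by
          have hd := hζξ k
          gcongr
          · exact abs_le.2 ⟨by linarith [hθ0 k], by linarith [hθ0 k]⟩
          · exact (abs_of_pos (sub_pos.2 hd)).le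
      _ = K * (θ k + 2 * (ξ k - ζ)) := by ring
  nlinarith [hsteep k, hθ0 k]

theorem HasDerivAt.false_of_steep_chain {y : ℝ → E} {y' : E} {ζ : ℝ} (hy : HasDerivAt y y' ζ)
    {ξ θ c : ℕ → ℝ} (hξ : StrictAnti ξ) (hξζ : Tendsto ξ atTop (𝓝 ζ))
    (hθ : Tendsto θ atTop (𝓝 0)) (hstep : ∀ k, ξ k - θ k ≤ ξ (k + 1)) (hc : ∀ k, 0 < c k)
    (hsum : Summable fun k => (c k)⁻¹) (hsteep : ∀ k, c k * θ k < ‖y (ξ k - θ k) - y (ξ k)‖) :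
    False := by
  have hζξ : ∀ k, ζ < ξ k := fun k =>
    (hξ.antitone.le_of_tendsto hξζ (k + 1)).trans_lt (hξ k.lt_succ_self)
  have hc_top : Tendsto c atTop atTop := by
    simpa [Pi.inv_def] using (tendsto_nhdsWithin_iff.2 ⟨hsum.tendsto_atTop_zero,
      Eventually.of_forall fun k => inv_pos.2 (hc k)⟩).inv_tendsto_nhdsGT_zero
  obtain ⟨K, hK, hsmall⟩ := hy.exists_eventually_mul_le_of_steep hξζ hθ hζξ
    (fun k => by linarith [hstep k, hξ k.lt_succ_self]) hc_top hsteep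
  obtain ⟨M, hM, htail⟩ := ((eventually_forall_ge_atTop.2 hsmall).and
    ((tendsto_sum_nat_add fun k => (c k)⁻¹).eventually
      (gt_mem_nhds (inv_pos.2 hK)))).exists
  -- from `ξ M` on, each step is a fixed fraction of the remaining distance to `ζ`, and these
  -- fractions add up to less than `1`
  have hdist := Antitone.sub_le_tsum_mul_of_tendsto (ξ := fun j => ξ (j + M))
    (ε := fun j => K * (c (j + M))⁻¹) (fun i j hij => hξ.antitone (by omega))
    (hξζ.comp (tendsto_add_atTop_nat M)) (fun j => mul_nonneg hK.le (inv_pos.2 (hc _)).le)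
    (((summable_nat_add_iff M).2 hsum).mul_left _) fun j => by
      have hθj := hM (j + M) (by omega)
      rw [mul_comm, ← le_div_iff₀ (hc _)] at hθj
      have := hstep (j + M)
      rw [add_right_comm] at this
      linarith [show K * (c (j + M))⁻¹ * (ξ (j + M) - ζ) = K * (ξ (j + M) - ζ) / c (j + M) by ring]
  rw [tsum_mul_left, zero_add] at hdist
  have hd : 0 < ξ M - ζ := sub_pos.2 (hζξ M)
  have hfrac : K * ∑' j, (c (j + M))⁻¹ < 1 := by
    calc K * ∑' j, (c (j + M))⁻¹ < K * K⁻¹ := by gcongr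
      _ = 1 := mul_inv_cancel₀ hK.ne'
  nlinarith

theorem norm_sub_le_of_hasDerivAt {y g : ℝ → E} {a u v c : ℝ}
    (hy : ∀ t, a < t → HasDerivAt y (g t) t) (hu : a < u) (huv : u ≤ v)
    (hc : ∀ s ∈ Ico u v, ‖g s‖ ≤ c) : ‖y v - y u‖ ≤ c * (v - u) :=
  norm_image_sub_le_of_norm_deriv_le_segment'
    (fun s hs => (hy s (hu.trans_le hs.1)).hasDerivWithinAt) hc v ⟨huv, le_rfl⟩

namespace BackwardSlopeBound

variable {y g : ℝ → E} {a r q T : ℝ}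

theorem norm_le_of_window (hB : BackwardSlopeBound y g r q T)
    (hy : ∀ t, a < t → HasDerivAt y (g t) t) (haT : a + r < T) {t c : ℝ} (ht : T ≤ t)
    (hc : 0 ≤ c) (hwin : ∀ s ∈ Icc (t - r) t, ‖g s‖ ≤ c) : ‖g t‖ ≤ q * c :=
  hB t ht c hc fun θ hθ => by
    rw [norm_sub_rev]
    simpa using norm_sub_le_of_hasDerivAt (u := t - θ) hy (by linarith [hθ.2]) (by linarith [hθ.1])
      fun s hs => hwin s ⟨by linarith [hs.1, hθ.2], hs.2.le⟩

theorem exists_steep_step (hB : BackwardSlopeBound y g r q T)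
    (hy : ∀ t, a < t → HasDerivAt y (g t) t) (haT : a + r < T) {t c : ℝ} (ht : T ≤ t)
    (hc : 0 ≤ c) (hgt : q * c < ‖g t‖) :
    ∃ θ ∈ Ioc 0 r, ∃ t' ∈ Ico (t - θ) t, c < ‖g t'‖ ∧ c * θ < ‖y (t - θ) - y t‖ := by
  obtain ⟨θ, hθ, hsteep⟩ : ∃ θ ∈ Icc 0 r, c * θ < ‖y (t - θ) - y t‖ := by
    by_contra! h
    exact hgt.not_ge (hB t ht c hc h)
  have hθ0 : 0 < θ := hθ.1.lt_of_ne (by rintro rfl; simp at hsteep)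
  obtain ⟨t', ht', hgt'⟩ : ∃ t' ∈ Ico (t - θ) t, c < ‖g t'‖ := by
    by_contra! h
    have := norm_sub_le_of_hasDerivAt hy (by linarith [hθ.2]) (by linarith) h
    rw [norm_sub_rev] at hsteep
    simp only [sub_sub_cancel] at this
    linarith
  exact ⟨θ, ⟨hθ0, hθ.2⟩, t', ht', hgt', hsteep⟩

theorem exists_steep_chain (hB : BackwardSlopeBound y g r q T)
    (hy : ∀ t, a < t → HasDerivAt y (g t) t) (haT : a + r < T) (hr : 0 ≤ r) {γ C s : ℝ}
    (hγ : 1 < γ) (hqγ : q * γ < 1) (hs : T + 1 ≤ s) (hC : ∀ z ∈ Icc (s - 1 - r) s, ‖y z‖ ≤ C)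
    (hU : 2 * C / (γ - 1) < ‖g s‖) :
    ∃ ξ θ : ℕ → ℝ, StrictAnti ξ ∧ (∀ k, s - 1 < ξ k) ∧ (∀ k, ξ k - θ k ≤ ξ (k + 1)) ∧
      ∀ k, γ ^ (k + 1) * ‖g s‖ * θ k < ‖y (ξ k - θ k) - y (ξ k)‖ ∧
        γ ^ (k + 1) * ‖g s‖ * θ k ≤ 2 * C := by
  set U := ‖g s‖
  set A := 2 * C / (γ - 1)
  have hγ1 : 0 < γ - 1 := by linarith
  have hA0 : 0 ≤ A :=
    div_nonneg (by linarith [(norm_nonneg _).trans (hC s ⟨by linarith, le_rfl⟩)]) hγ1.le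
  have hU0 : 0 < U := hA0.trans_lt hU
  -- Along the chain of pairs `(ξ, c)` with `c ≤ ‖g ξ‖`, the potential `s - ξ + A / c` does not
  -- increase, which keeps the chain inside `(s - 1, s]`.
  let I : ℝ × ℝ → Prop := fun p => p.1 ≤ s ∧ s - p.1 + A / p.2 ≤ A / U ∧ 0 < p.2 ∧ p.2 ≤ ‖g p.1‖
  have hI : ∀ p, I p → s - 1 < p.1 := by
    rintro p ⟨-, hp, hp2, -⟩
    linarith [div_nonneg hA0 hp2.le, (div_lt_one hU0).2 hU]
  have hnext : ∀ p : {p // I p}, ∃ p' : {p // I p}, ∃ θ, p'.1.2 = γ * p.1.2 ∧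
      p.1.1 - θ ≤ p'.1.1 ∧ p'.1.1 < p.1.1 ∧ p'.1.2 * θ < ‖y (p.1.1 - θ) - y p.1.1‖ ∧
      p'.1.2 * θ ≤ 2 * C := by
    rintro ⟨⟨ξ, c⟩, hξs, hpot, hc, hcg⟩
    have hξ := hI _ ⟨hξs, hpot, hc, hcg⟩
    dsimp only at hξs hpot hc hcg hξ ⊢
    have hγc : 0 < γ * c := by positivity
    obtain ⟨θ, hθ, ξ', hξ', hgξ', hsteep⟩ :=
      hB.exists_steep_step (t := ξ) hy haT (by linarith) hγc.le (by nlinarith)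
    have hΔ : ‖y (ξ - θ) - y ξ‖ ≤ 2 * C := by
      have h1 := hC (ξ - θ) ⟨by linarith [hθ.2], by linarith [hθ.1]⟩
      have h2 := hC ξ ⟨by linarith, hξs⟩
      linarith [norm_sub_le (y (ξ - θ)) (y ξ)]
    have hθC : θ ≤ 2 * C / (γ * c) := by
      rw [le_div_iff₀ hγc, mul_comm]; linarith
    have hpot' : 2 * C / (γ * c) + A / (γ * c) = A / c := by
      simp only [A]; field_simp; ring
    refine ⟨⟨(ξ', γ * c), ⟨by linarith [hξ'.2], ?_, hγc, hgξ'.le⟩⟩, θ, rfl, hξ'.1, hξ'.2,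
      hsteep, hsteep.le.trans hΔ⟩
    dsimp only
    linarith [hξ'.1]
  choose next θ hcnext hθl hθu hsteep hθC using hnext
  let p₀ : {p // I p} := ⟨(s, U), le_rfl, by simp, hU0, le_rfl⟩
  let seq : ℕ → {p // I p} := fun k => Nat.rec p₀ (fun _ => next) k
  have hc : ∀ k, (seq k).1.2 = γ ^ k * U := by
    intro k
    induction k with
    | zero => simp [seq, p₀]
    | succ k ih => rw [show seq (k + 1) = next (seq k) from rfl, hcnext, ih, pow_succ]; ring
  refine ⟨fun k => (seq k).1.1, fun k => θ (seq k),
    strictAnti_nat_of_succ_lt fun k => hθu (seq k), fun k => hI _ (seq k).2,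
    fun k => hθl (seq k), fun k => ?_⟩
  rw [← hc (k + 1)]
  exact ⟨hsteep (seq k), hθC (seq k)⟩

theorem norm_le_of_forall_mem_Icc_norm_le (hB : BackwardSlopeBound y g r q T)
    (hy : ∀ t, a < t → HasDerivAt y (g t) t) (haT : a + r < T) (hr : 0 ≤ r) {γ C s : ℝ}
    (hγ : 1 < γ) (hqγ : q * γ < 1) (hs : T + 1 ≤ s) (hC : ∀ z ∈ Icc (s - 1 - r) s, ‖y z‖ ≤ C) :
    ‖g s‖ ≤ 2 * C / (γ - 1) := by
  by_contra! hU
  obtain ⟨ξ, θ, hξ, hξs, hstep, hsteep⟩ := hB.exists_steep_chain hy haT hr hγ hqγ hs hC hU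
  have hU0 : 0 < ‖g s‖ := lt_of_le_of_lt (div_nonneg (by
    linarith [(norm_nonneg _).trans (hC s ⟨by linarith, le_rfl⟩)]) (by linarith)) hU
  have hc : ∀ k, 0 < γ ^ (k + 1) * ‖g s‖ := fun k => by positivity
  have hsum : Summable fun k => (γ ^ (k + 1) * ‖g s‖)⁻¹ := by
    refine ((summable_geometric_of_lt_one (by positivity) (inv_lt_one_of_one_lt₀ hγ)).mul_left
      (‖g s‖ * γ)⁻¹).congr fun k => ?_
    rw [pow_succ, inv_pow, mul_inv, mul_inv]; ring
  have hbdd : BddBelow (range ξ) := ⟨s - 1, by rintro _ ⟨k, rfl⟩; exact (hξs k).le⟩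
  have hζ : a < ⨅ k, ξ k := by linarith [le_ciInf fun k => (hξs k).le]
  refine (hy _ hζ).false_of_steep_chain hξ (tendsto_atTop_ciInf hξ.antitone hbdd) ?_ hstep hc
    hsum fun k => (hsteep k).1
  refine squeeze_zero (fun k => by linarith [hstep k, hξ k.lt_succ_self])
    (fun k => (le_div_iff₀' (hc k)).2 (hsteep k).2)
    (by simpa [div_eq_mul_inv] using hsum.tendsto_atTop_zero.const_mul (2 * C))

theorem tendsto_zero (hB : BackwardSlopeBound y g r q T)
    (hy : ∀ t, a < t → HasDerivAt y (g t) t) (haT : a + r < T) (hr : 0 < r) (hq : q < 1) :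
    Tendsto g atTop (𝓝 0) := by
  set q' := max q 0
  have hB' := hB.mono (le_max_left q 0)
  have hq' : q' < 1 := max_lt hq one_pos
  have hγ : 1 < 2 / (1 + q') := by rw [lt_div_iff₀ (by positivity)]; linarith
  have hqγ : q' * (2 / (1 + q')) < 1 := by
    rw [mul_div_assoc', div_lt_one (by positivity)]; linarith
  refine tendsto_zero_of_norm_le_mul_window (T := T + 1) hr (le_max_right q 0) hq'
    (fun b => ?_) fun t ht c hc => hB'.norm_le_of_window hy haT (by linarith) hc
  obtain ⟨C, hC⟩ := isCompact_Icc.exists_bound_of_continuousOn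
    (fun z hz => (hy z (by linarith [hz.1])).continuousAt.continuousWithinAt :
      ContinuousOn y (Icc (T - r) b))
  refine ⟨2 * C / (2 / (1 + q') - 1), ?_⟩
  rintro _ ⟨s, hs, rfl⟩
  exact hB'.norm_le_of_forall_mem_Icc_norm_le hy haT hr.le hγ hqγ hs.1
    fun z hz => hC z ⟨by linarith [hz.1, hs.1], hz.2.trans hs.2⟩

end BackwardSlopeBound

end

theorem cexp_neg_integral_eq_mul {lam : ℝ → ℂ} {a b c : ℝ} (hab : IntervalIntegrable lam volume a b)
    (hbc : IntervalIntegrable lam volume b c) :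
    Complex.exp (-∫ s in a..c, lam s) =
      Complex.exp (-∫ s in a..b, lam s) * Complex.exp (-∫ s in b..c, lam s) := by
  rw [← Complex.exp_add, ← neg_add, intervalIntegral.integral_add_adjacent_intervals hab hbc]

theorem HasDerivAt.mul_cexp_neg_integral {x lam : ℝ → ℂ} {x' : ℂ} {a t₀ t : ℝ}
    (hx : HasDerivAt x x' t) (hlam : ContinuousOn lam (Ioi a)) (ht₀ : a < t₀) (ht : a < t) :
    HasDerivAt (fun u => x u * Complex.exp (-∫ s in t₀..u, lam s))
      (Complex.exp (-∫ s in t₀..t, lam s) * (x' - lam t * x t)) t := by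
  have hΛ : HasDerivAt (fun u => ∫ s in t₀..u, lam s) (lam t) t :=
    intervalIntegral.integral_hasDerivAt_right
      ((hlam.mono fun z hz => lt_min ht₀ ht |>.trans_le hz.1).intervalIntegrable)
      (hlam.stronglyMeasurableAtFilter isOpen_Ioi t ht) (hlam.continuousAt (Ioi_mem_nhds ht))
  exact (hx.mul hΛ.neg.cexp).congr_deriv (by simp only [Pi.neg_apply]; ring)

theorem norm_setIntegral_mul_le {μ : Measure ℝ} {D v : ℝ → ℂ} {r c : ℝ}
    (hv : IntegrableOn v (Icc 0 r) μ) (hD : ∀ θ ∈ Icc 0 r, ‖D θ‖ ≤ c * θ) :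
    ‖∫ θ in Icc 0 r, D θ * v θ ∂μ‖ ≤ c * ∫ θ in Icc 0 r, θ * ‖v θ‖ ∂μ := by
  rw [← integral_const_mul]
  refine norm_integral_le_of_norm_le
    ((hv.norm.bdd_mul (c := r) aestronglyMeasurable_id ?_).const_mul c) ?_
  · filter_upwards [ae_restrict_mem measurableSet_Icc] with θ hθ
    simpa [abs_of_nonneg hθ.1] using hθ.2
  · filter_upwards [ae_restrict_mem measurableSet_Icc] with θ hθ
    rw [norm_mul, ← mul_assoc]
    exact mul_le_mul_of_nonneg_right (hD θ hθ) (norm_nonneg _)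

theorem cexp_neg_integral_mul_sub_eq_setIntegral {μ : Measure ℝ} {x lam k : ℝ → ℂ}
    {b t₀ t r : ℝ} (hlam : ContinuousOn lam (Ici b)) (hb₀ : b ≤ t₀) (hbt : b ≤ t - r)
    (hx : IntegrableOn (fun θ => x (t - θ) * k θ) (Icc 0 r) μ)
    (hE : IntegrableOn (fun θ => Complex.exp (-∫ s in (t - θ)..t, lam s) * k θ) (Icc 0 r) μ)
    (hchar : lam t = ∫ θ in Icc 0 r, Complex.exp (-∫ s in (t - θ)..t, lam s) * k θ ∂μ) :
    Complex.exp (-∫ s in t₀..t, lam s) * ((∫ θ in Icc 0 r, x (t - θ) * k θ ∂μ) - lam t * x t) =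
      ∫ θ in Icc 0 r, (x (t - θ) * Complex.exp (-∫ s in t₀..(t - θ), lam s) -
        x t * Complex.exp (-∫ s in t₀..t, lam s)) *
          (Complex.exp (-∫ s in (t - θ)..t, lam s) * k θ) ∂μ := by
  have hii : ∀ u v, b ≤ u → b ≤ v → IntervalIntegrable lam volume u v := fun u v hu hv =>
    (hlam.mono fun z hz => (le_min hu hv).trans hz.1).intervalIntegrable
  have hsplit : ∀ θ ∈ Icc 0 r, Complex.exp (-∫ s in t₀..t, lam s) * (x (t - θ) * k θ) =
      x (t - θ) * Complex.exp (-∫ s in t₀..(t - θ), lam s) *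
        (Complex.exp (-∫ s in (t - θ)..t, lam s) * k θ) := fun θ hθ => by
    rw [cexp_neg_integral_eq_mul (hii t₀ (t - θ) hb₀ (by linarith [hθ.2]))
      (hii (t - θ) t (by linarith [hθ.2]) (by linarith [hθ.1, hθ.2]))]
    ring
  rw [mul_sub, ← integral_const_mul, setIntegral_congr_fun measurableSet_Icc hsplit, hchar,
    ← integral_mul_const, ← integral_const_mul, ← integral_sub]
  · congr 1 with θ
    ring
  · exact IntegrableOn.congr_fun (hx.const_mul _) hsplit measurableSet_Icc
  · exact (hE.mul_const _).const_mul _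

/- The complex measure `η t` is given in polar form `dη(t) = h t dν(t)`, with `ν t = ‖η t‖` and
`‖h t θ‖ = 1` for `ν t`-a.e. `θ`. -/
theorem stmt1_general
    (r t₀ : ℝ) (hr : 0 < r)
    (ν : ℝ → Measure ℝ)
    (h : ℝ → ℝ → ℂ)
    (hh : ∀ t, t₀ ≤ t → ∀ᵐ θ ∂(ν t), ‖h t θ‖ = 1)
    -- λ is a solution of the generalized characteristic equation
    (lam : ℝ → ℂ)
    (hlamc : ContinuousOn lam (Set.Ici (t₀ - r)))
    (hlamint : ∀ t, t₀ ≤ t → IntegrableOn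
      (fun θ => Complex.exp (-(∫ s in (t - θ)..t, lam s)) * h t θ) (Set.Icc 0 r) (ν t))
    (hlam : ∀ t, t₀ ≤ t →
      lam t = ∫ θ in Set.Icc 0 r, Complex.exp (-(∫ s in (t - θ)..t, lam s)) * h t θ ∂(ν t))
    -- the smallness condition: limsup_{t→∞} ∫_0^r θ ‖exp(-∫_{t-θ}^t λ)‖ d‖η t‖(θ) < 1
    (hbdd : IsBoundedUnder (· ≤ ·) atTop (fun t => ∫ θ in Set.Icc 0 r,
      θ * ‖Complex.exp (-(∫ s in (t - θ)..t, lam s))‖ ∂(ν t)))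
    (hV : limsup (fun t => ∫ θ in Set.Icc 0 r,
      θ * ‖Complex.exp (-(∫ s in (t - θ)..t, lam s))‖ ∂(ν t)) atTop < 1)
    -- x is a solution of the RFDE
    (x : ℝ → ℂ)
    (hxint : ∀ t, t₀ ≤ t →
      IntegrableOn (fun θ => x (t - θ) * h t θ) (Set.Icc 0 r) (ν t))
    (hx : ∀ t, t₀ ≤ t → HasDerivWithinAt x
      (∫ θ in Set.Icc 0 r, x (t - θ) * h t θ ∂(ν t)) (Set.Ici t₀) t) :
    ∃ y' : ℝ → ℂ,
      (∀ t, t₀ < t →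
        HasDerivAt (fun u => x u * Complex.exp (-(∫ s in t₀..u, lam s))) (y' t) t) ∧
      Tendsto y' atTop (𝓝 0) := by
  set g : ℝ → ℂ := fun t => Complex.exp (-(∫ s in t₀..t, lam s)) *
    ((∫ θ in Set.Icc 0 r, x (t - θ) * h t θ ∂(ν t)) - lam t * x t)
  have hderiv : ∀ t, t₀ < t →
      HasDerivAt (fun u => x u * Complex.exp (-(∫ s in t₀..u, lam s))) (g t) t := fun t ht =>
    ((hx t ht.le).hasDerivAt (Ici_mem_nhds ht)).mul_cexp_neg_integral
      (hlamc.mono Ioi_subset_Ici_self) (by linarith) (by linarith)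
  obtain ⟨q, hLq, hq1⟩ := exists_between hV
  obtain ⟨T, hT⟩ := eventually_atTop.1 (eventually_lt_of_limsup_lt hLq hbdd)
  have hB : BackwardSlopeBound (fun u => x u * Complex.exp (-(∫ s in t₀..u, lam s))) g r q
      (max T (t₀ + 2 * r)) := by
    intro t ht c hc hyc
    have ht₀ : t₀ ≤ t := by linarith [le_max_right T (t₀ + 2 * r)]
    have hnorm : ∀ᵐ θ ∂(ν t).restrict (Icc 0 r),
        θ * ‖Complex.exp (-(∫ s in (t - θ)..t, lam s)) * h t θ‖ =
          θ * ‖Complex.exp (-(∫ s in (t - θ)..t, lam s))‖ := by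
      filter_upwards [ae_restrict_of_ae (hh t ht₀)] with θ hθ
      rw [norm_mul, hθ, mul_one]
    rw [show g t = _ from cexp_neg_integral_mul_sub_eq_setIntegral hlamc (by linarith)
      (by linarith) (hxint t ht₀) (hlamint t ht₀) (hlam t ht₀)]
    calc _ ≤ c * ∫ θ in Icc 0 r, θ * ‖Complex.exp (-(∫ s in (t - θ)..t, lam s)) * h t θ‖ ∂(ν t) :=
          norm_setIntegral_mul_le (hlamint t ht₀) hyc
      _ ≤ c * q := by
          rw [integral_congr_ae hnorm]
          exact mul_le_mul_of_nonneg_left (hT t (le_of_max_le_left ht)).le hc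
      _ = q * c := mul_comm c q
  exact ⟨g, hderiv, hB.tendsto_zero hderiv (lt_max_of_lt_right (by linarith)) hr hq1⟩

theorem stmt1
    (r t₀ : ℝ) (hr : 0 < r)
    (ν : ℝ → Measure ℝ)
    (hfin : ∀ t, t₀ ≤ t → IsFiniteMeasure (ν t))
    (hsupp : ∀ t, t₀ ≤ t → ν t (Set.Icc 0 r)ᶜ = 0)
    (h : ℝ → ℝ → ℂ)
    (hh : ∀ t, t₀ ≤ t → ∀ᵐ θ ∂(ν t), ‖h t θ‖ = 1)
    -- λ is a solution of the generalized characteristic equation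
    (lam : ℝ → ℂ)
    (hlamc : ContinuousOn lam (Set.Ici (t₀ - r)))
    (hlamint : ∀ t, t₀ ≤ t → IntegrableOn
      (fun θ => Complex.exp (-(∫ s in (t - θ)..t, lam s)) * h t θ) (Set.Icc 0 r) (ν t))
    (hlam : ∀ t, t₀ ≤ t →
      lam t = ∫ θ in Set.Icc 0 r, Complex.exp (-(∫ s in (t - θ)..t, lam s)) * h t θ ∂(ν t))
    -- the smallness condition: limsup_{t→∞} ∫_0^r θ ‖exp(-∫_{t-θ}^t λ)‖ d‖η t‖(θ) < 1
    (hbdd : IsBoundedUnder (· ≤ ·) atTop (fun t => ∫ θ in Set.Icc 0 r,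
      θ * ‖Complex.exp (-(∫ s in (t - θ)..t, lam s))‖ ∂(ν t)))
    (hV : limsup (fun t => ∫ θ in Set.Icc 0 r,
      θ * ‖Complex.exp (-(∫ s in (t - θ)..t, lam s))‖ ∂(ν t)) atTop < 1)
    -- x is a solution of the RFDE
    (x : ℝ → ℂ)
    (hxc : ContinuousOn x (Set.Ici (t₀ - r)))
    (hxint : ∀ t, t₀ ≤ t →
      IntegrableOn (fun θ => x (t - θ) * h t θ) (Set.Icc 0 r) (ν t))
    (hx : ∀ t, t₀ ≤ t → HasDerivWithinAt x
      (∫ θ in Set.Icc 0 r, x (t - θ) * h t θ ∂(ν t)) (Set.Ici t₀) t) :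
    ∃ y' : ℝ → ℂ,
      (∀ t, t₀ < t →
        HasDerivAt (fun u => x u * Complex.exp (-(∫ s in t₀..u, lam s))) (y' t) t) ∧
      Tendsto y' atTop (𝓝 0) :=
  stmt1_general r t₀ hr ν h hh lam hlamc hlamint hlam hbdd hV x hxint hx
end

section
/- Let λ be a solution of the generalized characteristic equation such that limsup_{t→∞} ∫_0^r θ·|exp(−∫_{t−θ}^t λ(s) ds)| d‖η(t)‖(θ) < 1, and let x be a solution of the RFDE x'(t) = ∫_0^r x(t−θ) dη(t)(θ). If the limit L := lim_{t→∞} λ(t)·x(t)·exp(−∫_{t₀}^t λ(s) ds) exists, then lim_{t→∞} x'(t)·exp(−∫_{t₀}^t λ(s) ds) exists and equals L. -/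
/-!
Put `y(t) = x(t) e^{-∫_{t₀}^t λ}`. The characteristic equation turns the RFDE into
`y'(t) = ∫_0^r (y(t-θ) - y(t)) e^{-∫_{t-θ}^t λ} dη(t)(θ)`, so for large `t`, whenever
`‖y(t) - y(t-θ)‖ ≤ M θ` on `(0, r]`, we get `‖y'(t)‖ ≤ q M` for a fixed `q < 1` above the limsup.

Since `y'` is only a pointwise derivative, it is not a priori locally bounded. If `‖y'‖` were
unbounded to the right of some point, each large value would force, through this inequality and the
mean value inequality, an earlier value larger by a fixed factor; the resulting decreasing chain
contradicts differentiability at its limit. With local boundedness, a continuity argument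
propagates `‖y'‖ ≤ q D` to all later times, and iterating over windows of length `r` gives
`‖y'‖ ≤ qⁿ D` after `n` windows, so `y' → 0`. Finally
`x'(t) e^{-∫_{t₀}^t λ} = y'(t) + λ(t) x(t) e^{-∫_{t₀}^t λ} → L`.
-/

open MeasureTheory Filter Topology Set

section

variable {E : Type*} [NormedAddCommGroup E]

def BackwardLipschitzAt (y : ℝ → E) (r M t : ℝ) : Prop :=
  ∀ θ ∈ Ioc 0 r, ‖y t - y (t - θ)‖ ≤ M * θ

theorem mul_sub_le_of_steep_secant {f : ℝ → E} {s t v C K ε : ℝ} (hC : 0 ≤ C) (hε : 0 ≤ ε)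
    (hεC : ε * C ≤ K) (hst : s < t) (hvt : v < t) (hCt : ‖f t - f v‖ ≤ C * |t - v|)
    (hCs : ‖f s - f v‖ ≤ C * |s - v|) (hsteep : K * (t - s) < ε * ‖f t - f s‖) :
    K * (t - s) ≤ 2 * C * ε * (t - v) := by
  have htri : ‖f t - f s‖ ≤ C * |t - v| + C * |s - v| :=
    (norm_sub_le_norm_sub_add_norm_sub _ (f v) _).trans
      (add_le_add hCt (by rw [norm_sub_rev]; exact hCs))
  rw [abs_of_pos (sub_pos.2 hvt)] at htri
  rcases le_or_gt s v with hsv | hsv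
  · rw [abs_of_nonpos (sub_nonpos.2 hsv)] at htri
    have := mul_le_mul_of_nonneg_left htri hε
    have := mul_le_mul_of_nonneg_right hεC (sub_pos.2 hst).le
    nlinarith
  · rw [abs_of_pos (sub_pos.2 hsv)] at htri
    have := mul_le_mul_of_nonneg_left htri hε
    have := mul_le_mul_of_nonneg_left hst.le hC
    nlinarith

theorem false_of_chain {f : ℝ → E} {t s : ℕ → ℝ} {v C K q : ℝ} (hC : 0 ≤ C) (hK : 0 < K)
    (hq0 : 0 ≤ q) (hq1 : q < 1) (hst : ∀ n, s n ≤ t (n + 1)) (htt : ∀ n, t (n + 1) < t n)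
    (hv : Tendsto t atTop (𝓝 v)) (hCt : ∀ n, ‖f (t n) - f v‖ ≤ C * |t n - v|)
    (hCs : ∀ n, ‖f (s n) - f v‖ ≤ C * |s n - v|)
    (hgrow : ∀ n, K * (t n - s n) < q ^ n * ‖f (t n) - f (s n)‖) : False := by
  have hanti : Antitone t := antitone_nat_of_succ_le fun n => (htt n).le
  have hvt : ∀ n, v < t n := fun n => (hanti.le_of_tendsto hv (n + 1)).trans_lt (htt n)
  obtain ⟨k, hk⟩ := exists_pow_lt_of_lt_one
    (show 0 < K * (1 - q) / (4 * C + 1) by apply div_pos <;> nlinarith) hq1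
  have hqk : ∀ n, k ≤ n → 4 * C * q ^ n ≤ K * (1 - q) := fun n hn => by
    rw [lt_div_iff₀ (by linarith)] at hk
    nlinarith [pow_le_pow_of_le_one hq0 hq1.le hn, pow_nonneg hq0 n]
  -- Beyond `t k` the steps of `t` are geometrically small relative to `t k - v`,
  -- too small to add up to `t k - v`.
  have hdrop : ∀ m, dist (t (m + k)) (t (m + 1 + k)) ≤ 2 * C * (t k - v) / K * q ^ k * q ^ m := by
    intro m
    have hn : k ≤ m + k := Nat.le_add_left k m
    set n := m + k
    have hKn : K * (t n - s n) ≤ 2 * C * q ^ n * (t n - v) :=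
      mul_sub_le_of_steep_secant hC (pow_nonneg hq0 n)
        (by nlinarith [hqk n hn, pow_nonneg hq0 n]) ((hst n).trans_lt (htt n)) (hvt n)
        (hCt n) (hCs n) (hgrow n)
    have := mul_le_mul_of_nonneg_left (sub_le_sub_right (hanti hn) v)
      (by positivity : 0 ≤ 2 * C * q ^ n)
    rw [show m + 1 + k = n + 1 by omega, Real.dist_eq, abs_of_pos (sub_pos.2 (htt n)),
      mul_assoc, ← pow_add, div_mul_eq_mul_div, le_div_iff₀ hK, add_comm k m]
    nlinarith [hst n]
  have hlim :=
    dist_le_of_le_geometric_of_tendsto₀ q _ hq1 hdrop ((tendsto_add_atTop_iff_nat k).2 hv)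
  rw [zero_add, Real.dist_eq, abs_of_pos (sub_pos.2 (hvt k)), le_div_iff₀ (sub_pos.2 hq1),
    div_mul_eq_mul_div, le_div_iff₀ hK] at hlim
  have := mul_le_mul_of_nonneg_left (hqk k le_rfl) (sub_pos.2 (hvt k)).le
  nlinarith [mul_pos (sub_pos.2 (hvt k)) (mul_pos (sub_pos.2 hq1) hK)]

variable [NormedSpace ℝ E]

theorem exists_norm_sub_le_mul_abs_of_hasDerivAt {f : ℝ → E} {f' : E} {a b c : ℝ}
    (hf : ContinuousOn f (Icc a b)) (hc : HasDerivAt f f' c) :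
    ∃ M, 0 ≤ M ∧ ∀ x ∈ Icc a b, ‖f x - f c‖ ≤ M * |x - c| := by
  obtain ⟨K, hK0, hK⟩ := hc.isBigO_sub.exists_nonneg
  obtain ⟨δ, hδ, hnear⟩ := Metric.eventually_nhds_iff.1 hK.bound
  obtain ⟨B, hB⟩ := isCompact_Icc.exists_bound_of_continuousOn (hf.sub continuousOn_const)
  refine ⟨max K (max B 0 / δ), le_max_of_le_left hK0, fun x hx => ?_⟩
  rcases lt_or_ge (dist x c) δ with hxc | hxc
  · calc ‖f x - f c‖ ≤ K * |x - c| := hnear hxc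
      _ ≤ _ := by gcongr; exact le_max_left _ _
  · rw [Real.dist_eq] at hxc
    calc ‖f x - f c‖ ≤ max B 0 := (hB x hx).trans (le_max_left _ _)
      _ = max B 0 / δ * δ := by field_simp
      _ ≤ max B 0 / δ * |x - c| := by gcongr
      _ ≤ _ := by gcongr; exact le_max_right _ _

structure RetardedDerivBound (y y' : ℝ → E) (r q T : ℝ) : Prop where
  delay_nonneg : 0 ≤ r
  hasDerivAt : ∀ t, T - r ≤ t → HasDerivAt y (y' t) t
  norm_deriv_le : ∀ t, T ≤ t → ∀ M, 0 ≤ M → BackwardLipschitzAt y r M t → ‖y' t‖ ≤ q * M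

namespace RetardedDerivBound

variable {y y' : ℝ → E} {r q T : ℝ}

theorem continuousOn (h : RetardedDerivBound y y' r q T) {a b : ℝ} (ha : T - r ≤ a) :
    ContinuousOn y (Icc a b) :=
  fun x hx => (h.hasDerivAt x (ha.trans hx.1)).continuousAt.continuousWithinAt

theorem exists_norm_sub_le_mul_abs (h : RetardedDerivBound y y' r q T) {a b c : ℝ}
    (ha : T - r ≤ a) (hc : T - r ≤ c) :
    ∃ M, 0 ≤ M ∧ ∀ x ∈ Icc a b, ‖y x - y c‖ ≤ M * |x - c| :=
  exists_norm_sub_le_mul_abs_of_hasDerivAt (h.continuousOn ha) (h.hasDerivAt c hc)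

theorem norm_sub_le_of_norm_deriv_le (h : RetardedDerivBound y y' r q T) {a b C : ℝ}
    (ha : T - r ≤ a) (hab : a ≤ b) (hC : ∀ c ∈ Ico a b, ‖y' c‖ ≤ C) :
    ‖y b - y a‖ ≤ C * (b - a) :=
  norm_image_sub_le_of_norm_deriv_le_segment'
    (fun c hc => (h.hasDerivAt c (ha.trans hc.1)).hasDerivWithinAt) hC b ⟨hab, le_rfl⟩

theorem exists_lt_norm_deriv (h : RetardedDerivBound y y' r q T) {a b C : ℝ}
    (ha : T - r ≤ a) (hab : a ≤ b) (hlt : C * (b - a) < ‖y b - y a‖) :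
    ∃ c ∈ Ico a b, C < ‖y' c‖ := by
  by_contra! hC
  exact hlt.not_ge (h.norm_sub_le_of_norm_deriv_le ha hab hC)

theorem exists_backwardLipschitzAt (h : RetardedDerivBound y y' r q T) {t : ℝ} (ht : T ≤ t) :
    ∃ D, 0 ≤ D ∧ BackwardLipschitzAt y r D t := by
  have hr := h.delay_nonneg
  obtain ⟨D, hD, hlip⟩ := h.exists_norm_sub_le_mul_abs (a := t - r) (b := t) (c := t)
    (by linarith) (by linarith)
  refine ⟨D, hD, fun θ hθ => ?_⟩
  have := hlip (t - θ) ⟨by linarith [hθ.2], by linarith [hθ.1]⟩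
  rwa [norm_sub_rev, sub_sub_cancel_left, abs_neg, abs_of_pos hθ.1] at this

theorem backwardLipschitzAt_of_norm_deriv_le (h : RetardedDerivBound y y' r q T) {w s D M : ℝ}
    (hw : T ≤ w) (hws : w ≤ s) (hD : BackwardLipschitzAt y r D w)
    (hM : ∀ c ∈ Ico w s, ‖y' c‖ ≤ M) : BackwardLipschitzAt y r (max M D) s := by
  intro θ hθ
  rcases le_or_gt w (s - θ) with hwθ | hθw
  · have := h.norm_sub_le_of_norm_deriv_le (a := s - θ) (b := s) (by linarith [hθ.2])
      (by linarith [hθ.1]) fun c hc => hM c ⟨hwθ.trans hc.1, hc.2⟩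
    rw [sub_sub_cancel] at this
    exact this.trans (by gcongr; exacts [hθ.1.le, le_max_left _ _])
  · have hws' := h.norm_sub_le_of_norm_deriv_le (by linarith [hθ.1, hθ.2]) hws hM
    have hwD := hD (w - (s - θ)) ⟨by linarith, by linarith [hθ.2]⟩
    rw [sub_sub_cancel] at hwD
    calc ‖y s - y (s - θ)‖ ≤ ‖y s - y w‖ + ‖y w - y (s - θ)‖ :=
          norm_sub_le_norm_sub_add_norm_sub _ _ _
      _ ≤ M * (s - w) + D * (w - (s - θ)) := add_le_add hws' hwD
      _ ≤ max M D * (s - w) + max M D * (w - (s - θ)) :=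
          add_le_add (mul_le_mul_of_nonneg_right (le_max_left _ _) (by linarith))
            (mul_le_mul_of_nonneg_right (le_max_right _ _) (by linarith))
      _ = max M D * θ := by ring

theorem exists_chain_step (h : RetardedDerivBound y y' r q T) {u b q₂ C₁ t : ℝ} (hq : q < q₂)
    (hq₂ : 0 < q₂) (hu : T ≤ u) (hC₁0 : 0 ≤ C₁)
    (hC₁ : ∀ x ∈ Icc (u - r) b, ‖y x - y u‖ ≤ C₁ * |x - u|) (ht : t ∈ Ico u b)
    (hlarge : q₂ * C₁ < ‖y' t‖) :
    ∃ s c, u < s ∧ t - r ≤ s ∧ s ≤ c ∧ c < t ∧ ‖y' t‖ < q₂ * ‖y' c‖ ∧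
      ‖y' t‖ * (t - s) < q₂ * ‖y t - y s‖ := by
  set M := ‖y' t‖ / q₂ with hM
  have hMpos : 0 < M := div_pos ((mul_nonneg hq₂.le hC₁0).trans_lt hlarge) hq₂
  have hqM : q * M < ‖y' t‖ :=
    (mul_lt_mul_of_pos_right hq hMpos).trans_eq (mul_div_cancel₀ _ hq₂.ne')
  obtain ⟨θ, hθ, hθM⟩ : ∃ θ ∈ Ioc 0 r, M * θ < ‖y t - y (t - θ)‖ := by
    by_contra! hB
    exact hqM.not_ge (h.norm_deriv_le t (hu.trans ht.1) M hMpos.le hB)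
  have hus : u < t - θ := by
    by_contra! hle
    have hC₁θ : ‖y t - y (t - θ)‖ ≤ C₁ * θ :=
      calc ‖y t - y (t - θ)‖ ≤ ‖y t - y u‖ + ‖y (t - θ) - y u‖ := by
            rw [norm_sub_rev (y (t - θ))]; exact norm_sub_le_norm_sub_add_norm_sub _ _ _
        _ ≤ C₁ * |t - u| + C₁ * |t - θ - u| :=
            add_le_add (hC₁ t ⟨by linarith [ht.1, h.delay_nonneg], ht.2.le⟩)
              (hC₁ (t - θ) ⟨by linarith [ht.1, hθ.2], by linarith [ht.2, hθ.1]⟩)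
        _ = C₁ * θ := by
            rw [abs_of_nonneg (by linarith [ht.1]), abs_of_nonpos (by linarith)]; ring
    have hMC : M < C₁ := lt_of_mul_lt_mul_right (hθM.trans_le hC₁θ) hθ.1.le
    rw [hM, div_lt_iff₀' hq₂] at hMC
    linarith
  obtain ⟨c, hc, hMc⟩ := h.exists_lt_norm_deriv (a := t - θ) (b := t) (C := M)
    (by linarith [hu, ht.1, hθ.2]) (by linarith [hθ.1]) (by rwa [sub_sub_cancel])
  refine ⟨t - θ, c, hus, by linarith [hθ.2], hc.1, hc.2, ?_, ?_⟩
  · calc ‖y' t‖ = q₂ * M := (mul_div_cancel₀ _ hq₂.ne').symm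
      _ < q₂ * ‖y' c‖ := mul_lt_mul_of_pos_left hMc hq₂
  · calc ‖y' t‖ * (t - (t - θ)) = q₂ * (M * θ) := by rw [hM]; field_simp; ring
      _ < q₂ * ‖y t - y (t - θ)‖ := mul_lt_mul_of_pos_left hθM hq₂

theorem exists_chain (h : RetardedDerivBound y y' r q T) (hq1 : q < 1) {u : ℝ} (hu : T ≤ u)
    (hunb : ∀ C, ∃ t ∈ Ico u (u + 1), C < ‖y' t‖) :
    ∃ q₂ Γ : ℝ, ∃ t s : ℕ → ℝ, 0 ≤ q₂ ∧ q₂ < 1 ∧ 0 < Γ ∧ ∀ n, u ≤ t n ∧ t n < u + 1 ∧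
      t n - r ≤ s n ∧ s n ≤ t (n + 1) ∧ t (n + 1) < t n ∧
      Γ * (t n - s n) < q₂ ^ n * ‖y (t n) - y (s n)‖ := by
  obtain ⟨q₂, hq₂, hq₂1⟩ := exists_between (max_lt hq1 one_pos)
  have hq₂0 : 0 < q₂ := (le_max_right q 0).trans_lt hq₂
  obtain ⟨C₁, hC₁0, hC₁⟩ := h.exists_norm_sub_le_mul_abs (a := u - r) (b := u + 1) (c := u)
    (by linarith) (by linarith [h.delay_nonneg])
  set Γ := q₂ * C₁ + 1
  have hΓ : 0 < Γ := by positivity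
  have hstep : ∀ t ∈ Ico u (u + 1), Γ ≤ ‖y' t‖ → ∃ s c, u < s ∧ t - r ≤ s ∧ s ≤ c ∧ c < t ∧
      ‖y' t‖ < q₂ * ‖y' c‖ ∧ ‖y' t‖ * (t - s) < q₂ * ‖y t - y s‖ := fun t ht hΓt =>
    h.exists_chain_step ((le_max_left q 0).trans_lt hq₂) hq₂0 hu hC₁0 hC₁ ht (by linarith)
  choose! s c hsc using hstep
  obtain ⟨t₁, ht₁, hΓt₁⟩ := hunb Γ
  set t : ℕ → ℝ := fun n => c^[n] t₁
  have ht_succ : ∀ n, t (n + 1) = c (t n) := fun n => Function.iterate_succ_apply' c n t₁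
  have hΓ_le : ∀ n, Γ ≤ q₂ ^ n * ‖y' (t n)‖ → Γ ≤ ‖y' (t n)‖ := fun n hn =>
    hn.trans (mul_le_of_le_one_left (norm_nonneg _) (pow_le_one₀ hq₂0.le hq₂1.le))
  have hinv : ∀ n, t n ∈ Ico u (u + 1) ∧ Γ ≤ q₂ ^ n * ‖y' (t n)‖ := by
    intro n
    induction n with
    | zero => exact ⟨ht₁, by simpa [t] using hΓt₁.le⟩
    | succ n ih =>
      obtain ⟨hus, -, hsc', hct, hgrow, -⟩ := hsc (t n) ih.1 (hΓ_le n ih.2)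
      rw [ht_succ]
      refine ⟨⟨by linarith, by linarith [ih.1.2]⟩, ?_⟩
      calc Γ ≤ q₂ ^ n * ‖y' (t n)‖ := ih.2
        _ ≤ q₂ ^ n * (q₂ * ‖y' (c (t n))‖) := by gcongr
        _ = q₂ ^ (n + 1) * ‖y' (c (t n))‖ := by ring
  refine ⟨q₂, Γ, t, fun n => s (t n), hq₂0.le, hq₂1, hΓ, fun n => ?_⟩
  obtain ⟨hus, hts, hsc', hct, -, hgrow⟩ := hsc (t n) (hinv n).1 (hΓ_le n (hinv n).2)
  rw [ht_succ]
  refine ⟨(hinv n).1.1, (hinv n).1.2, hts, hsc', hct, ?_⟩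
  calc Γ * (t n - s (t n)) ≤ q₂ ^ n * (‖y' (t n)‖ * (t n - s (t n))) := by
        rw [← mul_assoc]; gcongr; exacts [by linarith, (hinv n).2]
    _ < q₂ ^ n * (q₂ * ‖y (t n) - y (s (t n))‖) := by gcongr
    _ ≤ q₂ ^ n * ‖y (t n) - y (s (t n))‖ := by
        gcongr; exact mul_le_of_le_one_left (norm_nonneg _) hq₂1.le

theorem exists_norm_deriv_bound_Ico (h : RetardedDerivBound y y' r q T) (hq1 : q < 1) {u : ℝ}
    (hu : T ≤ u) :
    ∃ δ > 0, ∃ C, ∀ s ∈ Ico u (u + δ), ‖y' s‖ ≤ C := by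
  by_contra! hunb
  obtain ⟨q₂, Γ, t, s, hq₂0, hq₂1, hΓ, ht⟩ := h.exists_chain hq1 hu (hunb 1 one_pos)
  have hanti : Antitone t := antitone_nat_of_succ_le fun n => (ht n).2.2.2.2.1.le
  have hbdd : BddBelow (range t) := ⟨u, by rintro _ ⟨n, rfl⟩; exact (ht n).1⟩
  set v := ⨅ n, t n
  have hvt : ∀ n, v ≤ t n := ciInf_le hbdd
  have huv : u ≤ v := le_ciInf fun n => (ht n).1
  have hr := h.delay_nonneg
  obtain ⟨C, hC0, hC⟩ := h.exists_norm_sub_le_mul_abs (a := v - r) (b := u + 1) (c := v)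
    (by linarith) (by linarith)
  refine false_of_chain hC0 hΓ hq₂0 hq₂1 (fun n => (ht n).2.2.2.1) (fun n => (ht n).2.2.2.2.1)
    (tendsto_atTop_ciInf hanti hbdd) (fun n => hC _ ⟨by linarith [hvt n], (ht n).2.1.le⟩)
    (fun n => hC _ ⟨by linarith [hvt n, (ht n).2.2.1], ?_⟩) (fun n => (ht n).2.2.2.2.2)
  linarith [(ht n).2.2.2.1, (ht (n + 1)).2.1]

theorem norm_deriv_le_of_bound_Ico (h : RetardedDerivBound y y' r q T) (hq0 : 0 ≤ q)
    (hq1 : q < 1) {u δ C D : ℝ} (hu : T ≤ u) (hD : 0 ≤ D) (hB : BackwardLipschitzAt y r D u)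
    (hC : ∀ s ∈ Ico u (u + δ), ‖y' s‖ ≤ C) : ∀ s ∈ Ico u (u + δ), ‖y' s‖ ≤ q * D := by
  have hbound : ∀ n : ℕ, ∀ s ∈ Ico u (u + δ), ‖y' s‖ ≤ max (q ^ n * C) (q * D) := by
    intro n
    induction n with
    | zero => exact fun s hs => by simpa using le_max_of_le_left (hC s hs)
    | succ n ih =>
      intro s hs
      have hBs := h.backwardLipschitzAt_of_norm_deriv_le hu hs.1 hB
        fun c hc => ih c ⟨hc.1, hc.2.trans hs.2⟩
      calc ‖y' s‖ ≤ q * max (max (q ^ n * C) (q * D)) D :=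
            h.norm_deriv_le s (hu.trans hs.1) _ (le_max_of_le_right hD) hBs
        _ = max (q ^ (n + 1) * C) (q * D) := by
            rw [max_assoc, max_eq_right (mul_le_of_le_one_left hD hq1.le),
              mul_max_of_nonneg _ _ hq0, pow_succ', mul_assoc]
  intro s hs
  have hlim : Tendsto (fun n : ℕ => max (q ^ n * C) (q * D)) atTop (𝓝 (max (0 * C) (q * D))) :=
    ((tendsto_pow_atTop_nhds_zero_of_lt_one hq0 hq1).mul_const C).max tendsto_const_nhds
  rw [zero_mul, max_eq_right (mul_nonneg hq0 hD)] at hlim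
  exact ge_of_tendsto' hlim fun n => hbound n s hs

theorem norm_deriv_le_of_backwardLipschitzAt (h : RetardedDerivBound y y' r q T) (hq0 : 0 ≤ q)
    (hq1 : q < 1) {D : ℝ} (hD : 0 ≤ D) (hB : BackwardLipschitzAt y r D T) :
    ∀ s, T ≤ s → ‖y' s‖ ≤ q * D := by
  by_contra! hbad
  set Bad := {s | T ≤ s ∧ q * D < ‖y' s‖}
  have hne : Bad.Nonempty := hbad
  have hbdd : BddBelow Bad := ⟨T, fun s hs => hs.1⟩
  have hTu : T ≤ sInf Bad := le_csInf hne fun s hs => hs.1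
  have hgood : ∀ s ∈ Ico T (sInf Bad), ‖y' s‖ ≤ q * D := fun s hs =>
    not_lt.1 fun hlt => notMem_of_lt_csInf hs.2 hbdd ⟨hs.1, hlt⟩
  have hBu : BackwardLipschitzAt y r D (sInf Bad) := by
    simpa [max_eq_right (mul_le_of_le_one_left hD hq1.le)] using
      h.backwardLipschitzAt_of_norm_deriv_le le_rfl hTu hB hgood
  obtain ⟨δ, hδ, C, hC⟩ := h.exists_norm_deriv_bound_Ico hq1 hTu
  have hright := h.norm_deriv_le_of_bound_Ico hq0 hq1 hTu hD hBu hC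
  obtain ⟨s, hs, hsu⟩ := exists_lt_of_csInf_lt hne (lt_add_of_pos_right (sInf Bad) hδ)
  exact hs.2.not_ge (hright s ⟨csInf_le hbdd hs, hsu⟩)

theorem norm_deriv_le_pow (h : RetardedDerivBound y y' r q T) (hq0 : 0 ≤ q) (hq1 : q < 1)
    {D : ℝ} (hD : 0 ≤ D) (hB : BackwardLipschitzAt y r D T) (n : ℕ) :
    ∀ s, T + n * r ≤ s → ‖y' s‖ ≤ q ^ n * D := by
  have hr := h.delay_nonneg
  induction n with
  | zero =>
    intro s hs
    rw [pow_zero, one_mul]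
    exact (h.norm_deriv_le_of_backwardLipschitzAt hq0 hq1 hD hB s (by simpa using hs)).trans
      (mul_le_of_le_one_left hD hq1.le)
  | succ n ih =>
    intro s hs
    push_cast at hs
    have hnr : 0 ≤ (n : ℝ) * r := by positivity
    have hBs : BackwardLipschitzAt y r (q ^ n * D) s := fun θ hθ => by
      have := h.norm_sub_le_of_norm_deriv_le (a := s - θ) (b := s) (by linarith [hθ.2])
        (by linarith [hθ.1]) fun c hc => ih c (by linarith [hc.1, hθ.2])
      rwa [sub_sub_cancel] at this
    calc ‖y' s‖ ≤ q * (q ^ n * D) :=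
          h.norm_deriv_le s (by linarith) _ (by positivity) hBs
      _ = q ^ (n + 1) * D := by ring

theorem tendsto_deriv_zero (h : RetardedDerivBound y y' r q T) (hq0 : 0 ≤ q) (hq1 : q < 1) :
    Tendsto y' atTop (𝓝 0) := by
  obtain ⟨D, hD, hB⟩ := h.exists_backwardLipschitzAt le_rfl
  refine Metric.tendsto_atTop.2 fun ε hε => ?_
  obtain ⟨n, hn⟩ := (((tendsto_pow_atTop_nhds_zero_of_lt_one hq0 hq1).mul_const D).eventually
    (gt_mem_nhds (by rwa [zero_mul]))).exists
  exact ⟨T + n * r, fun s hs => by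
    rw [dist_zero_right]; exact (h.norm_deriv_le_pow hq0 hq1 hD hB n s hs).trans_lt hn⟩

end RetardedDerivBound

end

theorem hasDerivAt_integral_of_continuousOn_Ici {F : Type*} [NormedAddCommGroup F]
    [NormedSpace ℝ F] [CompleteSpace F] {f : ℝ → F} {a b t : ℝ} (hf : ContinuousOn f (Ici a))
    (hb : a ≤ b) (ht : a < t) : HasDerivAt (fun u => ∫ s in b..u, f s) (f t) t :=
  intervalIntegral.integral_hasDerivAt_right
    ((hf.mono fun _ hx => (le_min hb ht.le).trans hx.1).intervalIntegrable)
    ((hf.mono Ioi_subset_Ici_self).stronglyMeasurableAtFilter isOpen_Ioi t ht)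
    (hf.continuousAt (Ici_mem_nhds ht))

theorem HasDerivAt.mul_cexp_neg {f g : ℝ → ℂ} {f' g' : ℂ} {t : ℝ} (hf : HasDerivAt f f' t)
    (hg : HasDerivAt g g' t) :
    HasDerivAt (fun u => f u * Complex.exp (-g u)) ((f' - g' * f t) * Complex.exp (-g t)) t :=
  (hf.mul hg.neg.cexp).congr_deriv (by simp only [Pi.neg_apply]; ring)

theorem norm_setIntegral_mul_le_s2 {μ : Measure ℝ} [IsFiniteMeasure μ] {r M : ℝ} {F e k : ℝ → ℂ}
    (he : ContinuousOn e (Icc 0 r)) (hk : ∀ᵐ θ ∂μ, ‖k θ‖ = 1)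
    (hF : ∀ θ ∈ Icc 0 r, ‖F θ‖ ≤ M * θ) :
    ‖∫ θ in Icc 0 r, F θ * e θ * k θ ∂μ‖ ≤ M * ∫ θ in Icc 0 r, θ * ‖e θ‖ ∂μ := by
  rw [← integral_const_mul]
  refine norm_integral_le_of_norm_le ((continuousOn_const.mul
    (continuousOn_id.mul he.norm)).integrableOn_compact isCompact_Icc) ?_
  filter_upwards [ae_restrict_mem measurableSet_Icc, ae_restrict_of_ae hk] with θ hθ hkθ
  rw [norm_mul, norm_mul, hkθ, mul_one, ← mul_assoc]
  exact mul_le_mul_of_nonneg_right (hF θ hθ) (norm_nonneg _)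

noncomputable def renormalized (lam x : ℝ → ℂ) (t₀ u : ℝ) : ℂ :=
  x u * Complex.exp (-∫ s in t₀..u, lam s)

section RFDE

variable {r t₀ t : ℝ} {μ : Measure ℝ} {k lam x : ℝ → ℂ} {x't : ℂ}

theorem renormalized_deriv_eq_integral (hr : 0 ≤ r) (hlamc : ContinuousOn lam (Ici (t₀ - r)))
    (ht : t₀ ≤ t)
    (hlamint : IntegrableOn (fun θ => Complex.exp (-(∫ s in (t - θ)..t, lam s)) * k θ)
      (Icc 0 r) μ)
    (hlam : lam t = ∫ θ in Icc 0 r, Complex.exp (-(∫ s in (t - θ)..t, lam s)) * k θ ∂μ)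
    (hxint : IntegrableOn (fun θ => x (t - θ) * k θ) (Icc 0 r) μ)
    (hxeq : x't = ∫ θ in Icc 0 r, x (t - θ) * k θ ∂μ) :
    (x't - lam t * x t) * Complex.exp (-∫ s in t₀..t, lam s) =
      ∫ θ in Icc 0 r, (renormalized lam x t₀ (t - θ) - renormalized lam x t₀ t) *
        Complex.exp (-(∫ s in (t - θ)..t, lam s)) * k θ ∂μ := by
  have hii : ∀ a, t₀ - r ≤ a → IntervalIntegrable lam volume t₀ a := fun a ha =>
    (hlamc.mono fun _ hx => (le_min (by linarith) ha).trans hx.1).intervalIntegrable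
  rw [hxeq, hlam, ← integral_mul_const, ← integral_sub hxint (hlamint.mul_const _),
    ← integral_mul_const]
  refine setIntegral_congr_fun measurableSet_Icc fun θ hθ => ?_
  have hsplit : Complex.exp (-∫ s in t₀..t, lam s) = Complex.exp (-∫ s in t₀..(t - θ), lam s) *
      Complex.exp (-∫ s in (t - θ)..t, lam s) := by
    rw [← Complex.exp_add, ← intervalIntegral.integral_interval_sub_left (hii t (by linarith))
      (hii (t - θ) (by linarith [hθ.2]))]
    congr 1
    ring
  simp only [renormalized, hsplit]
  ring

theorem norm_renormalized_deriv_le [IsFiniteMeasure μ] (hr : 0 ≤ r)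
    (hlamc : ContinuousOn lam (Ici (t₀ - r))) (ht : t₀ ≤ t) (hk : ∀ᵐ θ ∂μ, ‖k θ‖ = 1)
    (hlamint : IntegrableOn (fun θ => Complex.exp (-(∫ s in (t - θ)..t, lam s)) * k θ)
      (Icc 0 r) μ)
    (hlam : lam t = ∫ θ in Icc 0 r, Complex.exp (-(∫ s in (t - θ)..t, lam s)) * k θ ∂μ)
    (hxint : IntegrableOn (fun θ => x (t - θ) * k θ) (Icc 0 r) μ)
    (hxeq : x't = ∫ θ in Icc 0 r, x (t - θ) * k θ ∂μ) {M : ℝ}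
    (hB : BackwardLipschitzAt (renormalized lam x t₀) r M t) :
    ‖(x't - lam t * x t) * Complex.exp (-∫ s in t₀..t, lam s)‖ ≤
      M * ∫ θ in Icc 0 r, θ * ‖Complex.exp (-(∫ s in (t - θ)..t, lam s))‖ ∂μ := by
  rw [renormalized_deriv_eq_integral hr hlamc ht hlamint hlam hxint hxeq]
  refine norm_setIntegral_mul_le_s2 ?_ hk fun θ hθ => ?_
  · have hsub : uIcc (t - r) t ⊆ Ici (t₀ - r) := fun _ hx =>
      (le_min (by linarith) (by linarith)).trans hx.1
    have hint : ContinuousOn (fun a => ∫ s in a..t, lam s) (uIcc (t - r) t) :=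
      intervalIntegral.continuousOn_primitive_interval_left
        ((hlamc.mono hsub).integrableOn_compact isCompact_uIcc)
    refine (hint.comp (continuousOn_const.sub continuousOn_id) fun θ hθ => ?_).neg.cexp
    rw [uIcc_of_le (by linarith [hθ.1, hθ.2])]
    exact ⟨show t - r ≤ t - θ by linarith [hθ.2], show t - θ ≤ t by linarith [hθ.1]⟩
  · rcases hθ.1.eq_or_lt with rfl | hθ0
    · simp
    · rw [norm_sub_rev]
      exact hB θ ⟨hθ0, hθ.2⟩

end RFDE

/- `η t` is encoded in polar form `dη(t) = h t dν(t)`, with `ν t` finite and `‖h t θ‖ = 1`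
for `ν t`-a.e. `θ`, so that `‖η t‖ = ν t`; all integrals over `θ` are taken on `[0, r]`. -/
theorem stmt2_general
    (r t₀ : ℝ) (hr : 0 < r)
    (ν : ℝ → Measure ℝ)
    (hfin : ∀ t, t₀ ≤ t → IsFiniteMeasure (ν t))
    (h : ℝ → ℝ → ℂ)
    (hh : ∀ t, t₀ ≤ t → ∀ᵐ θ ∂(ν t), ‖h t θ‖ = 1)
    -- λ is a solution of the generalized characteristic equation
    (lam : ℝ → ℂ)
    (hlamc : ContinuousOn lam (Set.Ici (t₀ - r)))
    (hlamint : ∀ t, t₀ ≤ t → IntegrableOn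
      (fun θ => Complex.exp (-(∫ s in (t - θ)..t, lam s)) * h t θ) (Set.Icc 0 r) (ν t))
    (hlam : ∀ t, t₀ ≤ t →
      lam t = ∫ θ in Set.Icc 0 r, Complex.exp (-(∫ s in (t - θ)..t, lam s)) * h t θ ∂(ν t))
    -- the smallness condition: limsup_{t→∞} ∫_0^r θ ‖exp(-∫_{t-θ}^t λ)‖ d‖η t‖(θ) < 1
    (hbdd : IsBoundedUnder (· ≤ ·) atTop (fun t => ∫ θ in Set.Icc 0 r,
      θ * ‖Complex.exp (-(∫ s in (t - θ)..t, lam s))‖ ∂(ν t)))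
    (hV : limsup (fun t => ∫ θ in Set.Icc 0 r,
      θ * ‖Complex.exp (-(∫ s in (t - θ)..t, lam s))‖ ∂(ν t)) atTop < 1)
    -- x is a solution of the RFDE
    (x : ℝ → ℂ)
    (hxint : ∀ t, t₀ ≤ t →
      IntegrableOn (fun θ => x (t - θ) * h t θ) (Set.Icc 0 r) (ν t))
    (x' : ℝ → ℂ)
    (hx : ∀ t, t₀ ≤ t → HasDerivWithinAt x (x' t) (Set.Ici t₀) t)
    (hxeq : ∀ t, t₀ ≤ t →
      x' t = ∫ θ in Set.Icc 0 r, x (t - θ) * h t θ ∂(ν t))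
    -- the limit L of λ(t)·x(t)·exp(-∫_{t₀}^t λ) exists
    (L : ℂ)
    (hL : Tendsto (fun t => lam t * x t * Complex.exp (-(∫ s in t₀..t, lam s)))
      atTop (𝓝 L)) :
    Tendsto (fun t => x' t * Complex.exp (-(∫ s in t₀..t, lam s))) atTop (𝓝 L) := by
  obtain ⟨q, hVq, hq1⟩ := exists_between hV
  obtain ⟨T', hT'⟩ := eventually_atTop.1 (eventually_lt_of_limsup_lt hVq hbdd)
  have hq0 : 0 ≤ q := (setIntegral_nonneg measurableSet_Icc fun θ hθ =>
    mul_nonneg hθ.1 (norm_nonneg _)).trans (hT' T' le_rfl).le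
  set T := max T' (t₀ + r + 1)
  have hT : t₀ + r + 1 ≤ T := le_max_right _ _
  have hy : RetardedDerivBound (renormalized lam x t₀)
      (fun u => (x' u - lam u * x u) * Complex.exp (-∫ s in t₀..u, lam s)) r q T :=
    { delay_nonneg := hr.le
      hasDerivAt := fun t ht =>
        ((hx t (by linarith)).hasDerivAt (Ici_mem_nhds (by linarith))).mul_cexp_neg
          (hasDerivAt_integral_of_continuousOn_Ici hlamc (by linarith) (by linarith))
      norm_deriv_le := fun t ht M hM hB => by
        have ht₀ : t₀ ≤ t := by linarith
        have := hfin t ht₀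
        calc _ ≤ M * _ := norm_renormalized_deriv_le hr.le hlamc ht₀ (hh t ht₀) (hlamint t ht₀)
              (hlam t ht₀) (hxint t ht₀) (hxeq t ht₀) hB
          _ ≤ M * q := mul_le_mul_of_nonneg_left (hT' t ((le_max_left _ _).trans ht)).le hM
          _ = q * M := mul_comm _ _ }
  have hsum := (hy.tendsto_deriv_zero hq0 hq1).add hL
  rw [zero_add] at hsum
  exact hsum.congr fun t => by ring

theorem stmt2
    (r t₀ : ℝ) (hr : 0 < r)
    (ν : ℝ → Measure ℝ)
    (hfin : ∀ t, t₀ ≤ t → IsFiniteMeasure (ν t))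
    (hsupp : ∀ t, t₀ ≤ t → ν t (Set.Icc 0 r)ᶜ = 0)
    (h : ℝ → ℝ → ℂ)
    (hh : ∀ t, t₀ ≤ t → ∀ᵐ θ ∂(ν t), ‖h t θ‖ = 1)
    -- λ is a solution of the generalized characteristic equation
    (lam : ℝ → ℂ)
    (hlamc : ContinuousOn lam (Set.Ici (t₀ - r)))
    (hlamint : ∀ t, t₀ ≤ t → IntegrableOn
      (fun θ => Complex.exp (-(∫ s in (t - θ)..t, lam s)) * h t θ) (Set.Icc 0 r) (ν t))
    (hlam : ∀ t, t₀ ≤ t →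
      lam t = ∫ θ in Set.Icc 0 r, Complex.exp (-(∫ s in (t - θ)..t, lam s)) * h t θ ∂(ν t))
    -- the smallness condition: limsup_{t→∞} ∫_0^r θ ‖exp(-∫_{t-θ}^t λ)‖ d‖η t‖(θ) < 1
    (hbdd : IsBoundedUnder (· ≤ ·) atTop (fun t => ∫ θ in Set.Icc 0 r,
      θ * ‖Complex.exp (-(∫ s in (t - θ)..t, lam s))‖ ∂(ν t)))
    (hV : limsup (fun t => ∫ θ in Set.Icc 0 r,
      θ * ‖Complex.exp (-(∫ s in (t - θ)..t, lam s))‖ ∂(ν t)) atTop < 1)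
    -- x is a solution of the RFDE
    (x : ℝ → ℂ)
    (hxc : ContinuousOn x (Set.Ici (t₀ - r)))
    (hxint : ∀ t, t₀ ≤ t →
      IntegrableOn (fun θ => x (t - θ) * h t θ) (Set.Icc 0 r) (ν t))
    (x' : ℝ → ℂ)
    (hx : ∀ t, t₀ ≤ t → HasDerivWithinAt x (x' t) (Set.Ici t₀) t)
    (hxeq : ∀ t, t₀ ≤ t →
      x' t = ∫ θ in Set.Icc 0 r, x (t - θ) * h t θ ∂(ν t))
    -- the limit L of λ(t)·x(t)·exp(-∫_{t₀}^t λ) exists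
    (L : ℂ)
    (hL : Tendsto (fun t => lam t * x t * Complex.exp (-(∫ s in t₀..t, lam s)))
      atTop (𝓝 L)) :
    Tendsto (fun t => x' t * Complex.exp (-(∫ s in t₀..t, lam s))) atTop (𝓝 L) :=
  stmt2_general r t₀ hr ν hfin h hh lam hlamc hlamint hlam hbdd hV x hxint x' hx hxeq L hL
end

section
/- If λ is a solution of the generalized characteristic equation, then the function x : [t₀−r, ∞) → ℂ defined by x(t) = exp(∫_{t₀}^t λ(s) ds) is a solution of the RFDE x'(t) = ∫_0^r x(t−θ) dη(t)(θ); that is, x is continuous on [t₀−r, ∞), differentiable on [t₀, ∞), and satisfies x'(t) = ∫_0^r x(t−θ) dη(t)(θ) for all t ≥ t₀. -/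
open MeasureTheory Filter Topology

/- Context: for each `t ≥ t₀`, the complex measure `η t` on `[0, r]` is given in polar
form `dη(t) = h t dν(t)`, where `ν t` is a finite measure supported on `[0, r]` and
`‖h t θ‖ = 1` for `ν t`-a.e. `θ`.  If `λ` is a (continuous) solution of the generalized
characteristic equation `λ(t) = ∫_0^r exp(-∫_{t-θ}^t λ(s) ds) dη(t)(θ)` for `t ≥ t₀`
(the integrand being `η t`-integrable), then `x(t) = exp(∫_{t₀}^t λ(s) ds)` is a
solution of the RFDE `x'(t) = ∫_0^r x(t-θ) dη(t)(θ)`: it is continuous on `[t₀-r, ∞)`,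
the function `θ ↦ x(t-θ)` is `η t`-integrable, and `x` is differentiable on `[t₀, ∞)`
(right derivative at `t₀`) with the stated derivative. -/
theorem stmt3
    (r t₀ : ℝ) (hr : 0 < r)
    (ν : ℝ → Measure ℝ)
    (hfin : ∀ t, t₀ ≤ t → IsFiniteMeasure (ν t))
    (hsupp : ∀ t, t₀ ≤ t → ν t (Set.Icc 0 r)ᶜ = 0)
    (h : ℝ → ℝ → ℂ)
    (hh : ∀ t, t₀ ≤ t → ∀ᵐ θ ∂(ν t), ‖h t θ‖ = 1)
    -- λ is a solution of the generalized characteristic equation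
    (lam : ℝ → ℂ)
    (hlamc : ContinuousOn lam (Set.Ici (t₀ - r)))
    (hlamint : ∀ t, t₀ ≤ t → IntegrableOn
      (fun θ => Complex.exp (-(∫ s in (t - θ)..t, lam s)) * h t θ) (Set.Icc 0 r) (ν t))
    (hlam : ∀ t, t₀ ≤ t →
      lam t = ∫ θ in Set.Icc 0 r, Complex.exp (-(∫ s in (t - θ)..t, lam s)) * h t θ ∂(ν t))
    -- the function x(t) = exp(∫_{t₀}^t λ(s) ds)
    (x : ℝ → ℂ)
    (hxdef : ∀ t, t₀ - r ≤ t → x t = Complex.exp (∫ s in t₀..t, lam s)) :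
    ContinuousOn x (Set.Ici (t₀ - r)) ∧
    (∀ t, t₀ ≤ t →
      IntegrableOn (fun θ => x (t - θ) * h t θ) (Set.Icc 0 r) (ν t)) ∧
    (∀ t, t₀ ≤ t → HasDerivWithinAt x
      (∫ θ in Set.Icc 0 r, x (t - θ) * h t θ ∂(ν t)) (Set.Ici t₀) t) := by
  set F : ℝ → ℂ := fun t => ∫ s in t₀..t, lam s with hF
  -- interval integrability of lam between points of [t₀ - r, ∞)
  have hII : ∀ a b : ℝ, t₀ - r ≤ a → t₀ - r ≤ b → IntervalIntegrable lam volume a b := by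
    intro a b ha hb
    refine (hlamc.mono ?_).intervalIntegrable
    intro s hs
    rcases Set.mem_uIcc.mp hs with h1 | h1 <;> exact le_trans (by simp [ha, hb, le_min ha hb]) h1.1
  -- continuity of F
  have hFc : ContinuousOn F (Set.Ici (t₀ - r)) := by
    intro t ht
    have hmem : Set.Icc (t₀ - r) (t + 1) ∈ 𝓝[Set.Ici (t₀ - r)] t := by
      rw [← Set.Ici_inter_Iic]
      exact Filter.inter_mem self_mem_nhdsWithin
        (mem_nhdsWithin_of_mem_nhds (Iic_mem_nhds (by linarith [Set.mem_Ici.mp ht])))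
    refine ContinuousWithinAt.mono_of_mem_nhdsWithin ?_ hmem
    refine intervalIntegral.continuousWithinAt_primitive (measure_singleton t) ?_
    refine hII _ _ ?_ ?_
    · exact le_min (by linarith) le_rfl
    · exact le_trans (by linarith) (le_max_left _ _)
  have hxc : ContinuousOn x (Set.Ici (t₀ - r)) :=
    (Complex.continuous_exp.comp_continuousOn hFc).congr fun t ht => hxdef t ht
  -- pointwise identity on [0, r]
  have hpt : ∀ t, t₀ ≤ t → ∀ θ ∈ Set.Icc (0:ℝ) r,
      x (t - θ) * h t θ
        = Complex.exp (F t) * (Complex.exp (-(∫ s in (t - θ)..t, lam s)) * h t θ) := by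
    intro t ht θ hθ
    have h1 : t₀ - r ≤ t - θ := by
      rcases hθ with ⟨hθ0, hθr⟩; linarith
    have h2 : t₀ - r ≤ t := by linarith
    have hadd : (∫ s in t₀..(t - θ), lam s) + (∫ s in (t - θ)..t, lam s) = F t :=
      intervalIntegral.integral_add_adjacent_intervals
        (hII t₀ (t - θ) (by linarith) h1) (hII (t - θ) t h1 h2)
    rw [hxdef (t - θ) h1, ← mul_assoc, ← Complex.exp_add]
    congr 2
    linear_combination hadd
  -- integrability
  have hint : ∀ t, t₀ ≤ t →
      IntegrableOn (fun θ => x (t - θ) * h t θ) (Set.Icc 0 r) (ν t) := by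
    intro t ht
    refine (((hlamint t ht).const_mul (Complex.exp (F t)))).congr ?_
    exact ((ae_restrict_iff' measurableSet_Icc).2
      (ae_of_all _ fun θ hθ => (hpt t ht θ hθ).symm))
  refine ⟨hxc, hint, ?_⟩
  intro t ht
  have h2 : t₀ - r ≤ t := by linarith
  -- value of the integral
  have hval : (∫ θ in Set.Icc 0 r, x (t - θ) * h t θ ∂(ν t))
      = Complex.exp (F t) * lam t := by
    rw [hlam t ht, ← MeasureTheory.integral_const_mul]
    exact MeasureTheory.setIntegral_congr_fun measurableSet_Icc fun θ hθ => hpt t ht θ hθ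
  -- derivative of F at t
  have hFd : HasDerivAt F (lam t) t := by
    refine intervalIntegral.integral_hasDerivAt_right (hII t₀ t (by linarith) h2)
      ⟨Set.Ici (t₀ - r), Ici_mem_nhds (by linarith), hlamc.aestronglyMeasurable measurableSet_Ici⟩
      (hlamc.continuousAt (Ici_mem_nhds (by linarith)))
  have hxd : HasDerivAt (fun u => Complex.exp (F u)) (Complex.exp (F t) * lam t) t := hFd.cexp
  rw [hval]
  refine (hxd.hasDerivWithinAt.congr (fun u hu => hxdef u (by linarith [Set.mem_Ici.mp hu]))
    (hxdef t h2))
end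

section
/- Let λ be a solution of the generalized characteristic equation, let x be a solution of the RFDE x'(t) = ∫_0^r x(t−θ) dη(t)(θ), and set y(t) = x(t)·exp(−∫_{t₀}^t λ(s) ds) for t ≥ t₀−r. Then for every t ≥ t₀, y'(t) = ∫_0^r [y(t−θ) − y(t)]·exp(−∫_{t−θ}^t λ(s) ds) dη(t)(θ). -/
open MeasureTheory Filter Topology

/- Context: for each `t ≥ t₀`, the complex measure `η t` on `[0, r]` is given in polar
form `dη(t) = h t dν(t)`, where `ν t` is a finite (nonnegative) measure supported on
`[0, r]` and `‖h t θ‖ = 1` for `ν t`-a.e. `θ`; its total variation measure is then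
`‖η t‖ = ν t`.  A solution of the RFDE `x'(t) = ∫_0^r x(t-θ) dη(t)(θ)` is a continuous
function on `[t₀ - r, ∞)`, differentiable on `[t₀, ∞)` (right derivative at `t₀`),
satisfying the equation there; `λ` is a solution of the generalized characteristic
equation `λ(t) = ∫_0^r exp(-∫_{t-θ}^t λ(s) ds) dη(t)(θ)`. -/
theorem stmt4
    (r t₀ : ℝ) (hr : 0 < r)
    (ν : ℝ → Measure ℝ)
    (hfin : ∀ t, t₀ ≤ t → IsFiniteMeasure (ν t))
    (hsupp : ∀ t, t₀ ≤ t → ν t (Set.Icc 0 r)ᶜ = 0)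
    (h : ℝ → ℝ → ℂ)
    (hh : ∀ t, t₀ ≤ t → ∀ᵐ θ ∂(ν t), ‖h t θ‖ = 1)
    -- λ is a solution of the generalized characteristic equation
    (lam : ℝ → ℂ)
    (hlamc : ContinuousOn lam (Set.Ici (t₀ - r)))
    (hlamint : ∀ t, t₀ ≤ t → IntegrableOn
      (fun θ => Complex.exp (-(∫ s in (t - θ)..t, lam s)) * h t θ) (Set.Icc 0 r) (ν t))
    (hlam : ∀ t, t₀ ≤ t →
      lam t = ∫ θ in Set.Icc 0 r, Complex.exp (-(∫ s in (t - θ)..t, lam s)) * h t θ ∂(ν t))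
    -- x is a solution of the RFDE
    (x : ℝ → ℂ)
    (hxc : ContinuousOn x (Set.Ici (t₀ - r)))
    (hxint : ∀ t, t₀ ≤ t →
      IntegrableOn (fun θ => x (t - θ) * h t θ) (Set.Icc 0 r) (ν t))
    (hx : ∀ t, t₀ ≤ t → HasDerivWithinAt x
      (∫ θ in Set.Icc 0 r, x (t - θ) * h t θ ∂(ν t)) (Set.Ici t₀) t)
    -- y(t) = x(t)·exp(-∫_{t₀}^t λ(s) ds)
    (y : ℝ → ℂ)
    (hydef : ∀ t, t₀ - r ≤ t → y t = x t * Complex.exp (-(∫ s in t₀..t, lam s))) :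
    ∀ t, t₀ ≤ t → HasDerivWithinAt y
      (∫ θ in Set.Icc 0 r,
        (y (t - θ) - y t) * Complex.exp (-(∫ s in (t - θ)..t, lam s)) * h t θ ∂(ν t))
      (Set.Ici t₀) t := by
  intro t ht
  have htr : t₀ - r ≤ t := by linarith
  have htr' : t₀ - r < t := by linarith
  set E : ℂ := Complex.exp (-(∫ s in t₀..t, lam s)) with hE
  -- interval integrability of lam on subintervals of [t₀ - r, ∞)
  have hint : ∀ a b : ℝ, t₀ - r ≤ a → t₀ - r ≤ b → IntervalIntegrable lam volume a b := by
    intro a b ha hb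
    apply (hlamc.mono ?_).intervalIntegrable
    intro z hz
    have h1 : min a b ≤ z := hz.1
    exact le_trans (le_min ha hb) h1
  -- derivative of u ↦ ∫ s in t₀..u, lam s at t
  have hF : HasDerivAt (fun u => ∫ s in t₀..u, lam s) (lam t) t := by
    apply intervalIntegral.integral_hasDerivAt_right (hint t₀ t (by linarith) htr)
    · exact (hlamc.mono (Set.Ioi_subset_Ici_self)).stronglyMeasurableAtFilter isOpen_Ioi t htr'
    · exact (hlamc.mono (Set.Ioi_subset_Ici_self)).continuousAt (Ioi_mem_nhds htr')
  have hExp : HasDerivWithinAt (fun u => Complex.exp (-(∫ s in t₀..u, lam s)))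
      (Complex.exp (-(∫ s in t₀..t, lam s)) * (-(lam t))) (Set.Ici t₀) t :=
    (hF.hasDerivWithinAt.neg).cexp
  have hxd := hx t ht
  set X' : ℂ := ∫ θ in Set.Icc 0 r, x (t - θ) * h t θ ∂(ν t) with hX'
  have hprod : HasDerivWithinAt (fun u => x u * Complex.exp (-(∫ s in t₀..u, lam s)))
      (X' * E + x t * (E * (-(lam t)))) (Set.Ici t₀) t := hxd.mul hExp
  have hyd : HasDerivWithinAt y (X' * E + x t * (E * (-(lam t)))) (Set.Ici t₀) t := by
    apply hprod.congr
    · intro u hu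
      exact hydef u (by have := Set.mem_Ici.mp hu; linarith)
    · exact hydef t htr
  -- now compute the target integral
  have hkey : (∫ θ in Set.Icc 0 r,
      (y (t - θ) - y t) * Complex.exp (-(∫ s in (t - θ)..t, lam s)) * h t θ ∂(ν t))
      = X' * E + x t * (E * (-(lam t))) := by
    have hcong : ∀ θ ∈ Set.Icc (0:ℝ) r,
        (y (t - θ) - y t) * Complex.exp (-(∫ s in (t - θ)..t, lam s)) * h t θ
          = (x (t - θ) * h t θ) * E
            - y t * (Complex.exp (-(∫ s in (t - θ)..t, lam s)) * h t θ) := by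
      intro θ hθ
      have h1 : t₀ - r ≤ t - θ := by
        have := hθ.2; linarith
      have hy1 : y (t - θ) = x (t - θ) * Complex.exp (-(∫ s in t₀..(t - θ), lam s)) :=
        hydef _ h1
      have hadd : (∫ s in t₀..(t - θ), lam s) + (∫ s in (t - θ)..t, lam s)
          = ∫ s in t₀..t, lam s :=
        intervalIntegral.integral_add_adjacent_intervals
          (hint t₀ (t - θ) (by linarith) h1) (hint (t - θ) t h1 htr)
      have : Complex.exp (-(∫ s in t₀..(t - θ), lam s))
          * Complex.exp (-(∫ s in (t - θ)..t, lam s)) = E := by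
        rw [hE, ← Complex.exp_add, ← hadd]; ring_nf
      rw [hy1]
      rw [show (x (t - θ) * Complex.exp (-(∫ s in t₀..(t - θ), lam s)) - y t) *
          Complex.exp (-(∫ s in (t - θ)..t, lam s)) * h t θ
        = x (t - θ) * (Complex.exp (-(∫ s in t₀..(t - θ), lam s))
            * Complex.exp (-(∫ s in (t - θ)..t, lam s))) * h t θ
          - y t * (Complex.exp (-(∫ s in (t - θ)..t, lam s)) * h t θ) from by ring, this]
      ring
    rw [MeasureTheory.setIntegral_congr_fun measurableSet_Icc hcong]
    rw [MeasureTheory.integral_sub ((hxint t ht).mul_const E) ((hlamint t ht).const_mul (y t))]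
    rw [MeasureTheory.integral_mul_const, MeasureTheory.integral_const_mul, ← hlam t ht,
      hydef t htr]
    ring
  rw [hkey]
  exact hyd
end

section
/- Let λ be a solution of the generalized characteristic equation and suppose μ := sup_{t ≥ t₀} ∫_0^r θ·|exp(−∫_{t−θ}^t λ(s) ds)| d‖η(t)‖(θ) < 1. Let x be a solution of the RFDE x'(t) = ∫_0^r x(t−θ) dη(t)(θ), and set y(t) = x(t)·exp(−∫_{t₀}^t λ(s) ds). If t* ≥ t₀ + r and A ≥ 0 are such that |y'(t)| ≤ A for all t ∈ [t*−r, t*], then |y'(t)| ≤ A·μ for all t ∈ [t*, t*+r]. -/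
/-!
Put `y = x · exp (-∫_{t₀} λ)`. Because `λ` solves the characteristic equation,
`y'(t) = ∫_0^r exp (-∫_{t-θ}^t λ) (y(t-θ) - y(t)) dη(t)(θ)`, so `‖y'(t)‖ ≤ μ C` whenever
`‖y(t-θ) - y(t)‖ ≤ C θ` for `θ ∈ [0, r]`. It therefore suffices to show `‖y'‖ ≤ A` on `[t*, ∞)`:
then `y` is `A`-Lipschitz on `[t* - r, ∞)`.

No a priori bound on `y'` is available (the masses of `η(t)` are not uniformly bounded), so this
needs a blow-up argument. If `‖y'(u)‖ > A`, the estimate with `C = ρ ‖y'(u)‖`, `1 < ρ < 1/μ`,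
and the mean value inequality give a point of `[t*, u)` where `‖y'‖ > ρ ‖y'(u)‖`. Iterating yields
a decreasing sequence `uₙ → z` along which `‖y'‖` grows geometrically; since `y` is Lipschitz at
the point `z` of differentiability, the steps `uₙ - uₙ₊₁` become too short compared with `uₙ - z`
for the sequence to reach `z`.
-/

open MeasureTheory Filter Topology Set

theorem HasDerivWithinAt.exists_norm_sub_le_mul_abs_sub {E : Type*} [NormedAddCommGroup E]
    [NormedSpace ℝ E] {f : ℝ → E} {f' : E} {s : Set ℝ} {x : ℝ}
    (hf : HasDerivWithinAt f f' s x) (hs : Bornology.IsBounded (f '' s)) :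
    ∃ C, ∀ v ∈ s, ‖f v - f x‖ ≤ C * |v - x| := by
  obtain ⟨c, hc⟩ := hf.hasFDerivWithinAt.isBigO_sub.bound
  obtain ⟨ε, hε, hball⟩ := Metric.mem_nhdsWithin_iff.1 hc
  obtain ⟨Y, hY⟩ := isBounded_iff_forall_norm_le.1 hs
  refine ⟨max c ((Y + ‖f x‖) / ε), fun v hv => ?_⟩
  have hYv : ‖f v‖ ≤ Y := hY _ (mem_image_of_mem f hv)
  rcases lt_or_ge |v - x| ε with hvx | hvx
  · have hnear : ‖f v - f x‖ ≤ c * ‖v - x‖ :=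
      hball ⟨by rwa [Metric.mem_ball, Real.dist_eq], hv⟩
    rw [Real.norm_eq_abs] at hnear
    exact hnear.trans (by gcongr; exact le_max_left _ _)
  · have hY₀ : 0 ≤ Y + ‖f x‖ := by linarith [norm_nonneg (f v), norm_nonneg (f x)]
    calc ‖f v - f x‖ ≤ ‖f v‖ + ‖f x‖ := norm_sub_le _ _
      _ ≤ (Y + ‖f x‖) / ε * ε := by rw [div_mul_cancel₀ _ hε.ne']; gcongr
      _ ≤ max c ((Y + ‖f x‖) / ε) * |v - x| := by gcongr; exact le_max_right _ _

theorem tendsto_atTop_of_mul_le_succ {K : ℕ → ℝ} {ρ : ℝ} (hρ : 1 < ρ) (hK₀ : 0 < K 0)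
    (hK : ∀ n, ρ * K n ≤ K (n + 1)) : Tendsto K atTop atTop := by
  have hKpow : ∀ n, ρ ^ n * K 0 ≤ K n := by
    intro n
    induction n with
    | zero => simp
    | succ n ih => calc ρ ^ (n + 1) * K 0 = ρ * (ρ ^ n * K 0) := by ring
        _ ≤ ρ * K n := by gcongr
        _ ≤ K (n + 1) := hK n
  exact tendsto_atTop_mono hKpow ((tendsto_pow_atTop_atTop_of_one_lt hρ).atTop_mul_const hK₀)

theorem mul_one_sub_div_le_mul_one_sub_div {d d' K K' a b ρ : ℝ} (hρ : 0 < ρ) (ha : 0 ≤ a)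
    (hab : a ≤ b) (hbρ : b / ρ = b - a) (hbK : b < K) (hK : ρ * K ≤ K') (hd : 0 ≤ d)
    (hd' : 0 ≤ d') (hstep : d * (1 - a / K) ≤ d') : d * (1 - b / K) ≤ d' * (1 - b / K') := by
  have hKpos : 0 < K := by linarith
  have h1 : 0 ≤ 1 - (b - a) / K := by
    rw [sub_nonneg, div_le_one hKpos]; linarith
  have h2 : 1 - (b - a) / K ≤ 1 - b / K' := by
    rw [← hbρ, div_div]
    gcongr
    linarith
  have h3 : 0 ≤ a / K * ((b - a) / K) := by
    have := sub_nonneg.2 hab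
    positivity
  calc d * (1 - b / K)
      ≤ d * ((1 - a / K) * (1 - (b - a) / K)) := by
        have : (1 - a / K) * (1 - (b - a) / K) = 1 - b / K + a / K * ((b - a) / K) := by ring
        rw [this]
        gcongr
        linarith
    _ ≤ d' * (1 - (b - a) / K) := by rw [← mul_assoc]; gcongr
    _ ≤ d' * (1 - b / K') := by gcongr

theorem not_tendsto_zero_of_mul_one_sub_div_le {d K : ℕ → ℝ} {a ρ : ℝ} (hρ : 1 < ρ)
    (ha : 0 ≤ a) (hKtop : Tendsto K atTop atTop) (hK : ∀ n, ρ * K n ≤ K (n + 1))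
    (hd : ∀ n, 0 < d n) (hstep : ∀ᶠ n in atTop, d n * (1 - a / K n) ≤ d (n + 1)) :
    ¬ Tendsto d atTop (𝓝 0) := by
  intro hlim
  -- `b / ρ = b - a` is what makes `d n * (1 - b / K n)` eventually nondecreasing.
  set b := a * ρ / (ρ - 1) with hb
  have hbρ : b / ρ = b - a := by
    have : ρ - 1 ≠ 0 := by linarith
    rw [hb]; field_simp; ring
  have hab : a ≤ b := by
    have : 0 ≤ b / ρ := by positivity
    linarith
  obtain ⟨N, hN⟩ := (hstep.and (hKtop.eventually_gt_atTop b)).exists_forall_of_atTop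
  have hmono : ∀ n ≥ N, d n * (1 - b / K n) ≤ d (n + 1) * (1 - b / K (n + 1)) := fun n hn =>
    mul_one_sub_div_le_mul_one_sub_div (by linarith) ha hab hbρ (hN n hn).2 (hK n) (hd n).le
      (hd _).le (hN n hn).1
  have hpos : 0 < d N * (1 - b / K N) := by
    have := hd N
    have : 0 < 1 - b / K N := by
      rw [sub_pos, div_lt_one (by linarith [(hN N le_rfl).2])]; exact (hN N le_rfl).2
    positivity
  have hle : ∀ n ≥ N, d N * (1 - b / K N) ≤ d n := by
    intro n hn
    have hK : 0 < K n := (ha.trans hab).trans_lt (hN n hn).2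
    calc d N * (1 - b / K N) ≤ d n * (1 - b / K n) :=
          monotoneOn_nat_Ici_of_le_succ hmono self_mem_Ici hn hn
      _ ≤ d n := mul_le_of_le_one_right (hd n).le (by
          have : 0 ≤ b / K n := by positivity
          linarith)
  exact hpos.not_ge (ge_of_tendsto hlim (eventually_atTop.2 ⟨N, hle⟩))

theorem not_tendsto_of_geometric_blowup {u θ K : ℕ → ℝ} {z C ρ : ℝ} (hρ : 1 < ρ)
    (hK₀ : 0 < K 0) (hK : ∀ n, ρ * K n ≤ K (n + 1)) (hz : ∀ n, z < u n) (hθ : ∀ n, 0 ≤ θ n)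
    (hstep : ∀ n, u n - θ n ≤ u (n + 1))
    (hjump : ∀ n, K n * θ n < C * (|u n - θ n - z| + (u n - z))) :
    ¬ Tendsto u atTop (𝓝 z) := by
  have hKtop := tendsto_atTop_of_mul_le_succ hρ hK₀ hK
  have hC : 0 ≤ C := by
    by_contra! hC
    nlinarith [hjump 0, mul_nonneg hK₀.le (hθ 0), abs_nonneg (u 0 - θ 0 - z), hz 0]
  have hshort : ∀ᶠ n in atTop, (u n - z) * (1 - 2 * C / K n) ≤ u (n + 1) - z := by
    filter_upwards [hKtop.eventually_gt_atTop C] with n hCK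
    have hcross : z < u n - θ n := by
      by_contra! hle
      have := hjump n
      rw [abs_of_nonpos (by linarith)] at this
      nlinarith [hθ n]
    have := hjump n
    rw [abs_of_pos (by linarith)] at this
    have : θ n ≤ 2 * C / K n * (u n - z) := by
      rw [div_mul_eq_mul_div, le_div_iff₀ (by linarith)]
      nlinarith [hθ n]
    linarith [hstep n]
  intro hlim
  refine not_tendsto_zero_of_mul_one_sub_div_le hρ (by positivity) hKtop hK
    (fun n => sub_pos.2 (hz n)) hshort ?_
  simpa using hlim.sub_const z

section DelayInequality

variable {E : Type*} [NormedAddCommGroup E] [NormedSpace ℝ E] {y y' : ℝ → E}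

theorem norm_sub_le_of_forall_hasDerivWithinAt_Ici {d a b B : ℝ}
    (hderiv : ∀ t ∈ Ici d, HasDerivWithinAt y (y' t) (Ici d) t) (hda : d ≤ a) (hab : a ≤ b)
    (hB : ∀ t ∈ Ico a b, ‖y' t‖ ≤ B) : ‖y b - y a‖ ≤ B * (b - a) := by
  have hsub : Icc a b ⊆ Ici d := fun t ht => hda.trans ht.1
  exact norm_image_sub_le_of_norm_deriv_right_le_segment
    (fun t ht => (hderiv t (hsub ht)).continuousWithinAt.mono hsub)
    (fun t ht => (hderiv t (hsub (Ico_subset_Icc_self ht))).mono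
      (Ici_subset_Ici.2 (hsub (Ico_subset_Icc_self ht)))) hB b ⟨hab, le_rfl⟩

def DelayLipschitzBound (y y' : ℝ → E) (r μ c : ℝ) : Prop :=
  ∀ t ∈ Ici c, ∀ C, 0 ≤ C → (∀ θ ∈ Icc 0 r, ‖y (t - θ) - y t‖ ≤ C * θ) → ‖y' t‖ ≤ μ * C

variable {r μ A c : ℝ}

theorem exists_norm_deriv_gt_of_delayLipschitzBound {ρ : ℝ} (hA : 0 ≤ A) (hρ : 1 ≤ ρ)
    (hμρ : μ * ρ < 1)
    (hderiv : ∀ t ∈ Ici (c - r), HasDerivWithinAt y (y' t) (Ici (c - r)) t)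
    (hinit : ∀ t ∈ Icc (c - r) c, ‖y' t‖ ≤ A) (hdelay : DelayLipschitzBound y y' r μ c)
    {u : ℝ} (hu : c ≤ u) (hAu : A < ‖y' u‖) :
    ∃ θ ∈ Icc 0 r, ρ * ‖y' u‖ * θ < ‖y (u - θ) - y u‖ ∧
      ∃ v ∈ Ico (u - θ) u, c ≤ v ∧ ρ * ‖y' u‖ < ‖y' v‖ := by
  obtain ⟨θ, hθ, hjump⟩ : ∃ θ ∈ Icc 0 r, ρ * ‖y' u‖ * θ < ‖y (u - θ) - y u‖ := by
    by_contra! H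
    have := hdelay u hu _ (by positivity) H
    nlinarith
  refine ⟨θ, hθ, hjump, ?_⟩
  obtain ⟨v, hv, hvu⟩ : ∃ v ∈ Ico (u - θ) u, ρ * ‖y' u‖ < ‖y' v‖ := by
    by_contra! H
    have := norm_sub_le_of_forall_hasDerivWithinAt_Ici hderiv (by linarith [hθ.2])
      (by linarith [hθ.1]) H
    rw [norm_sub_rev, sub_sub_cancel] at this
    exact this.not_gt hjump
  refine ⟨v, hv, ?_, hvu⟩
  by_contra! hvc
  have := hinit v ⟨by linarith [hv.1, hθ.2], hvc.le⟩
  nlinarith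

theorem exists_seq_of_delayLipschitzBound {ρ : ℝ} (hA : 0 ≤ A) (hρ : 1 ≤ ρ) (hμρ : μ * ρ < 1)
    (hderiv : ∀ t ∈ Ici (c - r), HasDerivWithinAt y (y' t) (Ici (c - r)) t)
    (hinit : ∀ t ∈ Icc (c - r) c, ‖y' t‖ ≤ A) (hdelay : DelayLipschitzBound y y' r μ c)
    {u₀ : ℝ} (hu₀ : c ≤ u₀) (hAu₀ : A < ‖y' u₀‖) :
    ∃ u θ : ℕ → ℝ, u 0 = u₀ ∧ (∀ n, c ≤ u n) ∧ (∀ n, θ n ∈ Icc 0 r) ∧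
      (∀ n, u (n + 1) ∈ Ico (u n - θ n) (u n)) ∧ (∀ n, ρ * ‖y' (u n)‖ < ‖y' (u (n + 1))‖) ∧
      ∀ n, ρ * ‖y' (u n)‖ * θ n < ‖y (u n - θ n) - y (u n)‖ := by
  let S := {u : ℝ // c ≤ u ∧ A < ‖y' u‖}
  have hnext : ∀ u : S, ∃ θ : ℝ, ∃ v : S, θ ∈ Icc 0 r ∧ (v : ℝ) ∈ Ico (u - θ) u ∧
      ρ * ‖y' u‖ < ‖y' v‖ ∧ ρ * ‖y' u‖ * θ < ‖y (u - θ) - y u‖ := by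
    rintro ⟨u, hcu, hAu⟩
    obtain ⟨θ, hθ, hjump, v, hv, hcv, hvu⟩ :=
      exists_norm_deriv_gt_of_delayLipschitzBound hA hρ hμρ hderiv hinit hdelay hcu hAu
    exact ⟨θ, ⟨v, hcv, by nlinarith [norm_nonneg (y' u)]⟩, hθ, hv, hvu, hjump⟩
  choose θ next hnext using hnext
  let w : ℕ → S := fun n => next^[n] ⟨u₀, hu₀, hAu₀⟩
  have hw : ∀ n, w (n + 1) = next (w n) := fun n => Function.iterate_succ_apply' _ _ _
  refine ⟨fun n => w n, fun n => θ (w n), rfl, fun n => (w n).2.1, fun n => (hnext (w n)).1,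
    fun n => ?_, fun n => ?_, fun n => (hnext (w n)).2.2.2⟩ <;> simp only [hw]
  exacts [(hnext (w n)).2.1, (hnext (w n)).2.2.1]

theorem norm_deriv_le_of_delayLipschitzBound (hμ0 : 0 ≤ μ) (hμ1 : μ < 1) (hA : 0 ≤ A)
    (hderiv : ∀ t ∈ Ici (c - r), HasDerivWithinAt y (y' t) (Ici (c - r)) t)
    (hinit : ∀ t ∈ Icc (c - r) c, ‖y' t‖ ≤ A) (hdelay : DelayLipschitzBound y y' r μ c) :
    ∀ t ∈ Ici c, ‖y' t‖ ≤ A := by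
  intro u₀ hu₀
  by_contra! hAu₀
  set ρ := 2 / (1 + μ) with hρ_def
  have hρ : 1 < ρ := by rw [hρ_def, lt_div_iff₀ (by linarith)]; linarith
  have hμρ : μ * ρ < 1 := by rw [hρ_def, mul_div_assoc', div_lt_one (by linarith)]; linarith
  obtain ⟨u, θ, hu0, hcu, hθ, hnext, hgrow, hjump⟩ :=
    exists_seq_of_delayLipschitzBound hA hρ.le hμρ hderiv hinit hdelay hu₀ hAu₀
  have hanti : Antitone u := antitone_nat_of_succ_le fun n => (hnext n).2.le
  have hbdd : BddBelow (range u) := ⟨c, by rintro _ ⟨n, rfl⟩; exact hcu n⟩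
  set z := ⨅ n, u n
  have hlim : Tendsto u atTop (𝓝 z) := tendsto_atTop_ciInf hanti hbdd
  have hz : ∀ n, z < u n := fun n => (ciInf_le hbdd (n + 1)).trans_lt (hnext n).2
  have hcz : c ≤ z := le_ciInf hcu
  have hr : 0 ≤ r := (hθ 0).1.trans (hθ 0).2
  have hmem : ∀ n, ∀ θ' ∈ Icc 0 r, u n - θ' ∈ Icc (c - r) u₀ := fun n θ' hθ' =>
    ⟨by linarith [hcu n, hθ'.2], by linarith [hu0 ▸ hanti (Nat.zero_le n), hθ'.1]⟩
  have hsub : Icc (c - r) u₀ ⊆ Ici (c - r) := Icc_subset_Ici_self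
  have hcont : ContinuousOn y (Ici (c - r)) := fun t ht => (hderiv t ht).continuousWithinAt
  obtain ⟨C, hC⟩ := ((hderiv z (by simp only [mem_Ici]; linarith)).mono
    hsub).exists_norm_sub_le_mul_abs_sub
      (isCompact_Icc.image_of_continuousOn (hcont.mono hsub)).isBounded
  refine not_tendsto_of_geometric_blowup (C := C) (K := fun n => ρ * ‖y' (u n)‖) hρ
    (mul_pos (by linarith) (hA.trans_lt (hu0 ▸ hAu₀))) (fun n => ?_) hz
    (fun n => (hθ n).1) (fun n => (hnext n).1) (fun n => ?_) hlim
  · gcongr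
    exact (hgrow n).le
  · calc ρ * ‖y' (u n)‖ * θ n < ‖y (u n - θ n) - y (u n)‖ := hjump n
      _ ≤ ‖y (u n - θ n) - y z‖ + ‖y (u n) - y z‖ := by
          simpa only [dist_eq_norm] using dist_triangle_right _ _ (y z)
      _ ≤ C * |u n - θ n - z| + C * |u n - z| :=
          add_le_add (hC _ (hmem n _ (hθ n))) (hC _ (by simpa using hmem n 0 ⟨le_rfl, hr⟩))
      _ = C * (|u n - θ n - z| + (u n - z)) := by rw [abs_of_pos (sub_pos.2 (hz n))]; ring

theorem norm_deriv_le_mul_of_delayLipschitzBound (hμ0 : 0 ≤ μ) (hμ1 : μ < 1) (hA : 0 ≤ A)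
    (hderiv : ∀ t ∈ Ici (c - r), HasDerivWithinAt y (y' t) (Ici (c - r)) t)
    (hinit : ∀ t ∈ Icc (c - r) c, ‖y' t‖ ≤ A) (hdelay : DelayLipschitzBound y y' r μ c) :
    ∀ t ∈ Ici c, ‖y' t‖ ≤ μ * A := by
  have hbound := norm_deriv_le_of_delayLipschitzBound hμ0 hμ1 hA hderiv hinit hdelay
  intro t ht
  refine hdelay t ht A hA fun θ hθ => ?_
  have := norm_sub_le_of_forall_hasDerivWithinAt_Ici (a := t - θ) (b := t) (B := A) hderiv
    (by linarith [mem_Ici.1 ht, hθ.2]) (by linarith [hθ.1]) fun s hs => ?_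
  · rwa [norm_sub_rev, sub_sub_cancel] at this
  rcases lt_or_ge s c with hsc | hcs
  · exact hinit s ⟨by linarith [mem_Ici.1 ht, hθ.2, hs.1], hsc.le⟩
  · exact hbound s hcs

end DelayInequality

theorem exp_neg_integral_eq_mul {lam : ℝ → ℂ} {a b c : ℝ}
    (hab : IntervalIntegrable lam volume a b) (hbc : IntervalIntegrable lam volume b c) :
    Complex.exp (-∫ s in a..c, lam s) =
      Complex.exp (-∫ s in b..c, lam s) * Complex.exp (-∫ s in a..b, lam s) := by
  rw [← Complex.exp_add, ← intervalIntegral.integral_add_adjacent_intervals hab hbc]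
  ring_nf

theorem intervalIntegrable_of_continuousOn_Ici_s5 {lam : ℝ → ℂ} {d a b : ℝ}
    (hlam : ContinuousOn lam (Ici d)) (ha : d ≤ a) (hb : d ≤ b) :
    IntervalIntegrable lam volume a b :=
  (hlam.mono fun _ hs => le_trans (le_min ha hb) hs.1).intervalIntegrable

theorem norm_setIntegral_mul_le_of_norm_le {ν : Measure ℝ} {e g h : ℝ → ℂ} {r μ C : ℝ}
    (hh : ∀ᵐ θ ∂ν, ‖h θ‖ = 1) (heh : IntegrableOn (fun θ => e θ * h θ) (Icc 0 r) ν)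
    (hμ : ∫ θ in Icc 0 r, θ * ‖e θ‖ ∂ν ≤ μ) (hC : 0 ≤ C)
    (hg : ∀ θ ∈ Icc 0 r, ‖g θ‖ ≤ C * θ) :
    ‖∫ θ in Icc 0 r, e θ * g θ * h θ ∂ν‖ ≤ μ * C := by
  have hh' : ∀ᵐ θ ∂ν.restrict (Icc 0 r), ‖h θ‖ = 1 := ae_restrict_of_ae hh
  have he : IntegrableOn (fun θ => ‖e θ‖) (Icc 0 r) ν :=
    heh.norm.congr (hh'.mono fun θ hθ => by simp [hθ])
  have hθe : IntegrableOn (fun θ => θ * ‖e θ‖) (Icc 0 r) ν := by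
    refine he.bdd_mul (c := r) measurable_id.aestronglyMeasurable ?_
    filter_upwards [ae_restrict_mem measurableSet_Icc] with θ hθ
    rw [Real.norm_eq_abs, abs_of_nonneg hθ.1]
    exact hθ.2
  calc ‖∫ θ in Icc 0 r, e θ * g θ * h θ ∂ν‖
      ≤ ∫ θ in Icc 0 r, C * (θ * ‖e θ‖) ∂ν := by
        refine norm_integral_le_of_norm_le (hθe.const_mul C) ?_
        filter_upwards [hh', ae_restrict_mem measurableSet_Icc] with θ hθ hθmem
        rw [norm_mul, norm_mul, hθ, mul_one]
        calc ‖e θ‖ * ‖g θ‖ ≤ ‖e θ‖ * (C * θ) := by gcongr; exact hg θ hθmem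
          _ = C * (θ * ‖e θ‖) := by ring
    _ = C * ∫ θ in Icc 0 r, θ * ‖e θ‖ ∂ν := integral_const_mul _ _
    _ ≤ C * μ := by gcongr
    _ = μ * C := mul_comm _ _

theorem eq_integral_of_hasDerivWithinAt_mul_exp {ν : Measure ℝ} {h lam x y : ℝ → ℂ} {y' : ℂ}
    {r t₀ t : ℝ} (hr : 0 < r) (ht : t₀ ≤ t) (hlamc : ContinuousOn lam (Ici (t₀ - r)))
    (hlamint : IntegrableOn (fun θ => Complex.exp (-(∫ s in (t - θ)..t, lam s)) * h θ)
      (Icc 0 r) ν)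
    (hlam : lam t = ∫ θ in Icc 0 r, Complex.exp (-(∫ s in (t - θ)..t, lam s)) * h θ ∂ν)
    (hxint : IntegrableOn (fun θ => x (t - θ) * h θ) (Icc 0 r) ν)
    (hx : HasDerivWithinAt x (∫ θ in Icc 0 r, x (t - θ) * h θ ∂ν) (Ici t₀) t)
    (hy : ∀ u, y u = x u * Complex.exp (-(∫ s in t₀..u, lam s)))
    (hy' : HasDerivWithinAt y y' (Ici t₀) t) :
    y' = ∫ θ in Icc 0 r,
      Complex.exp (-(∫ s in (t - θ)..t, lam s)) * (y (t - θ) - y t) * h θ ∂ν := by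
  set E := Complex.exp (-(∫ s in t₀..t, lam s)) with hE
  have hprim : HasDerivAt (fun u => ∫ s in t₀..u, lam s) (lam t) t :=
    intervalIntegral.integral_hasDerivAt_right
      (intervalIntegrable_of_continuousOn_Ici_s5 hlamc (by linarith) (by linarith))
      ((hlamc.mono Ioi_subset_Ici_self).stronglyMeasurableAtFilter isOpen_Ioi t
        (by simp only [mem_Ioi]; linarith))
      (hlamc.continuousAt (Ici_mem_nhds (by linarith)))
  have hyd : HasDerivWithinAt y ((∫ θ in Icc 0 r, x (t - θ) * h θ ∂ν) * E + x t * (E * -lam t))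
      (Ici t₀) t := by
    rw [funext hy]
    exact hx.mul hprim.neg.cexp.hasDerivWithinAt
  rw [(uniqueDiffOn_Ici t₀ t ht).eq_deriv _ hy' hyd]
  have hsplit : ∀ θ ∈ Icc 0 r,
      Complex.exp (-(∫ s in (t - θ)..t, lam s)) * (y (t - θ) - y t) * h θ
        = E * (x (t - θ) * h θ) - E * x t * (Complex.exp (-(∫ s in (t - θ)..t, lam s)) * h θ) := by
    intro θ hθ
    rw [hy, hy, hE, exp_neg_integral_eq_mul (a := t₀) (b := t - θ) (c := t)
      (intervalIntegrable_of_continuousOn_Ici_s5 hlamc (by linarith) (by linarith [hθ.2]))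
      (intervalIntegrable_of_continuousOn_Ici_s5 hlamc (by linarith [hθ.2]) (by linarith))]
    ring
  rw [setIntegral_congr_fun measurableSet_Icc hsplit, integral_sub (hxint.const_mul E)
    (hlamint.const_mul _), integral_const_mul, integral_const_mul, ← hlam]
  ring

theorem stmt5_general
    (r t₀ : ℝ) (hr : 0 < r)
    (ν : ℝ → Measure ℝ)
    (h : ℝ → ℝ → ℂ)
    (hh : ∀ t, t₀ ≤ t → ∀ᵐ θ ∂(ν t), ‖h t θ‖ = 1)
    -- λ is a solution of the generalized characteristic equation
    (lam : ℝ → ℂ)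
    (hlamc : ContinuousOn lam (Set.Ici (t₀ - r)))
    (hlamint : ∀ t, t₀ ≤ t → IntegrableOn
      (fun θ => Complex.exp (-(∫ s in (t - θ)..t, lam s)) * h t θ) (Set.Icc 0 r) (ν t))
    (hlam : ∀ t, t₀ ≤ t →
      lam t = ∫ θ in Set.Icc 0 r, Complex.exp (-(∫ s in (t - θ)..t, lam s)) * h t θ ∂(ν t))
    -- μ = sup_{t ≥ t₀} ∫_0^r θ ‖exp(-∫_{t-θ}^t λ)‖ d‖η t‖(θ) < 1
    (μ : ℝ) (hμ0 : 0 ≤ μ) (hμ1 : μ < 1)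
    (hμ : ∀ t, t₀ ≤ t → (∫ θ in Set.Icc 0 r,
      θ * ‖Complex.exp (-(∫ s in (t - θ)..t, lam s))‖ ∂(ν t)) ≤ μ)
    -- x is a solution of the RFDE
    (x : ℝ → ℂ)
    (hxint : ∀ t, t₀ ≤ t →
      IntegrableOn (fun θ => x (t - θ) * h t θ) (Set.Icc 0 r) (ν t))
    (hx : ∀ t, t₀ ≤ t → HasDerivWithinAt x
      (∫ θ in Set.Icc 0 r, x (t - θ) * h t θ ∂(ν t)) (Set.Ici t₀) t)
    -- y' is the derivative of y(t) = x(t)·exp(-∫_{t₀}^t λ(s) ds) on [t₀, ∞)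
    (y' : ℝ → ℂ)
    (hy' : ∀ t, t₀ ≤ t → HasDerivWithinAt
      (fun u => x u * Complex.exp (-(∫ s in t₀..u, lam s))) (y' t) (Set.Ici t₀) t)
    (tstar A : ℝ) (htstar : t₀ + r ≤ tstar) (hA : 0 ≤ A)
    (hyA : ∀ t ∈ Set.Icc (tstar - r) tstar, ‖y' t‖ ≤ A) :
    ∀ t ∈ Set.Icc tstar (tstar + r), ‖y' t‖ ≤ A * μ := by
  intro t ht
  set y : ℝ → ℂ := fun u => x u * Complex.exp (-(∫ s in t₀..u, lam s))
  have hdelay : DelayLipschitzBound y y' r μ tstar := by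
    intro u hu C hC hLip
    have hu₀ : t₀ ≤ u := by linarith [mem_Ici.1 hu]
    rw [eq_integral_of_hasDerivWithinAt_mul_exp hr hu₀ hlamc (hlamint u hu₀) (hlam u hu₀)
      (hxint u hu₀) (hx u hu₀) (fun _ => rfl) (hy' u hu₀)]
    exact norm_setIntegral_mul_le_of_norm_le (hh u hu₀) (hlamint u hu₀) (hμ u hu₀) hC hLip
  rw [mul_comm]
  refine norm_deriv_le_mul_of_delayLipschitzBound hμ0 hμ1 hA (fun u hu => ?_) hyA hdelay t ht.1
  exact (hy' u (by linarith [mem_Ici.1 hu])).mono (Ici_subset_Ici.2 (by linarith))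

theorem stmt5
    (r t₀ : ℝ) (hr : 0 < r)
    (ν : ℝ → Measure ℝ)
    (hfin : ∀ t, t₀ ≤ t → IsFiniteMeasure (ν t))
    (hsupp : ∀ t, t₀ ≤ t → ν t (Set.Icc 0 r)ᶜ = 0)
    (h : ℝ → ℝ → ℂ)
    (hh : ∀ t, t₀ ≤ t → ∀ᵐ θ ∂(ν t), ‖h t θ‖ = 1)
    -- λ is a solution of the generalized characteristic equation
    (lam : ℝ → ℂ)
    (hlamc : ContinuousOn lam (Set.Ici (t₀ - r)))
    (hlamint : ∀ t, t₀ ≤ t → IntegrableOn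
      (fun θ => Complex.exp (-(∫ s in (t - θ)..t, lam s)) * h t θ) (Set.Icc 0 r) (ν t))
    (hlam : ∀ t, t₀ ≤ t →
      lam t = ∫ θ in Set.Icc 0 r, Complex.exp (-(∫ s in (t - θ)..t, lam s)) * h t θ ∂(ν t))
    -- μ = sup_{t ≥ t₀} ∫_0^r θ ‖exp(-∫_{t-θ}^t λ)‖ d‖η t‖(θ) < 1
    (μ : ℝ) (hμ0 : 0 ≤ μ) (hμ1 : μ < 1)
    (hμ : ∀ t, t₀ ≤ t → (∫ θ in Set.Icc 0 r,
      θ * ‖Complex.exp (-(∫ s in (t - θ)..t, lam s))‖ ∂(ν t)) ≤ μ)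
    -- x is a solution of the RFDE
    (x : ℝ → ℂ)
    (hxc : ContinuousOn x (Set.Ici (t₀ - r)))
    (hxint : ∀ t, t₀ ≤ t →
      IntegrableOn (fun θ => x (t - θ) * h t θ) (Set.Icc 0 r) (ν t))
    (hx : ∀ t, t₀ ≤ t → HasDerivWithinAt x
      (∫ θ in Set.Icc 0 r, x (t - θ) * h t θ ∂(ν t)) (Set.Ici t₀) t)
    -- y' is the derivative of y(t) = x(t)·exp(-∫_{t₀}^t λ(s) ds) on [t₀, ∞)
    (y' : ℝ → ℂ)
    (hy' : ∀ t, t₀ ≤ t → HasDerivWithinAt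
      (fun u => x u * Complex.exp (-(∫ s in t₀..u, lam s))) (y' t) (Set.Ici t₀) t)
    (tstar A : ℝ) (htstar : t₀ + r ≤ tstar) (hA : 0 ≤ A)
    (hyA : ∀ t ∈ Set.Icc (tstar - r) tstar, ‖y' t‖ ≤ A) :
    ∀ t ∈ Set.Icc tstar (tstar + r), ‖y' t‖ ≤ A * μ :=
  stmt5_general r t₀ hr ν h hh lam hlamc hlamint hlam μ hμ0 hμ1 hμ x hxint hx y' hy' tstar A htstar
    hA hyA
end

section
/- Let λ be a solution of the generalized characteristic equation and suppose μ := sup_{t ≥ t₀} ∫_0^r θ·|exp(−∫_{t−θ}^t λ(s) ds)| d‖η(t)‖(θ) < 1. Let x be a solution of the RFDE x'(t) = ∫_0^r x(t−θ) dη(t)(θ), set y(t) = x(t)·exp(−∫_{t₀}^t λ(s) ds), and let M := max_{t ∈ [t₀, t₀+r]} |y'(t)|. Then |y'(t)| ≤ M·μ^{(t−t₀)/r − 1} for every t ≥ t₀. -/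
open MeasureTheory Filter Topology

open Set

/-!
With `Y t = x t * exp (-∫_{t₀}^t λ)`, the characteristic equation turns the RFDE into
`y' t = ∫_0^r (Y (t - θ) - Y t) * exp (-∫_{t-θ}^t λ) dη(t)(θ)`, so a Lipschitz constant `G` of
`Y` on `[t - r, t]` gives `‖y' t‖ ≤ μ G`: bounds on `y'` improve by the factor `μ` from one
window of length `r` to the next, which yields the decay once `‖y'‖ ≤ M` is known on all of
`[t₀, ∞)`. That global bound is the delicate step, because nothing makes `y'` continuous.
A point where `‖y'‖ > M` starts a descending sequence of points along which `‖y'‖` grows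
geometrically while the steps shrink; near the limit point `Y` is Lipschitz, which makes the
steps too short for the sequence to reach its own limit.
-/

theorem le_pow_mul_of_le_mul {u : ℕ → ℝ} {q : ℝ} (hq : 0 ≤ q) (hu : ∀ k, u k ≤ q * u (k + 1))
    (k j : ℕ) : u k ≤ q ^ j * u (k + j) := by
  induction j with
  | zero => simp
  | succ j ih =>
    calc u k ≤ q ^ j * u (k + j) := ih
      _ ≤ q ^ j * (q * u (k + j + 1)) := mul_le_mul_of_nonneg_left (hu _) (pow_nonneg hq j)
      _ = q ^ (j + 1) * u (k + (j + 1)) := by ring_nf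

theorem tendsto_atTop_of_lt_mul {u : ℕ → ℝ} {q : ℝ} (hq0 : 0 < q) (hq1 : q < 1)
    (hu₀ : 0 ≤ u 0) (hu : ∀ k, u k < q * u (k + 1)) : Tendsto u atTop atTop := by
  refine (tendsto_add_atTop_iff_nat 1).mp (tendsto_atTop_of_geom_le (c := q⁻¹) ?_
    ((one_lt_inv₀ hq0).mpr hq1) fun k => ?_)
  · exact pos_of_mul_pos_right (hu₀.trans_lt (hu 0)) hq0.le
  · rw [inv_mul_le_iff₀ hq0]
    exact (hu (k + 1)).le

theorem tendsto_zero_of_mul_le {θ u : ℕ → ℝ} {C : ℝ} (hθ : ∀ k, 0 ≤ θ k)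
    (hu : Tendsto u atTop atTop) (hθu : ∀ k, θ k * u k ≤ C) : Tendsto θ atTop (𝓝 0) := by
  refine tendsto_of_tendsto_of_tendsto_of_le_of_le' tendsto_const_nhds
    ((tendsto_const_nhds (x := C)).div_atTop hu) (Eventually.of_forall hθ) ?_
  filter_upwards [hu.eventually_gt_atTop 0] with k hk
  rw [le_div_iff₀ hk]
  exact hθu k

theorem false_of_geometric_descent {s θ u : ℕ → ℝ} {sh q c : ℝ} (hq0 : 0 ≤ q) (hq1 : q < 1)
    (hanti : Antitone s) (hlim : Tendsto s atTop (𝓝 sh)) (hsh : sh < s 0)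
    (hstep : ∀ k, s k - s (k + 1) ≤ θ k) (hu : ∀ k, u k ≤ q * u (k + 1))
    (hθ : ∀ k, θ k * u k ≤ c * (s k - sh)) (hc : 0 ≤ c) (hu₀ : c < u 0 * (1 - q)) : False := by
  have hu₀pos : 0 < u 0 := by nlinarith [sub_pos.2 hq1]
  have hpow : ∀ k, u 0 ≤ q ^ k * u k := fun k => by
    simpa using le_pow_mul_of_le_mul hq0 hu 0 k
  have hpos : ∀ k, 0 < u k := fun k =>
    pos_of_mul_pos_right (hu₀pos.trans_le (hpow k)) (pow_nonneg hq0 k)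
  have hdist : ∀ k, dist (s k) (s (k + 1)) ≤ c * (s 0 - sh) / u 0 * q ^ k := by
    intro k
    have hd : 0 ≤ c * (s 0 - sh) := mul_nonneg hc (sub_pos.2 hsh).le
    rw [Real.dist_eq, abs_of_nonneg (sub_nonneg.2 (hanti k.le_succ))]
    calc s k - s (k + 1) ≤ θ k := hstep k
      _ ≤ c * (s k - sh) / u k := by rw [le_div_iff₀ (hpos k)]; exact hθ k
      _ ≤ c * (s 0 - sh) / u k := by gcongr; exacts [(hpos k).le, hanti k.zero_le]
      _ ≤ c * (s 0 - sh) / u 0 * q ^ k := by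
          rw [div_mul_eq_mul_div, div_le_div_iff₀ (hpos k) hu₀pos]
          nlinarith [hpow k]
  -- the steps add up to `s 0 - sh`, but their geometric bound adds up to less
  have h := dist_le_of_le_geometric_of_tendsto₀ q _ hq1 hdist hlim
  rw [Real.dist_eq, abs_of_pos (sub_pos.2 hsh), div_div,
    le_div_iff₀ (mul_pos hu₀pos (sub_pos.2 hq1))] at h
  nlinarith [sub_pos.2 hsh]

theorem mul_le_of_climb_near {E : Type*} [NormedAddCommGroup E] {Y : ℝ → E}
    {q K s sh θ u : ℝ} (hq : 0 ≤ q) (hK : 0 ≤ K) (hθ : 0 < θ) (hsh : sh < s)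
    (hs : ‖Y s - Y sh‖ ≤ K * |s - sh|)
    (hsθ : ‖Y (s - θ) - Y sh‖ ≤ K * |s - θ - sh|) (hu : 4 * q * K < u)
    (hclimb : θ * u < q * ‖Y (s - θ) - Y s‖) : θ * u ≤ 4 * q * K * (s - sh) := by
  rw [abs_of_pos (sub_pos.2 hsh)] at hs
  have habs : |s - θ - sh| ≤ θ + (s - sh) := abs_le.2 ⟨by linarith, by linarith⟩
  have hY : ‖Y (s - θ) - Y s‖ ≤ K * (θ + 2 * (s - sh)) :=
    calc ‖Y (s - θ) - Y s‖ ≤ ‖Y (s - θ) - Y sh‖ + ‖Y s - Y sh‖ := by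
          rw [norm_sub_rev (Y s)]; exact norm_sub_le_norm_sub_add_norm_sub _ _ _
      _ ≤ K * (θ + (s - sh)) + K * (s - sh) := by gcongr; exact hsθ.trans (by gcongr)
      _ = K * (θ + 2 * (s - sh)) := by ring
  have hd : 0 ≤ q * K * (s - sh) := by have := sub_pos.2 hsh; positivity
  nlinarith [mul_lt_mul_of_pos_left hu hθ, mul_le_mul_of_nonneg_left hY hq]

section DerivativeBounds

variable {E : Type*} [NormedAddCommGroup E] [NormedSpace ℝ E] {Y y' : ℝ → E} {a : ℝ}

theorem norm_sub_le_of_norm_deriv_le (hY : ∀ s, a ≤ s → HasDerivWithinAt Y (y' s) (Ici a) s)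
    {b c C : ℝ} (hab : a ≤ b) (hbc : b ≤ c) (hC : ∀ s ∈ Ico b c, ‖y' s‖ ≤ C) :
    ‖Y c - Y b‖ ≤ C * (c - b) :=
  norm_image_sub_le_of_norm_deriv_right_le_segment
    (fun s hs => (hY s (hab.trans hs.1)).continuousWithinAt.mono fun _ hz => hab.trans hz.1)
    (fun s hs => (hY s (hab.trans hs.1)).mono (Ici_subset_Ici.mpr (hab.trans hs.1))) hC c
    (right_mem_Icc.mpr hbc)

theorem exists_lt_norm_deriv_of_lt_norm_sub
    (hY : ∀ s, a ≤ s → HasDerivWithinAt Y (y' s) (Ici a) s) {b c C : ℝ} (hab : a ≤ b)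
    (hbc : b ≤ c) (h : C * (c - b) < ‖Y c - Y b‖) : ∃ s ∈ Ico b c, C < ‖y' s‖ := by
  by_contra! h'
  exact h.not_ge (norm_sub_le_of_norm_deriv_le hY hab hbc h')

theorem false_of_descending_climb {q : ℝ} (hq0 : 0 < q) (hq1 : q < 1)
    (hY : ∀ z, a ≤ z → DifferentiableWithinAt ℝ Y (Ici a) z)
    {s θ u : ℕ → ℝ} (hθ : ∀ k, 0 < θ k) (hlow : ∀ k, a ≤ s k - θ k)
    (hstep : ∀ k, s k - θ k ≤ s (k + 1)) (hdec : ∀ k, s (k + 1) < s k)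
    (hu₀ : 0 ≤ u 0) (hu : ∀ k, u k < q * u (k + 1))
    (hclimb : ∀ k, θ k * u k < q * ‖Y (s k - θ k) - Y (s k)‖) : False := by
  have hsa : ∀ k, a ≤ s k := fun k => (hlow k).trans (by linarith [hθ k])
  have hanti : Antitone s := antitone_nat_of_succ_le fun k => (hdec k).le
  have hbdd : BddBelow (range s) := ⟨a, by rintro _ ⟨k, rfl⟩; exact hsa k⟩
  set sh := ⨅ k, s k
  have hlim : Tendsto s atTop (𝓝 sh) := tendsto_atTop_ciInf hanti hbdd
  have hsh : ∀ k, sh < s k := fun k => (ciInf_le hbdd (k + 1)).trans_lt (hdec k)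
  have hu_top := tendsto_atTop_of_lt_mul hq0 hq1 hu₀ hu
  obtain ⟨B, hB⟩ := (isCompact_Icc (a := a) (b := s 0)).exists_bound_of_continuousOn (f := Y)
    fun z hz => (hY z hz.1).continuousWithinAt.mono Icc_subset_Ici_self
  have hθlim : Tendsto θ atTop (𝓝 0) := by
    refine tendsto_zero_of_mul_le (C := q * (B + B)) (fun k => (hθ k).le) hu_top fun k => ?_
    refine (hclimb k).le.trans (mul_le_mul_of_nonneg_left ((norm_sub_le _ _).trans ?_) hq0.le)
    exact add_le_add (hB _ ⟨hlow k, (hstep k).trans (hanti (Nat.zero_le _))⟩)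
      (hB _ ⟨hsa k, hanti (Nat.zero_le k)⟩)
  obtain ⟨K, hK, hKY⟩ := (hY sh (le_ciInf hsa)).isBigO_sub.exists_pos
  have hnear : ∀ v : ℕ → ℝ, Tendsto v atTop (𝓝 sh) → (∀ k, a ≤ v k) →
      ∀ᶠ k in atTop, ‖Y (v k) - Y sh‖ ≤ K * |v k - sh| := fun v hv hva =>
    (tendsto_nhdsWithin_iff.mpr ⟨hv, Eventually.of_forall hva⟩).eventually hKY.bound
  obtain ⟨N, hN⟩ := eventually_atTop.mp ((hnear s hlim hsa).and
    ((hnear _ (by simpa using hlim.sub hθlim) hlow).and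
      (hu_top.eventually_gt_atTop (4 * q * K / (1 - q)))))
  have hbig : ∀ k, N ≤ k → 4 * q * K < u k * (1 - q) := fun k hk =>
    (div_lt_iff₀ (sub_pos.2 hq1)).mp (hN k hk).2.2
  have hu4 : ∀ k, N ≤ k → 4 * q * K < u k := fun k hk => by
    nlinarith [hbig k hk, mul_pos hq0 hK, sub_pos.2 hq1]
  exact false_of_geometric_descent (s := fun j => s (j + N)) hq0.le hq1
    (fun i j hij => hanti (by omega)) ((tendsto_add_atTop_iff_nat N).mpr hlim) (hsh _)
    (fun j => by linarith [add_right_comm j N 1 ▸ hstep (j + N)])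
    (fun j => by simpa [add_right_comm] using (hu (j + N)).le)
    (fun j => mul_le_of_climb_near hq0.le hK.le (hθ _) (hsh _) (hN _ (by omega)).1
      (hN _ (by omega)).2.1 (hu4 _ (by omega)) (hclimb _))
    (by positivity) (by simpa using hbig N le_rfl)

theorem norm_deriv_le_of_climb {M q : ℝ} (hq0 : 0 < q) (hq1 : q < 1)
    (hY : ∀ s, a ≤ s → HasDerivWithinAt Y (y' s) (Ici a) s)
    (hclimb : ∀ s, a ≤ s → M < ‖y' s‖ →
      ∃ θ, 0 < θ ∧ a ≤ s - θ ∧ θ * ‖y' s‖ < q * ‖Y (s - θ) - Y s‖) :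
    ∀ s, a ≤ s → ‖y' s‖ ≤ M := by
  have hnext : ∀ s, a ≤ s → M < ‖y' s‖ → ∃ θ s', 0 < θ ∧ a ≤ s - θ ∧
      θ * ‖y' s‖ < q * ‖Y (s - θ) - Y s‖ ∧ s' ∈ Ico (s - θ) s ∧ ‖y' s‖ < q * ‖y' s'‖ := by
    intro s hs hMs
    obtain ⟨θ, hθ, hθa, hθY⟩ := hclimb s hs hMs
    obtain ⟨s', hs', hlt⟩ := exists_lt_norm_deriv_of_lt_norm_sub (c := s) (C := ‖y' s‖ / q)
      hY hθa (by linarith) (by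
        rw [norm_sub_rev, sub_sub_cancel, div_mul_eq_mul_div, div_lt_iff₀ hq0]
        linarith)
    exact ⟨θ, s', hθ, hθa, hθY, hs', by rwa [div_lt_iff₀' hq0] at hlt⟩
  choose! θ next hθ hθa hθY hnext hgrow using hnext
  by_contra! h
  obtain ⟨s₀, hs₀, hM₀⟩ := h
  set s : ℕ → ℝ := fun k => next^[k] s₀
  have hs_succ : ∀ k, s (k + 1) = next (s k) := fun k => Function.iterate_succ_apply' _ _ _
  have hinv : ∀ k, a ≤ s k ∧ M < ‖y' (s k)‖ := by
    intro k
    induction k with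
    | zero => exact ⟨hs₀, hM₀⟩
    | succ k ih =>
      rw [hs_succ]
      refine ⟨(hθa _ ih.1 ih.2).trans (hnext _ ih.1 ih.2).1, ih.2.trans ?_⟩
      nlinarith [hgrow _ ih.1 ih.2, norm_nonneg (y' (next (s k)))]
  refine false_of_descending_climb hq0 hq1 (fun z hz => (hY z hz).differentiableWithinAt)
    (θ := fun k => θ (s k)) (u := fun k => ‖y' (s k)‖) (fun k => hθ _ (hinv k).1 (hinv k).2)
    (fun k => hθa _ (hinv k).1 (hinv k).2) (fun k => ?_) (fun k => ?_) (norm_nonneg _)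
    (fun k => ?_) (fun k => hθY _ (hinv k).1 (hinv k).2)
  · rw [hs_succ]; exact (hnext _ (hinv k).1 (hinv k).2).1
  · rw [hs_succ]; exact (hnext _ (hinv k).1 (hinv k).2).2
  · simp only [hs_succ]; exact hgrow _ (hinv k).1 (hinv k).2

def IsDelayContraction (Y y' : ℝ → E) (a r μ : ℝ) : Prop :=
  ∀ t G, a + r ≤ t → 0 ≤ G → (∀ θ ∈ Icc 0 r, ‖Y (t - θ) - Y t‖ ≤ θ * G) → ‖y' t‖ ≤ μ * G

theorem norm_deriv_le_of_contraction {r μ M : ℝ} (hr : 0 ≤ r) (hμ0 : 0 ≤ μ) (hμ1 : μ < 1)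
    (hY : ∀ s, a ≤ s → HasDerivWithinAt Y (y' s) (Ici a) s)
    (hcontr : IsDelayContraction Y y' a r μ)
    (hM : ∀ t ∈ Icc a (a + r), ‖y' t‖ ≤ M) : ∀ t, a ≤ t → ‖y' t‖ ≤ M := by
  have hM0 : 0 ≤ M := (norm_nonneg _).trans (hM a ⟨le_rfl, by linarith⟩)
  -- any ratio strictly between `μ` and `1` would do
  have hq0 : 0 < (1 + μ) / 2 := by positivity
  refine norm_deriv_le_of_climb hq0 (by linarith) hY fun s hs hMs => ?_
  have hsr : a + r < s := by
    by_contra! h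
    exact hMs.not_ge (hM s ⟨hs, h⟩)
  by_contra! hno
  have hμs := hcontr s (‖y' s‖ / ((1 + μ) / 2)) hsr.le (by positivity) fun θ hθ => by
    rcases hθ.1.eq_or_lt with rfl | hθ0
    · simp
    · rw [← mul_div_assoc, le_div_iff₀ hq0, mul_comm]
      exact hno θ hθ0 (by linarith [hθ.2])
  rw [← mul_div_assoc, le_div_iff₀ hq0] at hμs
  nlinarith [mul_lt_mul_of_pos_left (show μ < (1 + μ) / 2 by linarith) (hM0.trans_lt hMs)]

theorem norm_deriv_le_mul_pow {r μ M : ℝ} (hr : 0 ≤ r) (hμ : 0 ≤ μ)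
    (hY : ∀ s, a ≤ s → HasDerivWithinAt Y (y' s) (Ici a) s)
    (hcontr : IsDelayContraction Y y' a r μ)
    (hM : ∀ t, a ≤ t → ‖y' t‖ ≤ M) (n : ℕ) : ∀ t, a + n * r ≤ t → ‖y' t‖ ≤ M * μ ^ n := by
  induction n with
  | zero => simpa using hM
  | succ n ih =>
    intro t ht
    push_cast at ht
    have hnr : 0 ≤ n * r := by positivity
    have hM0 : 0 ≤ M := (norm_nonneg _).trans (hM a le_rfl)
    calc ‖y' t‖ ≤ μ * (M * μ ^ n) := hcontr t _ (by linarith) (by positivity) fun θ hθ => ?_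
      _ = M * μ ^ (n + 1) := by ring
    rw [norm_sub_rev, mul_comm θ]
    simpa using norm_sub_le_of_norm_deriv_le hY (b := t - θ) (c := t) (by linarith [hθ.2])
      (by linarith [hθ.1]) fun s hs => ih s (by linarith [hs.1, hθ.2])

theorem norm_deriv_le_mul_rpow {r μ M : ℝ} (hr : 0 < r) (hμ0 : 0 < μ) (hμ1 : μ < 1)
    (hY : ∀ s, a ≤ s → HasDerivWithinAt Y (y' s) (Ici a) s)
    (hcontr : IsDelayContraction Y y' a r μ)
    (hM : ∀ t ∈ Icc a (a + r), ‖y' t‖ ≤ M) {t : ℝ} (ht : a ≤ t) :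
    ‖y' t‖ ≤ M * μ ^ ((t - a) / r - 1) := by
  have hglobal := norm_deriv_le_of_contraction hr.le hμ0.le hμ1 hY hcontr hM
  have hM0 : 0 ≤ M := (norm_nonneg _).trans (hglobal a le_rfl)
  set n := ⌊(t - a) / r⌋₊
  have hn : a + n * r ≤ t := by
    have := Nat.floor_le (div_nonneg (sub_nonneg.2 ht) hr.le)
    rw [le_div_iff₀ hr] at this
    linarith
  calc ‖y' t‖ ≤ M * μ ^ n := norm_deriv_le_mul_pow hr.le hμ0.le hY hcontr hglobal n t hn
    _ = M * μ ^ (n : ℝ) := by rw [Real.rpow_natCast]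
    _ ≤ M * μ ^ ((t - a) / r - 1) :=
      mul_le_mul_of_nonneg_left (Real.rpow_le_rpow_of_exponent_ge hμ0 hμ1.le
        (by linarith [Nat.lt_floor_add_one ((t - a) / r)])) hM0

end DerivativeBounds

section Integrals

variable {E : Type*} [NormedAddCommGroup E] {f : ℝ → E} {a b c : ℝ}

theorem ContinuousOn.intervalIntegrable_of_Ici (hf : ContinuousOn f (Ici a)) (hb : a ≤ b)
    (hc : a ≤ c) : IntervalIntegrable f volume b c :=
  (hf.mono fun _ hz => (le_min hb hc).trans hz.1).intervalIntegrable

theorem ContinuousOn.hasDerivWithinAt_intervalIntegral_Ici [NormedSpace ℝ E] [CompleteSpace E]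
    (hf : ContinuousOn f (Ici a)) (hb : a ≤ b) (hc : a ≤ c) :
    HasDerivWithinAt (fun u => ∫ s in b..u, f s) (f c) (Ici a) c := by
  -- replace `f` by a globally continuous function that agrees with it on `[a, ∞)`
  have hg : Continuous fun u => f (max a u) :=
    hf.comp_continuous (continuous_const.max continuous_id) fun u => le_max_left a u
  have heq : ∀ u, a ≤ u → ∫ s in b..u, f s = ∫ s in b..u, f (max a s) := fun u hu =>
    intervalIntegral.integral_congr fun s hs => by
      rw [max_eq_right ((le_min hb hu).trans hs.1)]
  have hderiv := intervalIntegral.integral_hasDerivAt_right (hg.intervalIntegrable b c)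
    (hg.stronglyMeasurableAtFilter _ _) hg.continuousAt
  rw [max_eq_right hc] at hderiv
  exact hderiv.hasDerivWithinAt.congr heq (heq c hc)

end Integrals

noncomputable def expNegIntegral (f : ℝ → ℂ) (a b : ℝ) : ℂ :=
  Complex.exp (-(∫ s in a..b, f s))

theorem expNegIntegral_mul {f : ℝ → ℂ} {a b c : ℝ} (hab : IntervalIntegrable f volume a b)
    (hbc : IntervalIntegrable f volume b c) :
    expNegIntegral f a b * expNegIntegral f b c = expNegIntegral f a c := by
  rw [expNegIntegral, expNegIntegral, expNegIntegral, ← Complex.exp_add,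
    ← intervalIntegral.integral_add_adjacent_intervals hab hbc, neg_add]

theorem ContinuousOn.hasDerivWithinAt_expNegIntegral {f : ℝ → ℂ} {a b c : ℝ}
    (hf : ContinuousOn f (Ici a)) (hb : a ≤ b) (hc : a ≤ c) :
    HasDerivWithinAt (expNegIntegral f b) (expNegIntegral f b c * -f c) (Ici a) c :=
  (hf.hasDerivWithinAt_intervalIntegral_Ici hb hc).neg.cexp

theorem norm_setIntegral_mul_le_s6 {ν : Measure ℝ} {r G : ℝ} {F g : ℝ → ℂ} {w : ℝ → ℝ}
    (hG : 0 ≤ G) (hF : ∀ θ ∈ Icc 0 r, ‖F θ‖ ≤ θ * G) (hg : ∀ᵐ θ ∂ν, ‖g θ‖ ≤ w θ)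
    (hw : IntegrableOn (fun θ => θ * w θ) (Icc 0 r) ν) :
    ‖∫ θ in Icc 0 r, F θ * g θ ∂ν‖ ≤ G * ∫ θ in Icc 0 r, θ * w θ ∂ν := by
  rw [← integral_const_mul]
  refine norm_integral_le_of_norm_le (hw.const_mul G) ?_
  filter_upwards [ae_restrict_mem measurableSet_Icc, ae_restrict_of_ae hg] with θ hθ hgθ
  calc ‖F θ * g θ‖ = ‖F θ‖ * ‖g θ‖ := norm_mul _ _
    _ ≤ (θ * G) * w θ :=
      mul_le_mul (hF θ hθ) hgθ (norm_nonneg _) (mul_nonneg hθ.1 hG)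
    _ = G * (θ * w θ) := by ring

theorem setIntegral_mul_eq_zero {ν : Measure ℝ} {r : ℝ} {F g : ℝ → ℂ} {w : ℝ → ℝ}
    (hF : F 0 = 0) (hg : ∀ᵐ θ ∂ν, ‖g θ‖ ≤ w θ)
    (hw : IntegrableOn (fun θ => θ * w θ) (Icc 0 r) ν) (h0 : ∫ θ in Icc 0 r, θ * w θ ∂ν ≤ 0) :
    ∫ θ in Icc 0 r, F θ * g θ ∂ν = 0 := by
  have hnn : 0 ≤ᵐ[ν.restrict (Icc 0 r)] fun θ => θ * w θ := by
    filter_upwards [ae_restrict_mem measurableSet_Icc, ae_restrict_of_ae hg] with θ hθ hgθ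
    exact mul_nonneg hθ.1 ((norm_nonneg _).trans hgθ)
  have hzero := (integral_eq_zero_iff_of_nonneg_ae hnn hw).mp
    (h0.antisymm (integral_nonneg_of_ae hnn))
  refine integral_eq_zero_of_ae ?_
  filter_upwards [hzero, ae_restrict_of_ae hg] with θ hθ hgθ
  rcases mul_eq_zero.mp hθ with rfl | hw0
  · simp [hF]
  · simp [norm_le_zero_iff.mp (hw0 ▸ hgθ)]

-- `h t θ ∂(ν t)` is the polar form of the complex measure `dη(t)(θ)`, with `‖h t‖ = 1` a.e.
structure IsCharEqSolution (r t₀ : ℝ) (ν : ℝ → Measure ℝ) (h : ℝ → ℝ → ℂ) (lam : ℝ → ℂ) :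
    Prop where
  continuousOn : ContinuousOn lam (Ici (t₀ - r))
  integrableOn : ∀ t, t₀ ≤ t →
    IntegrableOn (fun θ => expNegIntegral lam (t - θ) t * h t θ) (Icc 0 r) (ν t)
  eq_integral : ∀ t, t₀ ≤ t →
    lam t = ∫ θ in Icc 0 r, expNegIntegral lam (t - θ) t * h t θ ∂(ν t)

structure IsRFDESolution (r t₀ : ℝ) (ν : ℝ → Measure ℝ) (h : ℝ → ℝ → ℂ) (x : ℝ → ℂ) :
    Prop where
  integrableOn : ∀ t, t₀ ≤ t → IntegrableOn (fun θ => x (t - θ) * h t θ) (Icc 0 r) (ν t)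
  hasDerivWithinAt : ∀ t, t₀ ≤ t →
    HasDerivWithinAt x (∫ θ in Icc 0 r, x (t - θ) * h t θ ∂(ν t)) (Ici t₀) t

noncomputable def rescaledSolution (x lam : ℝ → ℂ) (t₀ u : ℝ) : ℂ :=
  x u * expNegIntegral lam t₀ u

section RFDE

variable {r t₀ t μ : ℝ} {ν : ℝ → Measure ℝ} {h : ℝ → ℝ → ℂ} {lam x : ℝ → ℂ} {y : ℂ}

theorem IsCharEqSolution.integrableOn_mul_norm (hL : IsCharEqSolution r t₀ ν h lam)
    (hh : ∀ᵐ θ ∂(ν t), ‖h t θ‖ = 1) (ht : t₀ ≤ t) :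
    IntegrableOn (fun θ => θ * ‖expNegIntegral lam (t - θ) t‖) (Icc 0 r) (ν t) := by
  have hnorm : IntegrableOn (fun θ => ‖expNegIntegral lam (t - θ) t‖) (Icc 0 r) (ν t) :=
    (hL.integrableOn t ht).norm.congr <| by
      filter_upwards [ae_restrict_of_ae hh] with θ hθ
      simp [hθ]
  refine hnorm.bdd_mul (c := r) aestronglyMeasurable_id ?_
  filter_upwards [ae_restrict_mem measurableSet_Icc] with θ hθ
  rw [Real.norm_eq_abs, abs_of_nonneg hθ.1]
  exact hθ.2

theorem IsRFDESolution.deriv_rescaled_eq (hX : IsRFDESolution r t₀ ν h x)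
    (hL : IsCharEqSolution r t₀ ν h lam) (hr : 0 ≤ r) (ht : t₀ ≤ t)
    (hy : HasDerivWithinAt (rescaledSolution x lam t₀) y (Ici t₀) t) :
    y = ∫ θ in Icc 0 r, (rescaledSolution x lam t₀ (t - θ) - rescaledSolution x lam t₀ t) *
      (expNegIntegral lam (t - θ) t * h t θ) ∂(ν t) := by
  have hE := (hL.continuousOn.hasDerivWithinAt_expNegIntegral (b := t₀) (by linarith)
    (by linarith)).mono (Ici_subset_Ici.2 (by linarith : t₀ - r ≤ t₀))
  have hy_eq := (uniqueDiffOn_Ici t₀ t ht).eq_deriv _ hy ((hX.hasDerivWithinAt t ht).mul hE)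
  -- the weight `exp (-∫_{t-θ}^t λ)` carries `rescaledSolution` from `t - θ` to `t`
  have hshift : ∀ θ ∈ Icc 0 r, rescaledSolution x lam t₀ (t - θ) *
      (expNegIntegral lam (t - θ) t * h t θ) =
        expNegIntegral lam t₀ t * (x (t - θ) * h t θ) := by
    intro θ hθ
    have hθ' : t₀ - r ≤ t - θ := by linarith [hθ.2]
    rw [rescaledSolution, ← expNegIntegral_mul
      (hL.continuousOn.intervalIntegrable_of_Ici (b := t₀) (by linarith) hθ')
      (hL.continuousOn.intervalIntegrable_of_Ici (c := t) hθ' (by linarith))]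
    ring
  rw [setIntegral_congr_fun measurableSet_Icc fun θ hθ => by rw [sub_mul, hshift θ hθ],
    integral_sub ((hX.integrableOn t ht).const_mul _) ((hL.integrableOn t ht).const_mul _),
    integral_const_mul, integral_const_mul, ← hL.eq_integral t ht, hy_eq, rescaledSolution]
  ring

theorem IsRFDESolution.norm_deriv_rescaled_le (hX : IsRFDESolution r t₀ ν h x)
    (hL : IsCharEqSolution r t₀ ν h lam) (hr : 0 ≤ r) (hh : ∀ᵐ θ ∂(ν t), ‖h t θ‖ = 1)
    (hμ : ∫ θ in Icc 0 r, θ * ‖expNegIntegral lam (t - θ) t‖ ∂(ν t) ≤ μ) (ht : t₀ ≤ t)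
    (hy : HasDerivWithinAt (rescaledSolution x lam t₀) y (Ici t₀) t) {G : ℝ} (hG : 0 ≤ G)
    (hY : ∀ θ ∈ Icc 0 r,
      ‖rescaledSolution x lam t₀ (t - θ) - rescaledSolution x lam t₀ t‖ ≤ θ * G) :
    ‖y‖ ≤ μ * G := by
  rw [hX.deriv_rescaled_eq hL hr ht hy]
  calc _ ≤ G * ∫ θ in Icc 0 r, θ * ‖expNegIntegral lam (t - θ) t‖ ∂(ν t) :=
        norm_setIntegral_mul_le_s6 hG hY (by filter_upwards [hh] with θ hθ; simp [hθ])
          (hL.integrableOn_mul_norm hh ht)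
    _ ≤ G * μ := mul_le_mul_of_nonneg_left hμ hG
    _ = μ * G := mul_comm _ _

theorem IsRFDESolution.deriv_rescaled_eq_zero (hX : IsRFDESolution r t₀ ν h x)
    (hL : IsCharEqSolution r t₀ ν h lam) (hr : 0 ≤ r) (hh : ∀ᵐ θ ∂(ν t), ‖h t θ‖ = 1)
    (hμ : ∫ θ in Icc 0 r, θ * ‖expNegIntegral lam (t - θ) t‖ ∂(ν t) ≤ 0) (ht : t₀ ≤ t)
    (hy : HasDerivWithinAt (rescaledSolution x lam t₀) y (Ici t₀) t) : y = 0 := by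
  rw [hX.deriv_rescaled_eq hL hr ht hy]
  exact setIntegral_mul_eq_zero (by simp) (by filter_upwards [hh] with θ hθ; simp [hθ])
    (hL.integrableOn_mul_norm hh ht) hμ

end RFDE

theorem stmt6_general
    (r t₀ : ℝ) (hr : 0 < r)
    (ν : ℝ → Measure ℝ)
    (h : ℝ → ℝ → ℂ)
    (hh : ∀ t, t₀ ≤ t → ∀ᵐ θ ∂(ν t), ‖h t θ‖ = 1)
    -- λ is a solution of the generalized characteristic equation
    (lam : ℝ → ℂ)
    (hlamc : ContinuousOn lam (Set.Ici (t₀ - r)))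
    (hlamint : ∀ t, t₀ ≤ t → IntegrableOn
      (fun θ => Complex.exp (-(∫ s in (t - θ)..t, lam s)) * h t θ) (Set.Icc 0 r) (ν t))
    (hlam : ∀ t, t₀ ≤ t →
      lam t = ∫ θ in Set.Icc 0 r, Complex.exp (-(∫ s in (t - θ)..t, lam s)) * h t θ ∂(ν t))
    -- μ = sup_{t ≥ t₀} ∫_0^r θ ‖exp(-∫_{t-θ}^t λ)‖ d‖η t‖(θ) < 1
    (μ : ℝ) (hμ0 : 0 ≤ μ) (hμ1 : μ < 1)
    (hμ : ∀ t, t₀ ≤ t → (∫ θ in Set.Icc 0 r,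
      θ * ‖Complex.exp (-(∫ s in (t - θ)..t, lam s))‖ ∂(ν t)) ≤ μ)
    -- x is a solution of the RFDE
    (x : ℝ → ℂ)
    (hxint : ∀ t, t₀ ≤ t →
      IntegrableOn (fun θ => x (t - θ) * h t θ) (Set.Icc 0 r) (ν t))
    (hx : ∀ t, t₀ ≤ t → HasDerivWithinAt x
      (∫ θ in Set.Icc 0 r, x (t - θ) * h t θ ∂(ν t)) (Set.Ici t₀) t)
    -- y' is the derivative of y(t) = x(t)·exp(-∫_{t₀}^t λ(s) ds) on [t₀, ∞)
    (y' : ℝ → ℂ)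
    (hy' : ∀ t, t₀ ≤ t → HasDerivWithinAt
      (fun u => x u * Complex.exp (-(∫ s in t₀..u, lam s))) (y' t) (Set.Ici t₀) t)
    -- M = max_{t ∈ [t₀, t₀+r]} ‖y'(t)‖
    (M : ℝ)
    (hM : ∀ t ∈ Set.Icc t₀ (t₀ + r), ‖y' t‖ ≤ M) :
    ∀ t, t₀ ≤ t → ‖y' t‖ ≤ M * μ ^ ((t - t₀) / r - 1) := by
  have hL : IsCharEqSolution r t₀ ν h lam := ⟨hlamc, hlamint, hlam⟩
  have hX : IsRFDESolution r t₀ ν h x := ⟨hxint, hx⟩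
  intro t ht
  rcases hμ0.eq_or_lt with rfl | hμ0
  · -- here the bound is `0` also for `t < t₀ + r`, since `(0 : ℝ) ^ p = 0` for `p ≠ 0`
    rw [hX.deriv_rescaled_eq_zero hL hr.le (hh t ht) (hμ t ht) ht (hy' t ht), norm_zero]
    exact mul_nonneg ((norm_nonneg _).trans (hM t₀ ⟨le_rfl, by linarith⟩))
      (Real.rpow_nonneg le_rfl _)
  · refine norm_deriv_le_mul_rpow hr hμ0 hμ1 hy' (fun s G hs => ?_) hM ht
    have hs : t₀ ≤ s := by linarith
    exact hX.norm_deriv_rescaled_le hL hr.le (hh s hs) (hμ s hs) hs (hy' s hs)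

theorem stmt6
    (r t₀ : ℝ) (hr : 0 < r)
    (ν : ℝ → Measure ℝ)
    (hfin : ∀ t, t₀ ≤ t → IsFiniteMeasure (ν t))
    (hsupp : ∀ t, t₀ ≤ t → ν t (Set.Icc 0 r)ᶜ = 0)
    (h : ℝ → ℝ → ℂ)
    (hh : ∀ t, t₀ ≤ t → ∀ᵐ θ ∂(ν t), ‖h t θ‖ = 1)
    -- λ is a solution of the generalized characteristic equation
    (lam : ℝ → ℂ)
    (hlamc : ContinuousOn lam (Set.Ici (t₀ - r)))
    (hlamint : ∀ t, t₀ ≤ t → IntegrableOn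
      (fun θ => Complex.exp (-(∫ s in (t - θ)..t, lam s)) * h t θ) (Set.Icc 0 r) (ν t))
    (hlam : ∀ t, t₀ ≤ t →
      lam t = ∫ θ in Set.Icc 0 r, Complex.exp (-(∫ s in (t - θ)..t, lam s)) * h t θ ∂(ν t))
    -- μ = sup_{t ≥ t₀} ∫_0^r θ ‖exp(-∫_{t-θ}^t λ)‖ d‖η t‖(θ) < 1
    (μ : ℝ) (hμ0 : 0 ≤ μ) (hμ1 : μ < 1)
    (hμ : ∀ t, t₀ ≤ t → (∫ θ in Set.Icc 0 r,
      θ * ‖Complex.exp (-(∫ s in (t - θ)..t, lam s))‖ ∂(ν t)) ≤ μ)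
    -- x is a solution of the RFDE
    (x : ℝ → ℂ)
    (hxc : ContinuousOn x (Set.Ici (t₀ - r)))
    (hxint : ∀ t, t₀ ≤ t →
      IntegrableOn (fun θ => x (t - θ) * h t θ) (Set.Icc 0 r) (ν t))
    (hx : ∀ t, t₀ ≤ t → HasDerivWithinAt x
      (∫ θ in Set.Icc 0 r, x (t - θ) * h t θ ∂(ν t)) (Set.Ici t₀) t)
    -- y' is the derivative of y(t) = x(t)·exp(-∫_{t₀}^t λ(s) ds) on [t₀, ∞)
    (y' : ℝ → ℂ)
    (hy' : ∀ t, t₀ ≤ t → HasDerivWithinAt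
      (fun u => x u * Complex.exp (-(∫ s in t₀..u, lam s))) (y' t) (Set.Ici t₀) t)
    -- M = max_{t ∈ [t₀, t₀+r]} ‖y'(t)‖
    (M : ℝ)
    (hM : ∀ t ∈ Set.Icc t₀ (t₀ + r), ‖y' t‖ ≤ M) :
    ∀ t, t₀ ≤ t → ‖y' t‖ ≤ M * μ ^ ((t - t₀) / r - 1) :=
  stmt6_general r t₀ hr ν h hh lam hlamc hlamint hlam μ hμ0 hμ1 hμ x hxint hx y' hy' M hM
end

section
/- Let a, b₁, …, b_k : [t₀, ∞) → ℝ be continuous, let τ₁, …, τ_k > 0 and set r = max_j τ_j. Let λ : [t₀−r, ∞) → ℝ be a continuous solution of the generalized characteristic equation λ(t) = a(t) + Σ_{j=1}^k b_j(t)·exp(−∫_{t−τ_j}^t λ(s) ds) for t ≥ t₀, and assume limsup_{t→∞} Σ_{j=1}^k τ_j·|b_j(t)|·exp(−∫_{t−τ_j}^t λ(s) ds) < 1. Then for every solution x of the delay differential equation x'(t) = a(t)x(t) + Σ_{j=1}^k b_j(t)·x(t−τ_j), t ≥ t₀, the limit lim_{t→∞} x(t)·exp(−∫_{t₀}^t λ(s)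 ds) exists, and the derivative of t ↦ x(t)·exp(−∫_{t₀}^t λ(s) ds) tends to 0 as t → ∞. -/
open Filter Topology

/- Nonautonomous delay equation with discrete delays:
`x'(t) = a(t)·x(t) + ∑_j b_j(t)·x(t - τ_j)`, with `r = max_j τ_j`.  If `λ` is a
continuous solution of the generalized characteristic equation
`λ(t) = a(t) + ∑_j b_j(t)·exp(-∫_{t-τ_j}^t λ(s) ds)` and
`limsup_{t→∞} ∑_j τ_j·|b_j(t)|·exp(-∫_{t-τ_j}^t λ(s) ds) < 1`, then for every solution
`x`, the limit of `x(t)·exp(-∫_{t₀}^t λ(s) ds)` as `t → ∞` exists and the derivative of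
`t ↦ x(t)·exp(-∫_{t₀}^t λ(s) ds)` tends to `0` as `t → ∞`. -/
theorem stmt8
    (t₀ : ℝ) (k : ℕ) (a : ℝ → ℝ) (b : Fin k → ℝ → ℝ) (τ : Fin k → ℝ) (r : ℝ)
    (hτ : ∀ j, 0 < τ j) (hr : IsGreatest (Set.range τ) r)
    (ha : ContinuousOn a (Set.Ici t₀)) (hb : ∀ j, ContinuousOn (b j) (Set.Ici t₀))
    -- λ is a continuous solution of the generalized characteristic equation
    (lam : ℝ → ℝ)
    (hlamc : ContinuousOn lam (Set.Ici (t₀ - r)))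
    (hlam : ∀ t, t₀ ≤ t →
      lam t = a t + ∑ j, b j t * Real.exp (-(∫ s in (t - τ j)..t, lam s)))
    -- the smallness condition
    (hbdd : IsBoundedUnder (· ≤ ·) atTop
      (fun t => ∑ j, τ j * |b j t| * Real.exp (-(∫ s in (t - τ j)..t, lam s))))
    (hV : limsup
      (fun t => ∑ j, τ j * |b j t| * Real.exp (-(∫ s in (t - τ j)..t, lam s)))
      atTop < 1)
    -- x is a solution of the delay differential equation
    (x : ℝ → ℝ)
    (hxc : ContinuousOn x (Set.Ici (t₀ - r)))
    (hx : ∀ t, t₀ ≤ t → HasDerivWithinAt x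
      (a t * x t + ∑ j, b j t * x (t - τ j)) (Set.Ici t₀) t) :
    (∃ L : ℝ, Tendsto (fun t => x t * Real.exp (-(∫ s in t₀..t, lam s)))
      atTop (𝓝 L)) ∧
    (∃ y' : ℝ → ℝ,
      (∀ t, t₀ < t →
        HasDerivAt (fun u => x u * Real.exp (-(∫ s in t₀..u, lam s))) (y' t) t) ∧
      Tendsto y' atTop (𝓝 0)) := by
  -- basic facts
  obtain ⟨j₀, hj₀⟩ := hr.1
  have hr0 : 0 < r := hj₀ ▸ hτ j₀
  have hτr : ∀ j, τ j ≤ r := fun j => hr.2 (Set.mem_range_self j)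
  -- abbreviations
  set Λ : ℝ → ℝ := fun u => ∫ s in t₀..u, lam s with hΛdef
  set y : ℝ → ℝ := fun u => x u * Real.exp (-(Λ u)) with hydef
  set c : Fin k → ℝ → ℝ := fun j t => b j t * Real.exp (-(∫ s in (t - τ j)..t, lam s)) with hcdef
  set g : ℝ → ℝ := fun t => ∑ j, c j t * (y (t - τ j) - y t) with hgdef
  set p : ℝ → ℝ := fun t => ∑ j, τ j * |b j t| * Real.exp (-(∫ s in (t - τ j)..t, lam s)) with hpdef
  -- continuity/integrability of lam
  have hlamca : ∀ t, t₀ - r < t → ContinuousAt lam t := by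
    intro t ht
    exact (hlamc t ht.le).continuousAt (Ici_mem_nhds ht)
  have hint : ∀ u v : ℝ, t₀ - r ≤ u → t₀ - r ≤ v → IntervalIntegrable lam
      MeasureTheory.volume u v := by
    intro u v hu hv
    apply (hlamc.mono ?_).intervalIntegrable
    intro s hs
    simp only [Set.mem_Ici]
    calc t₀ - r ≤ min u v := le_min hu hv
    _ ≤ s := hs.1
  -- derivative of the primitive Λ
  have hΛd : ∀ t, t₀ - r < t → HasDerivAt Λ (lam t) t := by
    intro t ht
    refine intervalIntegral.integral_hasDerivAt_right
      (hint t₀ t (by linarith) ht.le) ?_ (hlamca t ht)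
    exact (hlamc.mono Set.Ioi_subset_Ici_self).stronglyMeasurableAtFilter isOpen_Ioi t ht
  have hΛca : ∀ u, t₀ - r < u → ContinuousAt Λ u := fun u hu => (hΛd u hu).continuousAt
  -- additivity of the primitive
  have hΛadd : ∀ t, t₀ ≤ t → ∀ j, Λ t = Λ (t - τ j) + ∫ s in (t - τ j)..t, lam s := by
    intro t ht j
    have h1 : t₀ - r ≤ t - τ j := by have := hτr j; linarith
    have h2 : t₀ - r ≤ t := by linarith
    exact (intervalIntegral.integral_add_adjacent_intervals
      (hint t₀ (t - τ j) (by linarith) h1) (hint (t - τ j) t h1 h2)).symm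
  -- derivative of y
  have hyd : ∀ t, t₀ < t → HasDerivAt y (g t) t := by
    intro t ht
    have hxd : HasDerivAt x (a t * x t + ∑ j, b j t * x (t - τ j)) t :=
      (hx t ht.le).hasDerivAt (Ici_mem_nhds ht)
    have hEd : HasDerivAt (fun u => Real.exp (-(Λ u))) (Real.exp (-(Λ t)) * (-(lam t))) t :=
      ((hΛd t (by linarith)).neg).exp
    have hprod := hxd.mul hEd
    have heq : g t = (a t * x t + ∑ j, b j t * x (t - τ j)) * Real.exp (-(Λ t))
        + x t * (Real.exp (-(Λ t)) * -(lam t)) := by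
      have hE : ∀ j : Fin k, Real.exp (-(Λ t))
          = Real.exp (-(∫ s in (t - τ j)..t, lam s)) * Real.exp (-(Λ (t - τ j))) := by
        intro j
        rw [← Real.exp_add, hΛadd t ht.le j]
        ring_nf
      have hterm : ∀ j ∈ Finset.univ, c j t * (y (t - τ j) - y t)
          = b j t * x (t - τ j) * Real.exp (-(Λ t))
            - b j t * Real.exp (-(∫ s in (t - τ j)..t, lam s)) * (x t * Real.exp (-(Λ t))) := by
        intro j _
        simp only [hcdef, hydef]
        rw [hE j]
        ring
      calc g t = ∑ j, (b j t * x (t - τ j) * Real.exp (-(Λ t))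
            - b j t * Real.exp (-(∫ s in (t - τ j)..t, lam s)) * (x t * Real.exp (-(Λ t)))) := by
            simp only [hgdef]; exact Finset.sum_congr rfl hterm
        _ = (∑ j, b j t * x (t - τ j)) * Real.exp (-(Λ t))
            - (∑ j, b j t * Real.exp (-(∫ s in (t - τ j)..t, lam s))) * (x t * Real.exp (-(Λ t))) := by
            rw [Finset.sum_sub_distrib, Finset.sum_mul, Finset.sum_mul]
        _ = _ := by rw [hlam t ht.le]; ring
    rw [heq]
    exact hprod
  -- continuity
  have hxca : ∀ u, t₀ - r < u → ContinuousAt x u := fun u hu =>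
    (hxc u hu.le).continuousAt (Ici_mem_nhds hu)
  have hyca : ∀ u, t₀ - r < u → ContinuousAt y u := by
    intro u hu
    exact (hxca u hu).mul ((Real.continuous_exp.continuousAt).comp (hΛca u hu).neg)
  have hsub : ∀ (j : Fin k) (t : ℝ), ContinuousAt (fun u : ℝ => u - τ j) t := by
    intro j t
    exact (continuous_id.sub continuous_const).continuousAt
  have hIca : ∀ (j : Fin k) (t : ℝ), t₀ < t →
      ContinuousAt (fun u => ∫ s in (u - τ j)..u, lam s) t := by
    intro j t ht
    have h1 : ContinuousAt (fun u => Λ u - Λ (u - τ j)) t := by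
      refine (hΛca t (by linarith)).sub ?_
      exact ContinuousAt.comp (g := Λ) (f := fun u : ℝ => u - τ j) (hΛca (t - τ j) (by have := hτr j; linarith)) (hsub j t)
    refine h1.congr ?_
    filter_upwards [Ioi_mem_nhds ht] with u hu
    have := hΛadd u (le_of_lt hu) j
    linarith
  have hgca : ∀ t, t₀ < t → ContinuousAt g t := by
    intro t ht
    have hrt : t₀ - r < t := by linarith
    simp only [hgdef]
    refine tendsto_finset_sum _ (fun j _ => ?_)
    have hcca : ContinuousAt (c j) t := by
      simp only [hcdef]
      exact ((hb j t ht.le).continuousAt (Ici_mem_nhds ht)).mul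
        ((Real.continuous_exp.continuousAt).comp (hIca j t ht).neg)
    refine hcca.mul (ContinuousAt.sub ?_ (hyca t hrt))
    exact ContinuousAt.comp (g := y) (f := fun u : ℝ => u - τ j) (hyca (t - τ j) (by have := hτr j; linarith)) (hsub j t)
  -- choice of q and T
  set q : ℝ := (max (limsup p atTop) 0 + 1) / 2 with hqdef
  have hq1 : q < 1 := by
    have h1 : max (limsup p atTop) 0 < 1 := max_lt hV one_pos
    rw [hqdef]; linarith
  have hq0 : 0 < q := by
    have h1 : (0:ℝ) ≤ max (limsup p atTop) 0 := le_max_right _ _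
    rw [hqdef]; linarith
  have hqev : ∀ᶠ t in atTop, p t < q := by
    refine eventually_lt_of_limsup_lt ?_ hbdd
    have h1 : limsup p atTop ≤ max (limsup p atTop) 0 := le_max_left _ _
    have h2 : max (limsup p atTop) 0 < q := by
      have : max (limsup p atTop) 0 < 1 := max_lt hV one_pos
      rw [hqdef]; linarith
    linarith
  obtain ⟨T₁, hT₁⟩ := eventually_atTop.mp hqev
  set T : ℝ := max T₁ (t₀ + r + 1) with hTdef
  have hTt₀ : t₀ + r + 1 ≤ T := le_max_right _ _
  have hTp : ∀ t, T ≤ t → p t < q := fun t htt => hT₁ t (le_trans (le_max_left _ _) htt)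
  have hp0 : ∀ t, 0 ≤ p t := by
    intro t
    simp only [hpdef]
    refine Finset.sum_nonneg fun j _ => ?_
    have := (hτ j).le
    positivity
  -- the key estimate
  have key : ∀ t, T ≤ t → ∀ B, (∀ s, t - r ≤ s → s ≤ t → |g s| ≤ B) → |g t| ≤ q * B := by
    intro t htT B hB
    have hB0 : 0 ≤ B := le_trans (abs_nonneg _) (hB t (by linarith) le_rfl)
    have ht₀ : t₀ + r + 1 ≤ t := le_trans hTt₀ htT
    have hjint : ∀ j : Fin k, (∫ s in (t - τ j)..t, g s) = y t - y (t - τ j) := by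
      intro j
      have hj1 : t - τ j ≤ t := by have := (hτ j).le; linarith
      refine intervalIntegral.integral_eq_sub_of_hasDerivAt ?_ ?_
      · intro u hu
        rw [Set.uIcc_of_le hj1] at hu
        exact hyd u (by have := hτr j; have := hu.1; linarith)
      · refine ContinuousOn.intervalIntegrable ?_
        intro u hu
        rw [Set.uIcc_of_le hj1] at hu
        exact (hgca u (by have := hτr j; have := hu.1; linarith)).continuousWithinAt
    have hgt : g t = -∑ j, c j t * ∫ s in (t - τ j)..t, g s := by
      rw [← Finset.sum_neg_distrib]
      simp only [hgdef]
      refine Finset.sum_congr rfl fun j _ => ?_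
      rw [hjint j]
      ring
    have hb1 : |g t| ≤ ∑ j, |c j t| * (B * τ j) := by
      rw [hgt, abs_neg]
      refine (Finset.abs_sum_le_sum_abs _ _).trans ?_
      refine Finset.sum_le_sum fun j _ => ?_
      rw [abs_mul]
      refine mul_le_mul_of_nonneg_left ?_ (abs_nonneg _)
      have hj1 : t - τ j ≤ t := by have := (hτ j).le; linarith
      have h1 : ∀ s ∈ Set.uIoc (t - τ j) t, ‖g s‖ ≤ B := by
        intro s hs
        rw [Set.uIoc_of_le hj1] at hs
        exact hB s (by have := hτr j; have := hs.1; linarith) hs.2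
      have h2 := intervalIntegral.norm_integral_le_of_norm_le_const h1
      rw [Real.norm_eq_abs] at h2
      refine h2.trans ?_
      have : |t - (t - τ j)| = τ j := by
        rw [show t - (t - τ j) = τ j by ring, abs_of_pos (hτ j)]
      rw [this]
    have hb2 : (∑ j, |c j t| * (B * τ j)) = p t * B := by
      simp only [hpdef, Finset.sum_mul]
      refine Finset.sum_congr rfl fun j _ => ?_
      simp only [hcdef]
      rw [abs_mul, abs_of_pos (Real.exp_pos _)]
      ring
    calc |g t| ≤ p t * B := by rw [← hb2]; exact hb1
      _ ≤ q * B := mul_le_mul_of_nonneg_right (hTp t htT).le hB0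
  -- global bound M
  have hTr : t₀ < T - r := by linarith
  have hgabs : ∀ X : ℝ, ContinuousOn (fun u => |g u|) (Set.Icc (T - r) X) := by
    intro X u hu
    exact ((hgca u (lt_of_lt_of_le hTr hu.1)).abs).continuousWithinAt
  obtain ⟨m, hmmem, hmmax⟩ := (isCompact_Icc :
      IsCompact (Set.Icc (T - r) T)).exists_isMaxOn
    (Set.nonempty_Icc.mpr (by linarith)) (hgabs T)
  set M : ℝ := |g m| with hMdef
  have hM0 : 0 ≤ M := abs_nonneg _
  have hMa : ∀ s, T - r ≤ s → s ≤ T → |g s| ≤ M := fun s h1 h2 => hmmax ⟨h1, h2⟩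
  have hM : ∀ t, T - r ≤ t → |g t| ≤ M := by
    intro t htr
    rcases le_or_gt t T with h | h
    · exact hMa t htr h
    obtain ⟨m', hm'mem, hm'max⟩ := (isCompact_Icc :
        IsCompact (Set.Icc (T - r) t)).exists_isMaxOn
      (Set.nonempty_Icc.mpr (by linarith)) (hgabs t)
    have hm'le : |g m'| ≤ M := by
      rcases le_or_gt m' T with h2 | h2
      · exact hMa m' hm'mem.1 h2
      · have h3 := key m' h2.le (|g m'|) (fun s hs1 hs2 => by
          refine hm'max ⟨?_, le_trans hs2 hm'mem.2⟩
          have := hm'mem.1; linarith)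
        nlinarith [abs_nonneg (g m')]
    exact le_trans (hm'max ⟨htr, le_rfl⟩) hm'le
  -- geometric decay
  have hdecay : ∀ n : ℕ, ∀ t, T + n * r ≤ t → |g t| ≤ M * q ^ n := by
    intro n
    induction n with
    | zero =>
      intro t htt
      simp only [Nat.cast_zero, zero_mul, add_zero] at htt
      simpa using hM t (by linarith)
    | succ n ih =>
      intro t htt
      push_cast at htt
      have hn0 : (0:ℝ) ≤ (n:ℝ) := Nat.cast_nonneg n
      have h1 : T ≤ t := by nlinarith
      have h2 := key t h1 (M * q ^ n) (fun s hs1 hs2 => ih s (by linarith))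
      calc |g t| ≤ q * (M * q ^ n) := h2
        _ = M * q ^ (n + 1) := by ring
  -- exponential decay
  set α : ℝ := -Real.log q / r with hαdef
  have hlogq : Real.log q < 0 := Real.log_neg hq0 hq1
  have hα : 0 < α := by rw [hαdef]; exact div_pos (by linarith) hr0
  have hexp : ∀ t, T ≤ t → |g t| ≤ M / q * Real.exp (-(α * (t - T))) := by
    intro t htt
    set n : ℕ := ⌊(t - T) / r⌋₊ with hndef
    have hfl : T + n * r ≤ t := by
      have h1 : (n:ℝ) ≤ (t - T) / r := Nat.floor_le (div_nonneg (by linarith) hr0.le)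
      have h2 : (n:ℝ) * r ≤ (t - T) / r * r := mul_le_mul_of_nonneg_right h1 hr0.le
      rw [div_mul_cancel₀ _ hr0.ne'] at h2
      linarith
    refine (hdecay n t hfl).trans ?_
    have hqn : q ^ (n + 1) ≤ Real.exp (-(α * (t - T))) := by
      have h1 : (t - T) / r < n + 1 := Nat.lt_floor_add_one _
      have h2 : ((n:ℝ) + 1) * Real.log q ≤ (t - T) / r * Real.log q :=
        mul_le_mul_of_nonpos_right h1.le hlogq.le
      have h3 : Real.exp (((n:ℝ) + 1) * Real.log q) ≤ Real.exp ((t - T) / r * Real.log q) :=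
        Real.exp_le_exp.mpr h2
      have h4 : Real.exp (((n:ℝ) + 1) * Real.log q) = q ^ (n + 1) := by
        rw [show ((n:ℝ) + 1) = ((n + 1 : ℕ) : ℝ) by push_cast; ring,
          Real.exp_nat_mul, Real.exp_log hq0]
      have h5 : (t - T) / r * Real.log q = -(α * (t - T)) := by
        rw [hαdef]; field_simp
      rw [h4, h5] at h3
      exact h3
    calc M * q ^ n = M / q * q ^ (n + 1) := by
          field_simp
          ring
      _ ≤ M / q * Real.exp (-(α * (t - T))) :=
          mul_le_mul_of_nonneg_left hqn (by positivity)
  -- integrability of g on [T, ∞)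
  have hgmeas : MeasureTheory.AEStronglyMeasurable g
      (MeasureTheory.volume.restrict (Set.Ici T)) := by
    refine ContinuousOn.aestronglyMeasurable ?_ measurableSet_Ici
    intro u hu
    exact (hgca u (by have : T ≤ u := hu; linarith)).continuousWithinAt
  have hfe : (fun t : ℝ => M / q * Real.exp (-(α * (t - T))))
      = fun t => (M / q * Real.exp (α * T)) * Real.exp (-α * t) := by
    funext t
    rw [mul_assoc, ← Real.exp_add]
    congr 1
    ring
  have hbint : MeasureTheory.IntegrableOn
      (fun t => M / q * Real.exp (-(α * (t - T)))) (Set.Ici T) MeasureTheory.volume := by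
    rw [integrableOn_Ici_iff_integrableOn_Ioi, hfe]
    exact (exp_neg_integrableOn_Ioi T hα).const_mul _
  have hgint : MeasureTheory.IntegrableOn g (Set.Ici T) MeasureTheory.volume := by
    refine MeasureTheory.Integrable.mono' hbint hgmeas ?_
    refine (MeasureTheory.ae_restrict_iff' measurableSet_Ici).mpr
      (MeasureTheory.ae_of_all _ fun t ht => ?_)
    simpa [Real.norm_eq_abs] using hexp t ht
  -- FTC
  have hyint : ∀ t, T ≤ t → y t = y T + ∫ s in T..t, g s := by
    intro t htt
    have h1 : (∫ s in T..t, g s) = y t - y T := by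
      refine intervalIntegral.integral_eq_sub_of_hasDerivAt ?_ ?_
      · intro u hu
        rw [Set.uIcc_of_le htt] at hu
        exact hyd u (by have := hu.1; linarith)
      · refine ContinuousOn.intervalIntegrable ?_
        intro u hu
        rw [Set.uIcc_of_le htt] at hu
        exact (hgca u (by have := hu.1; linarith)).continuousWithinAt
    linarith
  -- first conclusion
  have hIl := MeasureTheory.intervalIntegral_tendsto_integral_Ioi T
    (hgint.mono_set Set.Ioi_subset_Ici_self) tendsto_id
  have hylim : Tendsto y atTop (𝓝 (y T + ∫ s in Set.Ioi T, g s)) := by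
    refine Tendsto.congr' ?_ (tendsto_const_nhds.add hIl)
    filter_upwards [eventually_ge_atTop T] with t htt
    exact (hyint t htt).symm
  -- second conclusion: g → 0
  have hblim : Tendsto (fun t => M / q * Real.exp (-(α * (t - T)))) atTop (𝓝 0) := by
    rw [show (0:ℝ) = M / q * 0 by ring]
    refine Tendsto.const_mul _ ?_
    refine Real.tendsto_exp_atBot.comp ?_
    have h1 : Tendsto (fun t : ℝ => t - T) atTop atTop := by
      simpa [sub_eq_add_neg] using tendsto_atTop_add_const_right atTop (-T) tendsto_id
    have h2 : Tendsto (fun t : ℝ => α * (t - T)) atTop atTop := Tendsto.const_mul_atTop hα h1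
    exact tendsto_neg_atBot_iff.mpr h2
  have hg0 : Tendsto g atTop (𝓝 0) := by
    have hneg : Tendsto (fun t => -(M / q * Real.exp (-(α * (t - T))))) atTop (𝓝 0) := by
      simpa using hblim.neg
    refine tendsto_of_tendsto_of_tendsto_of_le_of_le' hneg hblim ?_ ?_
    · filter_upwards [eventually_ge_atTop T] with t htt
      exact (abs_le.mp (hexp t htt)).1
    · filter_upwards [eventually_ge_atTop T] with t htt
      exact (abs_le.mp (hexp t htt)).2
  exact ⟨⟨y T + ∫ s in Set.Ioi T, g s, hylim⟩, ⟨g, fun t ht => hyd t ht, hg0⟩⟩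
end
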